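/- arXiv:2408.03391 — 7 statements merged into one kernel-verified Lean document; each statement's English description precedes it below -/
import Mathlib

section
/- Let V : ℝ → ℝ be measurable with ∫_ℝ ⟨y⟩ |V(y)| dy < ∞, and let C₀ > 0. Suppose m : [−1,∞) × (ℝ∖{0}) → ℂ is measurable, satisfies |m(x,k)| ≤ C₀ for all x ≥ −1 and k ≠ 0, and solves the Volterra equation m(x,k) = 1 + ∫_x^∞ D_k(y−x) V(y) m(y,k) dy. Then for every θ ∈ [0,1] there is a constant C depending only on θ and C₀ such that for all x ≥ −1 and k ≠ 0, |m(x,k) − 1| ≤ C (|k|^{1−θ} ⟨k⟩^{θ})^{-1} W^θ(x). -/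
open MeasureTheory

noncomputable section

/-- The Dirichlet-type kernel `D_k(z) = (e^{2ikz} - 1)/(2ik)`. -/
def Dker (k z : ℝ) : ℂ :=
  (Complex.exp (2 * Complex.I * (k : ℂ) * (z : ℂ)) - 1) / (2 * Complex.I * (k : ℂ))

lemma norm_exp_mul_I_sub_one_le (t : ℝ) : ‖Complex.exp (t * Complex.I) - 1‖ ≤ |t| := by
  rw [← Real.sqrt_sq_eq_abs]
  rw [show ‖Complex.exp ((t:ℂ) * Complex.I) - 1‖
      = Real.sqrt (Complex.normSq (Complex.exp ((t:ℂ) * Complex.I) - 1)) by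
    rw [Complex.norm_def]]
  apply Real.sqrt_le_sqrt
  rw [Complex.normSq_apply]
  simp only [Complex.sub_re, Complex.sub_im, Complex.one_re, Complex.one_im,
    Complex.exp_ofReal_mul_I_re, Complex.exp_ofReal_mul_I_im]
  have hc : Real.cos t = Real.cos (t/2) ^ 2 - Real.sin (t/2) ^ 2 := by
    rw [← Real.cos_two_mul']; ring_nf
  have hpy : Real.sin (t/2) ^ 2 + Real.cos (t/2) ^ 2 = 1 := Real.sin_sq_add_cos_sq _
  have hs : Real.sin (t/2) ^ 2 ≤ (t/2) ^ 2 := by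
    have := Real.abs_sin_le_abs (x := t/2)
    nlinarith [abs_nonneg (Real.sin (t/2)), sq_abs (Real.sin (t/2)), sq_abs (t/2)]
  nlinarith [Real.sin_sq_add_cos_sq t]

lemma norm_Dker_le (k z : ℝ) (hk : k ≠ 0) (hz : 0 ≤ z) :
    ‖Dker k z‖ ≤ min z |k|⁻¹ := by
  have hk0 : (0:ℝ) < |k| := abs_pos.mpr hk
  have harg : 2 * Complex.I * (k:ℂ) * (z:ℂ) = ((2*k*z : ℝ):ℂ) * Complex.I := by
    push_cast; ring
  have hden : ‖(2 * Complex.I * (k:ℂ))‖ = 2 * |k| := by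
    simp [norm_mul, Complex.norm_real]
  have hD : ‖Dker k z‖ = ‖Complex.exp (((2*k*z:ℝ):ℂ) * Complex.I) - 1‖ / (2 * |k|) := by
    rw [Dker, harg, norm_div, hden]
  rw [hD]
  refine le_min ?_ ?_
  · have h1 : ‖Complex.exp (((2*k*z:ℝ):ℂ) * Complex.I) - 1‖ ≤ |2*k*z| :=
      norm_exp_mul_I_sub_one_le _
    have h2 : |2*k*z| = 2 * |k| * z := by
      rw [abs_mul, abs_mul, abs_of_nonneg hz]; norm_num
    rw [div_le_iff₀ (by positivity)]
    calc ‖Complex.exp (((2*k*z:ℝ):ℂ) * Complex.I) - 1‖ ≤ |2*k*z| := h1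
      _ = z * (2 * |k|) := by rw [h2]; ring
  · have h1 : ‖Complex.exp (((2*k*z:ℝ):ℂ) * Complex.I) - 1‖ ≤ 2 := by
      calc ‖Complex.exp (((2*k*z:ℝ):ℂ) * Complex.I) - 1‖
          ≤ ‖Complex.exp (((2*k*z:ℝ):ℂ) * Complex.I)‖ + ‖(1:ℂ)‖ := norm_sub_le _ _
        _ = 2 := by rw [Complex.norm_exp_ofReal_mul_I]; norm_num
    rw [div_le_iff₀ (by positivity)]
    calc ‖Complex.exp (((2*k*z:ℝ):ℂ) * Complex.I) - 1‖ ≤ 2 := h1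
      _ = |k|⁻¹ * (2 * |k|) := by field_simp

lemma Dker_interp {θ : ℝ} (hθ : θ ∈ Set.Icc (0:ℝ) 1) {k x y : ℝ} (hk : k ≠ 0)
    (hx : -1 ≤ x) (hxy : x ≤ y) :
    ‖Dker k (y - x)‖ ≤
      2 * Real.sqrt 2 * (|k| ^ (1 - θ) * Real.sqrt (1 + k ^ 2) ^ θ)⁻¹ *
        Real.sqrt (1 + y ^ 2) ^ θ := by
  obtain ⟨hθ0, hθ1⟩ := hθ
  have hk0 : (0:ℝ) < |k| := abs_pos.mpr hk
  set Y := Real.sqrt (1 + y ^ 2) with hYdef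
  set Kk := Real.sqrt (1 + k ^ 2) with hKdef
  have hY1 : 1 ≤ Y := Real.one_le_sqrt.mpr (by nlinarith)
  have hK1 : 1 ≤ Kk := Real.one_le_sqrt.mpr (by nlinarith)
  have hYθ1 : 1 ≤ Y ^ θ := Real.one_le_rpow hY1 hθ0
  have hYθ0 : (0:ℝ) < Y ^ θ := lt_of_lt_of_le one_pos hYθ1
  have ha : (0:ℝ) < |k| ^ (1 - θ) := Real.rpow_pos_of_pos hk0 _
  have hb : (0:ℝ) < Kk ^ θ := Real.rpow_pos_of_pos (lt_of_lt_of_le one_pos hK1) _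
  have hz : 0 ≤ y - x := sub_nonneg.mpr hxy
  have habsy : |y| ≤ Y := by
    rw [hYdef, ← Real.sqrt_sq_eq_abs]
    exact Real.sqrt_le_sqrt (by nlinarith)
  have hzY : y - x ≤ 2 * Y := by
    have : y ≤ |y| := le_abs_self y
    nlinarith
  have h2 : (1:ℝ) ≤ Real.sqrt 2 := Real.one_le_sqrt.mpr (by norm_num)
  have hDmin := norm_Dker_le k (y - x) hk hz
  have hDnn : 0 ≤ ‖Dker k (y - x)‖ := norm_nonneg _
  rcases le_or_gt |k| 1 with hcase | hcase
  · -- small k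
    have hKs : Kk ≤ Real.sqrt 2 := by
      rw [hKdef]
      apply Real.sqrt_le_sqrt
      have : k ^ 2 ≤ 1 := by nlinarith [sq_abs k]
      linarith
    have hbs : Kk ^ θ ≤ Real.sqrt 2 := by
      calc Kk ^ θ ≤ Real.sqrt 2 ^ θ :=
            Real.rpow_le_rpow (by linarith) hKs hθ0
        _ ≤ Real.sqrt 2 ^ (1:ℝ) := Real.rpow_le_rpow_of_exponent_le h2 hθ1
        _ = Real.sqrt 2 := Real.rpow_one _
    have hD2 : ‖Dker k (y - x)‖ ≤ 2 * Y ^ θ * (|k| ^ (1 - θ))⁻¹ := by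
      rcases eq_or_lt_of_le hDnn with h0 | h0
      · rw [← h0]; positivity
      · have hsplit : ‖Dker k (y - x)‖
            = ‖Dker k (y - x)‖ ^ θ * ‖Dker k (y - x)‖ ^ (1 - θ) := by
          rw [← Real.rpow_add h0]; norm_num
        rw [hsplit]
        have h1 : ‖Dker k (y - x)‖ ^ θ ≤ 2 * Y ^ θ := by
          calc ‖Dker k (y - x)‖ ^ θ ≤ (2 * Y) ^ θ :=
                Real.rpow_le_rpow hDnn (le_trans (hDmin.trans (min_le_left _ _)) hzY) hθ0
            _ = 2 ^ θ * Y ^ θ := Real.mul_rpow (by norm_num) (by linarith)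
            _ ≤ 2 ^ (1:ℝ) * Y ^ θ := by
                have : (2:ℝ) ^ θ ≤ 2 ^ (1:ℝ) :=
                  Real.rpow_le_rpow_of_exponent_le (by norm_num) hθ1
                nlinarith
            _ = 2 * Y ^ θ := by norm_num
        have h2' : ‖Dker k (y - x)‖ ^ (1 - θ) ≤ (|k| ^ (1 - θ))⁻¹ := by
          calc ‖Dker k (y - x)‖ ^ (1 - θ) ≤ (|k|⁻¹) ^ (1 - θ) :=
              Real.rpow_le_rpow hDnn (hDmin.trans (min_le_right _ _)) (by linarith)
            _ = (|k| ^ (1 - θ))⁻¹ := Real.inv_rpow (le_of_lt hk0) _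
        calc ‖Dker k (y - x)‖ ^ θ * ‖Dker k (y - x)‖ ^ (1 - θ)
            ≤ (2 * Y ^ θ) * (|k| ^ (1 - θ))⁻¹ := by
              apply mul_le_mul h1 h2' (Real.rpow_nonneg hDnn _) (by positivity)
          _ = 2 * Y ^ θ * (|k| ^ (1 - θ))⁻¹ := by ring
    calc ‖Dker k (y - x)‖ ≤ 2 * Y ^ θ * (|k| ^ (1 - θ))⁻¹ := hD2
      _ = 2 * Y ^ θ * (|k| ^ (1 - θ))⁻¹ * 1 := by ring
      _ ≤ 2 * Y ^ θ * (|k| ^ (1 - θ))⁻¹ * (Real.sqrt 2 * (Kk ^ θ)⁻¹) := by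
          have h1 : (1:ℝ) ≤ Real.sqrt 2 * (Kk ^ θ)⁻¹ := by
            rw [← div_eq_mul_inv]; exact (one_le_div hb).mpr hbs
          exact mul_le_mul_of_nonneg_left h1 (by positivity)
      _ = 2 * Real.sqrt 2 * (|k| ^ (1 - θ) * Kk ^ θ)⁻¹ * Y ^ θ := by
          rw [mul_inv]; ring
  · -- large k
    have hKs : Kk ≤ Real.sqrt 2 * |k| := by
      rw [hKdef, show Real.sqrt 2 * |k| = Real.sqrt (2 * k ^ 2) by
        rw [Real.sqrt_mul (by norm_num), Real.sqrt_sq_eq_abs]]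
      apply Real.sqrt_le_sqrt
      nlinarith [sq_abs k]
    have hbs : Kk ^ θ ≤ Real.sqrt 2 * |k| ^ θ := by
      calc Kk ^ θ ≤ (Real.sqrt 2 * |k|) ^ θ :=
            Real.rpow_le_rpow (by linarith) hKs hθ0
        _ = Real.sqrt 2 ^ θ * |k| ^ θ := Real.mul_rpow (by positivity) (le_of_lt hk0)
        _ ≤ Real.sqrt 2 * |k| ^ θ := by
            have h3 : Real.sqrt 2 ^ θ ≤ Real.sqrt 2 ^ (1:ℝ) :=
              Real.rpow_le_rpow_of_exponent_le h2 hθ1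
            rw [Real.rpow_one] at h3
            nlinarith [Real.rpow_pos_of_pos hk0 θ]
    have hab : |k| ^ (1 - θ) * Kk ^ θ ≤ Real.sqrt 2 * |k| := by
      calc |k| ^ (1 - θ) * Kk ^ θ ≤ |k| ^ (1 - θ) * (Real.sqrt 2 * |k| ^ θ) := by
            nlinarith
        _ = Real.sqrt 2 * (|k| ^ (1 - θ) * |k| ^ θ) := by ring
        _ = Real.sqrt 2 * |k| := by
            rw [← Real.rpow_add hk0]; norm_num
    have hinv : (Real.sqrt 2 * |k|)⁻¹ ≤ (|k| ^ (1 - θ) * Kk ^ θ)⁻¹ :=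
      inv_anti₀ (by positivity) hab
    have e : 2 * Real.sqrt 2 * (Real.sqrt 2 * |k|)⁻¹ = 2 * |k|⁻¹ := by
      have h0 : Real.sqrt 2 ≠ 0 := by positivity
      field_simp
    calc ‖Dker k (y - x)‖ ≤ |k|⁻¹ := hDmin.trans (min_le_right _ _)
      _ ≤ 2 * |k|⁻¹ := by
          have := inv_pos.mpr hk0; linarith
      _ = 2 * Real.sqrt 2 * (Real.sqrt 2 * |k|)⁻¹ := e.symm
      _ ≤ 2 * Real.sqrt 2 * (|k| ^ (1 - θ) * Kk ^ θ)⁻¹ :=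
          mul_le_mul_of_nonneg_left hinv (by positivity)
      _ = 2 * Real.sqrt 2 * (|k| ^ (1 - θ) * Kk ^ θ)⁻¹ * 1 := by ring
      _ ≤ 2 * Real.sqrt 2 * (|k| ^ (1 - θ) * Kk ^ θ)⁻¹ * Y ^ θ :=
          mul_le_mul_of_nonneg_left hYθ1 (by positivity)

/-- θ-interpolated decay bound for the modified Jost function (Lemma 2.2, n = 0). -/
theorem jost_minus_one_decay (C₀ : ℝ) (hC₀ : 0 < C₀) (θ : ℝ) (hθ : θ ∈ Set.Icc (0:ℝ) 1) :
    ∃ C : ℝ, 0 < C ∧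
      ∀ (V : ℝ → ℝ) (m : ℝ → ℝ → ℂ),
        Measurable V →
        Integrable (fun y => Real.sqrt (1 + y ^ 2) * |V y|) →
        Measurable (Function.uncurry m) →
        (∀ x k : ℝ, -1 ≤ x → k ≠ 0 → ‖m x k‖ ≤ C₀) →
        (∀ x k : ℝ, -1 ≤ x → k ≠ 0 →
          m x k = 1 + ∫ y in Set.Ioi x, Dker k (y - x) * (V y : ℂ) * m y k) →
        ∀ x k : ℝ, -1 ≤ x → k ≠ 0 →
          ‖m x k - 1‖ ≤
            C * (|k| ^ (1 - θ) * Real.sqrt (1 + k ^ 2) ^ θ)⁻¹ *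
              ∫ y in Set.Ioi x, Real.sqrt (1 + y ^ 2) ^ θ * |V y| := by
  refine ⟨2 * Real.sqrt 2 * C₀, by positivity, ?_⟩
  intro V m hVmeas hVint hmmeas hmb hvolt x k hx hk
  set A : ℝ := (|k| ^ (1 - θ) * Real.sqrt (1 + k ^ 2) ^ θ)⁻¹ with hA
  have hk0 : (0:ℝ) < |k| := abs_pos.mpr hk
  have hK1 : (1:ℝ) ≤ Real.sqrt (1 + k ^ 2) := Real.one_le_sqrt.mpr (by nlinarith)
  have hA0 : 0 < A := by
    rw [hA]
    have := Real.rpow_pos_of_pos hk0 (1 - θ)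
    have := Real.rpow_pos_of_pos (lt_of_lt_of_le one_pos hK1) θ
    positivity
  -- integrability of the weighted potential
  have hWint : Integrable (fun y => Real.sqrt (1 + y ^ 2) ^ θ * |V y|) := by
    refine hVint.mono ?_ ?_
    · have h1 : Measurable fun y : ℝ => Real.sqrt (1 + y ^ 2) :=
        (continuous_const.add (continuous_pow 2)).sqrt.measurable
      exact ((h1.pow_const θ).mul hVmeas.abs).aestronglyMeasurable
    · refine Filter.Eventually.of_forall fun y => ?_
      have hY1 : (1:ℝ) ≤ Real.sqrt (1 + y ^ 2) := Real.one_le_sqrt.mpr (by nlinarith)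
      have hYθ : Real.sqrt (1 + y ^ 2) ^ θ ≤ Real.sqrt (1 + y ^ 2) := by
        calc Real.sqrt (1 + y ^ 2) ^ θ ≤ Real.sqrt (1 + y ^ 2) ^ (1:ℝ) :=
              Real.rpow_le_rpow_of_exponent_le hY1 hθ.2
          _ = Real.sqrt (1 + y ^ 2) := Real.rpow_one _
      rw [Real.norm_eq_abs, Real.norm_eq_abs,
        abs_of_nonneg (by positivity : (0:ℝ) ≤ Real.sqrt (1 + y ^ 2) ^ θ * |V y|),
        abs_of_nonneg (by positivity : (0:ℝ) ≤ Real.sqrt (1 + y ^ 2) * |V y|)]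
      exact mul_le_mul_of_nonneg_right hYθ (abs_nonneg _)
  have hWint' : Integrable (fun y => 2 * Real.sqrt 2 * C₀ * A *
      (Real.sqrt (1 + y ^ 2) ^ θ * |V y|)) ((volume : Measure ℝ).restrict (Set.Ioi x)) :=
    (hWint.restrict.const_mul _)
  -- the Volterra equation
  have heq := hvolt x k hx hk
  rw [heq, add_sub_cancel_left]
  calc ‖∫ y in Set.Ioi x, Dker k (y - x) * (V y : ℂ) * m y k‖
      ≤ ∫ y in Set.Ioi x, ‖Dker k (y - x) * (V y : ℂ) * m y k‖ :=
        norm_integral_le_integral_norm _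
    _ ≤ ∫ y in Set.Ioi x, 2 * Real.sqrt 2 * C₀ * A *
          (Real.sqrt (1 + y ^ 2) ^ θ * |V y|) := by
        refine integral_mono_of_nonneg
          (Filter.Eventually.of_forall fun y => norm_nonneg _) hWint' ?_
        rw [Filter.EventuallyLE, ae_restrict_iff' measurableSet_Ioi]
        refine Filter.Eventually.of_forall fun y hy => ?_
        have hxy : x ≤ y := le_of_lt hy
        have hy1 : (-1:ℝ) ≤ y := le_trans hx hxy
        have hDb := Dker_interp hθ hk hx hxy
        have hmby := hmb y k hy1 hk
        rw [norm_mul, norm_mul, Complex.norm_real, Real.norm_eq_abs]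
        calc ‖Dker k (y - x)‖ * |V y| * ‖m y k‖
            ≤ (2 * Real.sqrt 2 * A * Real.sqrt (1 + y ^ 2) ^ θ) * |V y| * C₀ := by
              refine mul_le_mul (mul_le_mul_of_nonneg_right hDb (abs_nonneg _))
                hmby (norm_nonneg _) ?_
              have hY1 : (1:ℝ) ≤ Real.sqrt (1 + y ^ 2) := Real.one_le_sqrt.mpr (by nlinarith)
              have : 0 < Real.sqrt (1 + y ^ 2) ^ θ :=
                Real.rpow_pos_of_pos (lt_of_lt_of_le one_pos hY1) θ
              positivity
          _ = 2 * Real.sqrt 2 * C₀ * A * (Real.sqrt (1 + y ^ 2) ^ θ * |V y|) := by ring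
    _ = 2 * Real.sqrt 2 * C₀ * A *
          ∫ y in Set.Ioi x, Real.sqrt (1 + y ^ 2) ^ θ * |V y| := MeasureTheory.integral_const_mul _ _
end
end

section
/- Let n ≥ 1 be an integer and let V : ℝ → ℝ be measurable with ∫_ℝ ⟨y⟩^{n+1} |V(y)| dy < ∞, and let C₀ > 0. Suppose m : [−1,∞) × (ℝ∖{0}) → ℂ is n times continuously differentiable in k with |∂_k^j m(x,k)| ≤ C₀ for all x ≥ −1, k ≠ 0, and 0 ≤ j ≤ n, that m solves the Volterra equation m(x,k) = 1 + ∫_x^∞ D_k(y−x) V(y) m(y,k) dy, and that for every 0 ≤ n′ ≤ n the equation may be differentiated under the integral: ∂_k^{n′} m(x,k) = Σ_{j=0}^{n′} (n′ choose j) ∫_x^∞ ∂_k^j D_k(y−x) V(y) ∂_k^{n′−j} m(y,k) dy. Then for every θ ∈ [0,1] there is a constant C depending only on n, θ, and C₀ such that for all x ≥ −1 and k ≠ 0, |∂_k^n m(x,k)| ≤ C (|k|^{1−θ} ⟨k⟩^{θ})^{-1} W^{n+θ}(x). -/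
open MeasureTheory

noncomputable section

open Complex intervalIntegral Metric

set_option maxHeartbeats 1000000

def Gker (z : ℝ) (j : ℕ) (k : ℝ) : ℂ :=
  ∫ w in (0:ℝ)..z, (2 * Complex.I * (w:ℂ)) ^ j * Complex.exp (2 * Complex.I * (k:ℂ) * (w:ℂ))

lemma norm_exp_aux (k w : ℝ) : ‖Complex.exp (2 * Complex.I * (k:ℂ) * (w:ℂ))‖ = 1 := by
  rw [Complex.norm_exp]
  simp [Complex.mul_re, Complex.mul_im]

lemma norm_2Iw (w : ℝ) : ‖2 * Complex.I * (w:ℂ)‖ = 2 * |w| := by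
  simp [norm_mul, Complex.norm_real, Real.norm_eq_abs]

lemma cont_inner (i : ℕ) (κ : ℝ) :
    Continuous (fun w : ℝ => (2 * Complex.I * (w:ℂ)) ^ i *
      Complex.exp (2 * Complex.I * (κ:ℂ) * (w:ℂ))) := by
  apply Continuous.mul
  · exact (continuous_const.mul Complex.continuous_ofReal).pow i
  · exact Complex.continuous_exp.comp (continuous_const.mul Complex.continuous_ofReal)

lemma hasDerivAt_inner (j : ℕ) (w κ : ℝ) :
    HasDerivAt (fun κ : ℝ => (2 * Complex.I * (w:ℂ)) ^ j *
        Complex.exp (2 * Complex.I * (κ:ℂ) * (w:ℂ)))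
      ((2 * Complex.I * (w:ℂ)) ^ (j+1) *
        Complex.exp (2 * Complex.I * (κ:ℂ) * (w:ℂ))) κ := by
  have key : ∀ κ : ℝ, 2 * Complex.I * (κ:ℂ) * (w:ℂ) = (2 * Complex.I * (w:ℂ)) * (κ:ℂ) := by
    intro κ; ring
  simp only [key]
  have h1 : HasDerivAt (fun ζ : ℂ => Complex.exp ((2 * Complex.I * (w:ℂ)) * ζ))
      (Complex.exp ((2 * Complex.I * (w:ℂ)) * (κ:ℂ)) * (2 * Complex.I * (w:ℂ))) (κ:ℂ) := by
    simpa [mul_one] using (((hasDerivAt_id (κ:ℂ)).const_mul (2 * Complex.I * (w:ℂ))).cexp)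
  have h3 := h1.comp_ofReal.const_mul ((2 * Complex.I * (w:ℂ)) ^ j)
  convert h3 using 1
  rfl
  ring

lemma hasDerivAt_Gker (z : ℝ) (j : ℕ) (k : ℝ) :
    HasDerivAt (Gker z j) (Gker z (j+1) k) k := by
  have := intervalIntegral.hasDerivAt_integral_of_dominated_loc_of_deriv_le
    (F := fun κ : ℝ => fun w : ℝ => (2 * Complex.I * (w:ℂ)) ^ j *
      Complex.exp (2 * Complex.I * (κ:ℂ) * (w:ℂ)))
    (F' := fun κ : ℝ => fun w : ℝ => (2 * Complex.I * (w:ℂ)) ^ (j+1) *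
      Complex.exp (2 * Complex.I * (κ:ℂ) * (w:ℂ)))
    (x₀ := k) (a := 0) (b := z) (μ := volume) (bound := fun w => (2*|w|)^(j+1))
    (s := Metric.ball k 1) (Metric.ball_mem_nhds k one_pos)
    (Filter.Eventually.of_forall fun κ => ((cont_inner j κ).aestronglyMeasurable))
    (((cont_inner j k).intervalIntegrable 0 z))
    ((cont_inner (j+1) k).aestronglyMeasurable)
    ?_ ?_ ?_
  · exact this.2
  · refine Filter.Eventually.of_forall fun w hw κ hκ => ?_
    rw [norm_mul, norm_exp_aux, mul_one, norm_pow, norm_2Iw]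
  · exact ((continuous_const.mul (_root_.continuous_abs : Continuous fun w : ℝ => |w|)).pow (j+1)).intervalIntegrable 0 z
  · exact Filter.Eventually.of_forall fun w hw κ hκ => hasDerivAt_inner j w κ

lemma iteratedDeriv_Gker (z : ℝ) (j i : ℕ) (k : ℝ) :
    iteratedDeriv j (Gker z i) k = Gker z (i + j) k := by
  induction j generalizing i k with
  | zero => simp
  | succ j ih =>
    rw [iteratedDeriv_succ']
    have : deriv (Gker z i) = Gker z (i+1) := by
      funext κ; exact (hasDerivAt_Gker z i κ).deriv
    rw [this, ih]
    ring_nf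

lemma eventuallyEq_iteratedDeriv {f g : ℝ → ℂ} {k : ℝ} (h : f =ᶠ[nhds k] g) (j : ℕ) :
    iteratedDeriv j f =ᶠ[nhds k] iteratedDeriv j g := by
  induction j with
  | zero => simpa [iteratedDeriv_zero] using h
  | succ j ih => rw [iteratedDeriv_succ, iteratedDeriv_succ]; exact ih.deriv

lemma Dker_eq_Gker {k : ℝ} (hk : k ≠ 0) (z : ℝ) : Dker k z = Gker z 0 k := by
  have hc : (2 * Complex.I * (k:ℂ)) ≠ 0 := by
    simp [Complex.ext_iff, hk]
  rw [Gker]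
  simp only [pow_zero, one_mul]
  have : ∀ w : ℝ, 2 * Complex.I * (k:ℂ) * (w:ℂ) = (2 * Complex.I * (k:ℂ)) * (w:ℂ) := fun _ => rfl
  rw [show (fun w : ℝ => Complex.exp (2 * Complex.I * (k:ℂ) * (w:ℂ)))
      = fun w : ℝ => Complex.exp ((2 * Complex.I * (k:ℂ)) * (w:ℂ)) from rfl]
  rw [integral_exp_mul_complex hc]
  simp [Dker]

lemma iteratedDeriv_Dker_eq {k : ℝ} (hk : k ≠ 0) (z : ℝ) (j : ℕ) :
    iteratedDeriv j (fun κ => Dker κ z) k = Gker z j k := by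
  have hev : (fun κ => Dker κ z) =ᶠ[nhds k] Gker z 0 := by
    filter_upwards [eventually_ne_nhds hk] with κ hκ
    exact Dker_eq_Gker hκ z
  have := (eventuallyEq_iteratedDeriv hev j).self_of_nhds
  rw [this, iteratedDeriv_Gker]
  norm_num

lemma Gker_bound_A {z : ℝ} (hz : 0 ≤ z) (j : ℕ) (k : ℝ) :
    ‖Gker z j k‖ ≤ (2*z)^j * z := by
  have h := intervalIntegral.norm_integral_le_of_norm_le_const
    (a := (0:ℝ)) (b := z) (C := (2*z)^j)
    (f := fun w : ℝ => (2 * Complex.I * (w:ℂ)) ^ j *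
      Complex.exp (2 * Complex.I * (k:ℂ) * (w:ℂ)))
    (fun w hw => by
      rw [norm_mul, norm_exp_aux, mul_one, norm_pow, norm_2Iw]
      have hw' : w ∈ Set.Ioc 0 z := by
        rwa [Set.uIoc_of_le hz] at hw
      have : |w| ≤ z := by rw [abs_of_pos hw'.1]; exact hw'.2
      gcongr)
  calc ‖Gker z j k‖ ≤ (2*z)^j * |z - 0| := h
    _ = (2*z)^j * z := by rw [sub_zero, _root_.abs_of_nonneg hz]

lemma Gker_bound_B {z : ℝ} (hz : 0 ≤ z) (j : ℕ) {k : ℝ} (hk : k ≠ 0) :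
    ‖Gker z j k‖ ≤ (j+1) * (2*z)^j / |k| := by
  set c : ℂ := 2 * Complex.I * (k:ℂ) with hcdef
  have hc : c ≠ 0 := by simp [hcdef, Complex.ext_iff, hk]
  have hnc : ‖c‖ = 2 * |k| := by
    simp [hcdef, norm_mul, Complex.norm_real, Real.norm_eq_abs]
  -- u, v and their derivatives
  set u : ℝ → ℂ := fun w => (2 * Complex.I * (w:ℂ)) ^ j with hu
  set u' : ℝ → ℂ := fun w => (j:ℂ) * (2 * Complex.I * (w:ℂ)) ^ (j-1) * (2 * Complex.I) with hu'
  set v : ℝ → ℂ := fun w => Complex.exp (c * (w:ℂ)) / c with hv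
  set v' : ℝ → ℂ := fun w => Complex.exp (c * (w:ℂ)) with hv'
  have hud : ∀ w ∈ Set.uIcc (0:ℝ) z, HasDerivAt u (u' w) w := by
    intro w _
    have h1 : HasDerivAt (fun ζ : ℂ => (2 * Complex.I * ζ) ^ j)
        ((j:ℂ) * (2 * Complex.I * (w:ℂ)) ^ (j-1) * (2 * Complex.I)) (w:ℂ) := by
      have := (((hasDerivAt_id ((w:ℝ):ℂ)).const_mul (2 * Complex.I)).fun_pow j)
      simpa [mul_one] using this
    exact h1.comp_ofReal
  have hvd : ∀ w ∈ Set.uIcc (0:ℝ) z, HasDerivAt v (v' w) w := by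
    intro w _
    have h1 : HasDerivAt (fun ζ : ℂ => Complex.exp (c * ζ)) (Complex.exp (c * (w:ℂ)) * c) (w:ℂ) := by
      simpa [mul_one] using (((hasDerivAt_id ((w:ℝ):ℂ)).const_mul c).cexp)
    have h2 := (h1.comp_ofReal).div_const c
    have : Complex.exp (c * (w:ℂ)) * c / c = Complex.exp (c * (w:ℂ)) :=
      mul_div_cancel_right₀ _ hc
    rwa [this] at h2
  have hu'i : IntervalIntegrable u' volume 0 z := by
    apply Continuous.intervalIntegrable
    exact (continuous_const.mul (((continuous_const.mul Complex.continuous_ofReal)).pow (j-1))).mul continuous_const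
  have hv'i : IntervalIntegrable v' volume 0 z := by
    apply Continuous.intervalIntegrable
    exact Complex.continuous_exp.comp (continuous_const.mul Complex.continuous_ofReal)
  have hibp := intervalIntegral.integral_mul_deriv_eq_deriv_mul hud hvd hu'i hv'i
  have hGeq : Gker z j k = u z * v z - u 0 * v 0 - ∫ w in (0:ℝ)..z, u' w * v w := by
    rw [← hibp, Gker]
  rw [hGeq]
  have hnv : ∀ w : ℝ, ‖v w‖ = 1 / (2 * |k|) := by
    intro w
    rw [hv]
    simp only [norm_div, hnc]
    rw [show c * (w:ℂ) = 2 * Complex.I * (k:ℂ) * (w:ℂ) by rw [hcdef]]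
    rw [norm_exp_aux]
  have hK : (0:ℝ) < |k| := abs_pos.mpr hk
  have h2z : (0:ℝ) ≤ 2*z := by linarith
  have h1 : ‖u z * v z‖ ≤ (2*z)^j * (1/(2*|k|)) := by
    rw [norm_mul, hnv]
    gcongr
    rw [hu, norm_pow, norm_2Iw, _root_.abs_of_nonneg hz]
  have h2 : ‖u 0 * v 0‖ ≤ (2*z)^j * (1/(2*|k|)) := by
    rw [norm_mul, hnv]
    gcongr
    rw [hu, norm_pow, norm_2Iw]
    simp only [abs_zero, mul_zero]
    exact pow_le_pow_left₀ le_rfl h2z j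
  have h3 : ‖∫ w in (0:ℝ)..z, u' w * v w‖ ≤ ((j:ℝ) * (2*z)^(j-1) * 2 * (1/(2*|k|))) * z := by
    have hb := intervalIntegral.norm_integral_le_of_norm_le_const
      (a := (0:ℝ)) (b := z) (C := (j:ℝ) * (2*z)^(j-1) * 2 * (1/(2*|k|)))
      (f := fun w => u' w * v w)
      (fun w hw => by
        have hw' : w ∈ Set.Ioc 0 z := by rwa [Set.uIoc_of_le hz] at hw
        have hwz : |w| ≤ z := by rw [_root_.abs_of_pos hw'.1]; exact hw'.2
        rw [norm_mul, hnv, hu']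
        gcongr
        rw [norm_mul, norm_mul, norm_pow, norm_2Iw]
        have : ‖(j:ℂ)‖ = (j:ℝ) := by simp
        rw [this]
        have : ‖2 * Complex.I‖ = 2 := by simp
        rw [this]
        gcongr)
    calc ‖∫ w in (0:ℝ)..z, u' w * v w‖ ≤ ((j:ℝ) * (2*z)^(j-1) * 2 * (1/(2*|k|))) * |z - 0| := hb
      _ = ((j:ℝ) * (2*z)^(j-1) * 2 * (1/(2*|k|))) * z := by
          rw [sub_zero, _root_.abs_of_nonneg hz]
  have key : (j:ℝ) * (2*z)^(j-1) * z ≤ (j:ℝ) * (2*z)^j := by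
    cases j with
    | zero => simp
    | succ i =>
      simp only [Nat.add_sub_cancel, pow_succ]
      push_cast
      nlinarith [mul_nonneg (mul_nonneg (show (0:ℝ) ≤ (i:ℝ)+1 by positivity)
        (pow_nonneg h2z i)) hz, pow_nonneg h2z i]
  calc ‖u z * v z - u 0 * v 0 - ∫ w in (0:ℝ)..z, u' w * v w‖
      ≤ ‖u z * v z - u 0 * v 0‖ + ‖∫ w in (0:ℝ)..z, u' w * v w‖ := norm_sub_le _ _
    _ ≤ (‖u z * v z‖ + ‖u 0 * v 0‖) + ‖∫ w in (0:ℝ)..z, u' w * v w‖ := by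
        gcongr; exact norm_sub_le _ _
    _ ≤ ((2*z)^j * (1/(2*|k|)) + (2*z)^j * (1/(2*|k|)))
        + ((j:ℝ) * (2*z)^(j-1) * 2 * (1/(2*|k|))) * z := by
        gcongr
    _ = ((2*z)^j + (j:ℝ) * (2*z)^(j-1) * z) / |k| := by field_simp; ring
    _ ≤ ((j:ℝ)+1) * (2*z)^j / |k| := by
        gcongr ?_ / _
        nlinarith [key]

lemma interp_min {d a b θ : ℝ} (hd : 0 ≤ d) (h0a : 0 ≤ a) (h0b : 0 ≤ b)
    (ha : d ≤ a) (hb : d ≤ b) (h0 : 0 ≤ θ) (h1 : θ ≤ 1) :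
    d ≤ a ^ θ * b ^ (1-θ) := by
  rcases eq_or_lt_of_le hd with h | h
  · rw [← h]; positivity
  · calc d = d ^ θ * d ^ (1-θ) := by rw [← Real.rpow_add h]; norm_num
      _ ≤ a ^ θ * b ^ (1-θ) :=
          mul_le_mul (Real.rpow_le_rpow hd ha h0) (Real.rpow_le_rpow hd hb (by linarith))
            (Real.rpow_nonneg hd _) (Real.rpow_nonneg h0a _)

lemma one_le_sqrt_one_add_sq (y : ℝ) : 1 ≤ Real.sqrt (1 + y^2) := by
  rw [show (1:ℝ) = Real.sqrt 1 by rw [Real.sqrt_one]]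
  rw [Real.sqrt_one]  -- undo; keep simple below
  nlinarith [Real.sq_sqrt (show (0:ℝ) ≤ 1 + y^2 by positivity),
    Real.sqrt_nonneg (1 + y^2)]

lemma abs_le_sqrt_one_add_sq (y : ℝ) : |y| ≤ Real.sqrt (1 + y^2) := by
  rw [← Real.sqrt_sq_eq_abs]
  exact Real.sqrt_le_sqrt (by nlinarith)

lemma ptbound (n j : ℕ) (hj : j ≤ n) {θ : ℝ} (hθ0 : 0 ≤ θ) (hθ1 : θ ≤ 1)
    {x y k : ℝ} (hx : -1 ≤ x) (hy : x < y) (hk : k ≠ 0) :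
    ‖iteratedDeriv j (fun κ => Dker κ (y - x)) k‖ ≤
      ((n:ℝ)+1) * 4^(2*n+1) * (|k| ^ (1 - θ) * Real.sqrt (1 + k ^ 2) ^ θ)⁻¹ *
        Real.sqrt (1 + y^2) ^ ((n:ℝ)+θ) := by
  set z : ℝ := y - x with hzdef
  have hz : 0 ≤ z := by simp [hzdef]; linarith
  set U : ℝ := Real.sqrt (1 + y^2) with hUdef
  have hU1 : 1 ≤ U := one_le_sqrt_one_add_sq y
  have hU0 : 0 < U := lt_of_lt_of_le one_pos hU1
  have hzU : z ≤ 2*U := by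
    have h1 : z ≤ y + 1 := by simp [hzdef]; linarith
    have h2 : y ≤ |y| := le_abs_self y
    have := abs_le_sqrt_one_add_sq y
    simp only [← hUdef] at this
    linarith
  set S : ℝ := Real.sqrt (1 + k^2) with hSdef
  have hS1 : 1 ≤ S := one_le_sqrt_one_add_sq k
  have hS0 : 0 < S := lt_of_lt_of_le one_pos hS1
  have hK : (0:ℝ) < |k| := abs_pos.mpr hk
  have hkpow : (0:ℝ) < |k| ^ (1-θ) := Real.rpow_pos_of_pos hK _
  have hSpow : (0:ℝ) < S ^ θ := Real.rpow_pos_of_pos hS0 _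
  set κf : ℝ := (|k| ^ (1 - θ) * S ^ θ)⁻¹ with hκdef
  have hκ0 : 0 < κf := by positivity
  rw [iteratedDeriv_Dker_eq hk]
  -- cast helpers
  have hcast1 : U ^ ((j:ℝ)+1) = U ^ (j+1) := by
    rw [← Real.rpow_natCast U (j+1)]; norm_num
  have hcastj : U ^ ((j:ℝ)) = U ^ j := Real.rpow_natCast U j
  have hA : ‖Gker z j k‖ ≤ (2*4^j) * U ^ ((j:ℝ)+1) := by
    calc ‖Gker z j k‖ ≤ (2*z)^j * z := Gker_bound_A hz j k
      _ ≤ (4*U)^j * (2*U) :=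
          mul_le_mul (pow_le_pow_left₀ (by linarith) (by linarith) j) (by linarith) hz
            (by positivity)
      _ = (2*4^j) * (U^j * U) := by ring
      _ = (2*4^j) * U^(j+1) := by rw [pow_succ]
      _ = (2*4^j) * U ^ ((j:ℝ)+1) := by rw [hcast1]
  have hB : ‖Gker z j k‖ ≤ (((j:ℝ)+1)*4^j) * U ^ ((j:ℝ)) * |k|⁻¹ := by
    calc ‖Gker z j k‖ ≤ ((j:ℝ)+1) * (2*z)^j / |k| := Gker_bound_B hz j hk
      _ ≤ ((j:ℝ)+1) * (4*U)^j / |k| := by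
          gcongr ((j:ℝ)+1) * ?_ / |k|
          exact pow_le_pow_left₀ (by linarith) (by linarith) j
      _ = (((j:ℝ)+1)*4^j) * U^j * |k|⁻¹ := by rw [mul_pow]; ring
      _ = (((j:ℝ)+1)*4^j) * U ^ ((j:ℝ)) * |k|⁻¹ := by rw [hcastj]
  have hUmono : U ^ ((j:ℝ)+θ) ≤ U ^ ((n:ℝ)+θ) := by
    apply Real.rpow_le_rpow_of_exponent_le hU1
    have : (j:ℝ) ≤ (n:ℝ) := by exact_mod_cast hj
    linarith
  have hUjmono : U ^ ((j:ℝ)) ≤ U ^ ((n:ℝ)+θ) := by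
    apply Real.rpow_le_rpow_of_exponent_le hU1
    have : (j:ℝ) ≤ (n:ℝ) := by exact_mod_cast hj
    linarith
  have hconstj : (4:ℝ)^j ≤ 4^n := by
    apply pow_le_pow_right₀ (by norm_num) hj
  rcases le_total |k| 1 with hksmall | hklarge
  · -- small k
    have h2S : S ≤ 2 := by
      have : (1:ℝ) + k^2 ≤ 4 := by nlinarith [_root_.sq_abs k]
      calc S = Real.sqrt (1 + k^2) := rfl
        _ ≤ Real.sqrt 4 := Real.sqrt_le_sqrt this
        _ = 2 := by rw [show (4:ℝ) = 2^2 by norm_num, Real.sqrt_sq (by norm_num : (0:ℝ) ≤ 2)]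
    have hSθ2 : S ^ θ ≤ 2 := by
      calc S ^ θ ≤ S ^ (1:ℝ) := Real.rpow_le_rpow_of_exponent_le hS1 hθ1
        _ = S := Real.rpow_one S
        _ ≤ 2 := h2S
    have hkinv : (|k| ^ (1-θ))⁻¹ ≤ 2 * κf := by
      have heq : (|k| ^ (1-θ))⁻¹ = (S ^ θ) * κf := by
        rw [hκdef, mul_inv]
        field_simp
      rw [heq]
      gcongr
    have hint := interp_min (norm_nonneg (Gker z j k)) (by positivity) (by positivity)
      hA hB hθ0 hθ1
    have e1 : ((2*4^j) * U ^ ((j:ℝ)+1)) ^ θ = ((2:ℝ)*4^j) ^ θ * U ^ (((j:ℝ)+1)*θ) := by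
      rw [Real.mul_rpow (by positivity) (by positivity), ← Real.rpow_mul hU0.le]
    have e2 : ((((j:ℝ)+1)*4^j) * U ^ ((j:ℝ)) * |k|⁻¹) ^ (1-θ)
        = (((j:ℝ)+1)*4^j) ^ (1-θ) * U ^ ((j:ℝ)*(1-θ)) * (|k| ^ (1-θ))⁻¹ := by
      rw [Real.mul_rpow (by positivity) (by positivity),
        Real.mul_rpow (by positivity) (by positivity),
        ← Real.rpow_mul hU0.le, ← Real.inv_rpow (abs_nonneg k)]
    rw [e1, e2] at hint
    have e3 : U ^ (((j:ℝ)+1)*θ) * U ^ ((j:ℝ)*(1-θ)) = U ^ ((j:ℝ)+θ) := by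
      rw [← Real.rpow_add hU0]; ring_nf
    have h4j : (1:ℝ) ≤ 4^j := one_le_pow₀ (by norm_num)
    have hjnn : (0:ℝ) ≤ (j:ℝ) := Nat.cast_nonneg j
    have hc1 : ((2:ℝ)*4^j) ^ θ ≤ 2*4^j := by
      calc ((2:ℝ)*4^j) ^ θ ≤ ((2:ℝ)*4^j) ^ (1:ℝ) :=
            Real.rpow_le_rpow_of_exponent_le (by nlinarith) hθ1
        _ = 2*4^j := Real.rpow_one _
    have hc2 : (((j:ℝ)+1)*4^j) ^ (1-θ) ≤ ((j:ℝ)+1)*4^j := by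
      have h1 : (1:ℝ) ≤ ((j:ℝ)+1)*4^j := by nlinarith
      calc (((j:ℝ)+1)*4^j) ^ (1-θ) ≤ (((j:ℝ)+1)*4^j) ^ (1:ℝ) :=
            Real.rpow_le_rpow_of_exponent_le h1 (by linarith)
        _ = ((j:ℝ)+1)*4^j := Real.rpow_one _
    calc ‖Gker z j k‖ ≤ ((2:ℝ)*4^j) ^ θ * U ^ (((j:ℝ)+1)*θ) *
          ((((j:ℝ)+1)*4^j) ^ (1-θ) * U ^ ((j:ℝ)*(1-θ)) * (|k| ^ (1-θ))⁻¹) := hint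
      _ = (((2:ℝ)*4^j) ^ θ * (((j:ℝ)+1)*4^j) ^ (1-θ)) *
          (U ^ (((j:ℝ)+1)*θ) * U ^ ((j:ℝ)*(1-θ))) * (|k| ^ (1-θ))⁻¹ := by ring
      _ = (((2:ℝ)*4^j) ^ θ * (((j:ℝ)+1)*4^j) ^ (1-θ)) * U ^ ((j:ℝ)+θ) * (|k| ^ (1-θ))⁻¹ := by
          rw [e3]
      _ ≤ ((2*4^j) * (((j:ℝ)+1)*4^j)) * U ^ ((n:ℝ)+θ) * (2 * κf) := by
          have hcc : ((2:ℝ)*4^j)^θ * (((j:ℝ)+1)*4^j)^(1-θ) ≤ (2*4^j) * (((j:ℝ)+1)*4^j) :=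
            mul_le_mul hc1 hc2 (Real.rpow_nonneg (by positivity) _) (by positivity)
          exact mul_le_mul
            (mul_le_mul hcc hUmono (Real.rpow_nonneg hU0.le _) (by positivity)) hkinv
            (by positivity) (by positivity)
      _ ≤ ((n:ℝ)+1) * 4^(2*n+1) * κf * U ^ ((n:ℝ)+θ) := by
          have hjn : (j:ℝ)+1 ≤ (n:ℝ)+1 := by
            have : (j:ℝ) ≤ (n:ℝ) := by exact_mod_cast hj
            linarith
          have : (2*(4:ℝ)^j) * (((j:ℝ)+1)*4^j) * 2 ≤ ((n:ℝ)+1) * 4^(2*n+1) := by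
            have h4 : (4:ℝ)^j * 4^j ≤ 4^n * 4^n := by
              apply mul_le_mul hconstj hconstj (by positivity) (by positivity)
            have h44 : (4:ℝ)^n * 4^n * 4 = 4^(2*n+1) := by
              rw [← pow_add, ← pow_succ]; ring_nf
            nlinarith [pow_nonneg (by norm_num : (0:ℝ) ≤ 4) n, pow_nonneg (by norm_num : (0:ℝ) ≤ 4) j,
              Nat.cast_nonneg (α := ℝ) j, Nat.cast_nonneg (α := ℝ) n]
          calc (2*(4:ℝ)^j) * (((j:ℝ)+1)*4^j) * U ^ ((n:ℝ)+θ) * (2 * κf)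
              = ((2*(4:ℝ)^j) * (((j:ℝ)+1)*4^j) * 2) * κf * U ^ ((n:ℝ)+θ) := by ring
            _ ≤ ((n:ℝ)+1) * 4^(2*n+1) * κf * U ^ ((n:ℝ)+θ) := by gcongr
  · -- large k
    have hS2k : S ≤ 2*|k| := by
      have h1 : (1:ℝ) + k^2 ≤ 4*k^2 := by nlinarith [_root_.sq_abs k]
      have h2 : Real.sqrt (4*k^2) = 2*|k| := by
        rw [show (4:ℝ)*k^2 = (2*|k|)^2 by rw [mul_pow, _root_.sq_abs]; ring]
        exact Real.sqrt_sq (by positivity)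
      calc S ≤ Real.sqrt (4*k^2) := Real.sqrt_le_sqrt h1
        _ = 2*|k| := h2
    have hkf : |k| ^ (1-θ) * S ^ θ ≤ 2*|k| := by
      have h1 : S ^ θ ≤ (2*|k|) ^ θ := Real.rpow_le_rpow hS0.le hS2k hθ0
      have h2 : (2*|k|:ℝ) ^ θ = 2 ^ θ * |k| ^ θ := Real.mul_rpow (by norm_num) (abs_nonneg k)
      have h3 : (2:ℝ) ^ θ ≤ 2 := by
        calc (2:ℝ) ^ θ ≤ (2:ℝ) ^ (1:ℝ) :=
              Real.rpow_le_rpow_of_exponent_le (by norm_num) hθ1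
          _ = 2 := Real.rpow_one 2
      have h4 : |k| ^ (1-θ) * |k| ^ θ = |k| := by
        rw [← Real.rpow_add hK]; norm_num
      calc |k| ^ (1-θ) * S ^ θ ≤ |k| ^ (1-θ) * (2 ^ θ * |k| ^ θ) := by
            have h1' := h1; rw [h2] at h1'
            gcongr
        _ = 2 ^ θ * (|k| ^ (1-θ) * |k| ^ θ) := by ring
        _ = 2 ^ θ * |k| := by rw [h4]
        _ ≤ 2 * |k| := by gcongr
    have hkinv : |k|⁻¹ ≤ 2 * κf := by
      have h1 : (2*|k|)⁻¹ ≤ κf := by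
        apply inv_anti₀ (by positivity) hkf
      calc |k|⁻¹ = 2 * (2*|k|)⁻¹ := by field_simp
        _ ≤ 2 * κf := by gcongr
    calc ‖Gker z j k‖ ≤ (((j:ℝ)+1)*4^j) * U ^ ((j:ℝ)) * |k|⁻¹ := hB
      _ ≤ (((n:ℝ)+1)*4^n) * U ^ ((n:ℝ)+θ) * (2*κf) := by
          have hjn' : (j:ℝ)+1 ≤ (n:ℝ)+1 := by
            have : (j:ℝ) ≤ (n:ℝ) := by exact_mod_cast hj
            linarith
          exact mul_le_mul
            (mul_le_mul (mul_le_mul hjn' hconstj (by positivity) (by positivity)) hUjmono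
              (by positivity) (by positivity)) hkinv (by positivity) (by positivity)
      _ ≤ ((n:ℝ)+1) * 4^(2*n+1) * κf * U ^ ((n:ℝ)+θ) := by
          have h4 : (4:ℝ)^n * 2 ≤ 4^(2*n+1) := by
            have h1 : (2:ℝ) ≤ 4^(n+1) := by
              calc (2:ℝ) ≤ 4 := by norm_num
                _ = 4^1 := (pow_one 4).symm
                _ ≤ 4^(n+1) := pow_le_pow_right₀ (by norm_num) (by omega)
            calc (4:ℝ)^n * 2 ≤ 4^n * 4^(n+1) := by gcongr
              _ = 4^(2*n+1) := by rw [← pow_add]; ring_nf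
          calc (((n:ℝ)+1)*4^n) * U ^ ((n:ℝ)+θ) * (2*κf)
              = (((n:ℝ)+1) * (4^n*2)) * κf * U ^ ((n:ℝ)+θ) := by ring
            _ ≤ ((n:ℝ)+1) * 4^(2*n+1) * κf * U ^ ((n:ℝ)+θ) := by gcongr
/-- k-derivative decay bound for the modified Jost function (Lemma 2.2). -/
theorem jost_k_deriv_decay (n : ℕ) (hn : 1 ≤ n) (C₀ : ℝ) (hC₀ : 0 < C₀)
    (θ : ℝ) (hθ : θ ∈ Set.Icc (0:ℝ) 1) :
    ∃ C : ℝ, 0 < C ∧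
      ∀ (V : ℝ → ℝ) (m : ℝ → ℝ → ℂ),
        Measurable V →
        Integrable (fun y => Real.sqrt (1 + y ^ 2) ^ ((n : ℝ) + 1) * |V y|) →
        (∀ x k : ℝ, -1 ≤ x → k ≠ 0 → ContDiffAt ℝ n (m x) k) →
        (∀ x k : ℝ, -1 ≤ x → k ≠ 0 → ∀ j ≤ n, ‖iteratedDeriv j (m x) k‖ ≤ C₀) →
        (∀ x k : ℝ, -1 ≤ x → k ≠ 0 →
          m x k = 1 + ∫ y in Set.Ioi x, Dker k (y - x) * (V y : ℂ) * m y k) →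
        (∀ n', n' ≤ n → ∀ x k : ℝ, -1 ≤ x → k ≠ 0 →
          iteratedDeriv n' (m x) k =
            ∑ j ∈ Finset.range (n' + 1),
              (n'.choose j : ℂ) *
                ∫ y in Set.Ioi x,
                  iteratedDeriv j (fun κ => Dker κ (y - x)) k * (V y : ℂ) *
                    iteratedDeriv (n' - j) (m y) k) →
        ∀ x k : ℝ, -1 ≤ x → k ≠ 0 →
          ‖iteratedDeriv n (m x) k‖ ≤
            C * (|k| ^ (1 - θ) * Real.sqrt (1 + k ^ 2) ^ θ)⁻¹ *
              ∫ y in Set.Ioi x, Real.sqrt (1 + y ^ 2) ^ ((n : ℝ) + θ) * |V y| := by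


  obtain ⟨hθ0, hθ1⟩ := hθ
  refine ⟨2^n * (((n:ℝ)+1) * 4^(2*n+1)) * C₀, by positivity, ?_⟩
  intro V m hV hVint hcd hbound hvolt hdiff x k hx hk
  set κf : ℝ := (|k| ^ (1 - θ) * Real.sqrt (1 + k ^ 2) ^ θ)⁻¹ with hκdef
  have hK : (0:ℝ) < |k| := abs_pos.mpr hk
  have hS0 : (0:ℝ) < Real.sqrt (1 + k^2) := lt_of_lt_of_le one_pos (one_le_sqrt_one_add_sq k)
  have hκ0 : 0 ≤ κf := by positivity
  set Kp : ℝ := ((n:ℝ)+1) * 4^(2*n+1) with hKpdef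
  have hKp0 : 0 < Kp := by positivity
  -- integrability of the weighted potential
  have hcontU : Continuous (fun y : ℝ => Real.sqrt (1 + y^2) ^ ((n:ℝ)+θ)) := by
    apply Continuous.rpow_const
    · exact Real.continuous_sqrt.comp (by continuity)
    · intro y
      left
      exact ne_of_gt (lt_of_lt_of_le one_pos (one_le_sqrt_one_add_sq y))
  have hint0 : Integrable (fun y => Real.sqrt (1 + y^2) ^ ((n:ℝ)+θ) * |V y|) := by
    apply hVint.mono ((hcontU.measurable.mul hV.abs).aestronglyMeasurable)
    filter_upwards with y
    have e1 : ‖Real.sqrt (1 + y^2) ^ ((n:ℝ)+θ) * |V y|‖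
        = Real.sqrt (1 + y^2) ^ ((n:ℝ)+θ) * |V y| := by
      rw [Real.norm_eq_abs]; exact _root_.abs_of_nonneg (by positivity)
    have e2 : ‖Real.sqrt (1 + y^2) ^ ((n:ℝ)+1) * |V y|‖
        = Real.sqrt (1 + y^2) ^ ((n:ℝ)+1) * |V y| := by
      rw [Real.norm_eq_abs]; exact _root_.abs_of_nonneg (by positivity)
    simp only [Pi.mul_apply]
    rw [e1, e2]
    exact mul_le_mul_of_nonneg_right
      (Real.rpow_le_rpow_of_exponent_le (one_le_sqrt_one_add_sq y) (by linarith))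
      (abs_nonneg _)
  set I : ℝ := ∫ y in Set.Ioi x, Real.sqrt (1 + y ^ 2) ^ ((n : ℝ) + θ) * |V y| with hIdef
  have hIint : Integrable (fun y => Real.sqrt (1 + y^2) ^ ((n:ℝ)+θ) * |V y|)
      (volume.restrict (Set.Ioi x)) := hint0.restrict
  -- per-term bound
  have hterm : ∀ j, j ≤ n →
      ‖∫ y in Set.Ioi x, iteratedDeriv j (fun κ => Dker κ (y - x)) k * (V y : ℂ) *
          iteratedDeriv (n - j) (m y) k‖ ≤ (Kp * C₀ * κf) * I := by
    intro j hj
    have hptwise : ∀ᵐ y ∂(volume.restrict (Set.Ioi x)),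
        ‖iteratedDeriv j (fun κ => Dker κ (y - x)) k * (V y : ℂ) *
          iteratedDeriv (n - j) (m y) k‖ ≤
        (Kp * C₀ * κf) * (Real.sqrt (1 + y^2) ^ ((n:ℝ)+θ) * |V y|) := by
      rw [ae_restrict_iff' measurableSet_Ioi]
      filter_upwards with y hy
      have hxy : x < y := hy
      have hD := ptbound n j hj hθ0 hθ1 hx hxy hk
      have hm := hbound y k (by linarith) hk (n - j) (Nat.sub_le n j)
      have hVnorm : ‖(V y : ℂ)‖ = |V y| := by
        rw [Complex.norm_real, Real.norm_eq_abs]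
      calc ‖iteratedDeriv j (fun κ => Dker κ (y - x)) k * (V y : ℂ) *
            iteratedDeriv (n - j) (m y) k‖
          = ‖iteratedDeriv j (fun κ => Dker κ (y - x)) k‖ * |V y| *
            ‖iteratedDeriv (n - j) (m y) k‖ := by rw [norm_mul, norm_mul, hVnorm]
        _ ≤ (Kp * κf * Real.sqrt (1 + y^2) ^ ((n:ℝ)+θ)) * |V y| * C₀ := by
            apply mul_le_mul _ hm (norm_nonneg _) (by positivity)
            exact mul_le_mul_of_nonneg_right hD (abs_nonneg _)
        _ = (Kp * C₀ * κf) * (Real.sqrt (1 + y^2) ^ ((n:ℝ)+θ) * |V y|) := by ring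
    calc ‖∫ y in Set.Ioi x, iteratedDeriv j (fun κ => Dker κ (y - x)) k * (V y : ℂ) *
          iteratedDeriv (n - j) (m y) k‖
        ≤ ∫ y in Set.Ioi x, ‖iteratedDeriv j (fun κ => Dker κ (y - x)) k * (V y : ℂ) *
          iteratedDeriv (n - j) (m y) k‖ := norm_integral_le_integral_norm _
      _ ≤ ∫ y in Set.Ioi x, (Kp * C₀ * κf) * (Real.sqrt (1 + y^2) ^ ((n:ℝ)+θ) * |V y|) := by
          apply integral_mono_of_nonneg
          · filter_upwards with y; exact norm_nonneg _
          · exact (hIint.const_mul _)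
          · exact hptwise
      _ = (Kp * C₀ * κf) * I := by
          rw [MeasureTheory.integral_const_mul]
  rw [hdiff n le_rfl x k hx hk]
  have hsum := norm_sum_le (Finset.range (n+1)) (fun j =>
    (n.choose j : ℂ) * ∫ y in Set.Ioi x,
      iteratedDeriv j (fun κ => Dker κ (y - x)) k * (V y : ℂ) *
        iteratedDeriv (n - j) (m y) k)
  calc ‖∑ j ∈ Finset.range (n + 1), (n.choose j : ℂ) *
        ∫ y in Set.Ioi x, iteratedDeriv j (fun κ => Dker κ (y - x)) k * (V y : ℂ) *
          iteratedDeriv (n - j) (m y) k‖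
      ≤ ∑ j ∈ Finset.range (n + 1), ‖(n.choose j : ℂ) *
        ∫ y in Set.Ioi x, iteratedDeriv j (fun κ => Dker κ (y - x)) k * (V y : ℂ) *
          iteratedDeriv (n - j) (m y) k‖ := hsum
    _ ≤ ∑ j ∈ Finset.range (n + 1), (n.choose j : ℝ) * ((Kp * C₀ * κf) * I) := by
        apply Finset.sum_le_sum
        intro j hjmem
        have hj : j ≤ n := Nat.lt_succ_iff.mp (Finset.mem_range.mp hjmem)
        rw [norm_mul]
        have hnc : ‖((n.choose j : ℕ) : ℂ)‖ = (n.choose j : ℝ) := by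
          rw [Complex.norm_natCast]
        rw [hnc]
        exact mul_le_mul_of_nonneg_left (hterm j hj) (by positivity)
    _ = (2:ℝ)^n * ((Kp * C₀ * κf) * I) := by
        rw [← Finset.sum_mul]
        congr 1
        have : ∑ j ∈ Finset.range (n + 1), ((n.choose j : ℕ) : ℝ)
            = ((∑ j ∈ Finset.range (n + 1), n.choose j : ℕ) : ℝ) := by
          push_cast; ring
        rw [this, Nat.sum_range_choose]
        push_cast; ring
    _ = 2^n * (((n:ℝ)+1) * 4^(2*n+1)) * C₀ * κf * I := by rw [hKpdef]; ring
end
end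

section
/- Let V ∈ L¹(ℝ), C₀ > 0, and k ≠ 0. Suppose m : [−1,∞) × (ℝ∖{0}) → ℂ is measurable with |m(x,k)| ≤ C₀ for all x ≥ −1, and solves the Volterra equation m(x,k) = 1 + ∫_x^∞ D_k(y−x) V(y) m(y,k) dy. Then for each fixed k ≠ 0 the function x ↦ m(x,k) is differentiable on (−1,∞), its derivative satisfies ∂_x m(x,k) = −∫_x^∞ e^{2ik(y−x)} V(y) m(y,k) dy, and consequently |∂_x m(x,k)| ≤ C₀ ∫_x^∞ |V(y)| dy = C₀ W⁰(x) for all x ≥ −1, uniformly in k. -/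
open MeasureTheory
noncomputable section
lemma two_I_k_ne (k : ℝ) (hk : k ≠ 0) : (2 * Complex.I * (k : ℂ)) ≠ 0 := by
  simp [Complex.I_ne_zero, hk]

lemma norm_exp_2Ik (k t : ℝ) : ‖Complex.exp (2 * Complex.I * (k : ℂ) * (t : ℂ))‖ = 1 := by
  rw [Complex.norm_exp]
  simp [Complex.mul_re]

lemma Dker_zero (k : ℝ) : Dker k 0 = 0 := by simp [Dker]

lemma continuous_Dker (k : ℝ) : Continuous fun z : ℝ => Dker k z := by
  unfold Dker; fun_prop

lemma Dker_hasDerivAt (k : ℝ) (hk : k ≠ 0) (z : ℝ) :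
    HasDerivAt (fun z : ℝ => Dker k z) (Complex.exp (2 * Complex.I * (k : ℂ) * (z : ℂ))) z := by
  have h1 : HasDerivAt (fun w : ℂ => (Complex.exp (2 * Complex.I * (k : ℂ) * w) - 1) / (2 * Complex.I * (k : ℂ)))
      (Complex.exp (2 * Complex.I * (k : ℂ) * (z : ℂ))) (z : ℂ) := by
    have h2 : HasDerivAt (fun w : ℂ => Complex.exp (2 * Complex.I * (k : ℂ) * w))
        (2 * Complex.I * (k : ℂ) * Complex.exp (2 * Complex.I * (k : ℂ) * (z : ℂ))) (z : ℂ) := by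
      have := (Complex.hasDerivAt_exp (2 * Complex.I * (k : ℂ) * (z : ℂ))).comp (z:ℂ)
        ((hasDerivAt_id (z:ℂ)).const_mul (2 * Complex.I * (k : ℂ)))
      simpa [Function.comp_def, mul_comm] using this
    have h3 := (h2.sub_const 1).div_const (2 * Complex.I * (k : ℂ))
    have hc := two_I_k_ne k hk
    rwa [mul_div_cancel_left₀ _ hc] at h3
  exact h1.comp_ofReal

lemma Dker_lip (k : ℝ) (hk : k ≠ 0) (z z' : ℝ) : ‖Dker k z - Dker k z'‖ ≤ |z - z'| := by
  have := Convex.norm_image_sub_le_of_norm_hasDerivWithin_le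
    (f := fun z : ℝ => Dker k z)
    (f' := fun z : ℝ => Complex.exp (2 * Complex.I * (k : ℂ) * (z : ℂ))) (C := 1)
    (fun x _ => (Dker_hasDerivAt k hk x).hasDerivWithinAt)
    (fun x _ => le_of_eq (norm_exp_2Ik k x)) convex_univ (Set.mem_univ z') (Set.mem_univ z)
  simpa [Real.norm_eq_abs, abs_sub_comm] using this

lemma Dker_norm_le (k : ℝ) (hk : k ≠ 0) (z : ℝ) : ‖Dker k z‖ ≤ 1 / |k| := by
  rw [Dker, norm_div]
  have h1 : ‖Complex.exp (2 * Complex.I * (k:ℂ) * (z:ℂ)) - 1‖ ≤ 2 := by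
    calc ‖Complex.exp (2 * Complex.I * (k:ℂ) * (z:ℂ)) - 1‖ ≤ _ + _ := norm_sub_le _ _
    _ ≤ 2 := by rw [norm_exp_2Ik]; norm_num
  have h2 : ‖(2 * Complex.I * (k:ℂ))‖ = 2 * |k| := by
    simp [norm_mul, Complex.norm_real, Real.norm_eq_abs]
  rw [h2, div_le_div_iff₀ (by positivity) (by positivity)]
  nlinarith [abs_pos.2 hk, h1]

/-- x-derivative identity and bound for the modified Jost function. -/
theorem jost_x_deriv (C₀ : ℝ) (hC₀ : 0 < C₀) (V : ℝ → ℝ) (hVmeas : Measurable V)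
    (hV : Integrable V) (k : ℝ) (hk : k ≠ 0) (m : ℝ → ℝ → ℂ)
    (hmeas : Measurable (Function.uncurry m))
    (hbd : ∀ x : ℝ, -1 ≤ x → ‖m x k‖ ≤ C₀)
    (hvolt : ∀ x : ℝ, -1 ≤ x →
      m x k = 1 + ∫ y in Set.Ioi x, Dker k (y - x) * (V y : ℂ) * m y k) :
    (∀ x : ℝ, -1 < x →
      HasDerivAt (fun x' => m x' k)
        (-∫ y in Set.Ioi x,
            Complex.exp (2 * Complex.I * (k : ℂ) * ((y : ℂ) - (x : ℂ))) * (V y : ℂ) * m y k) x) ∧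
    (∀ x : ℝ, -1 ≤ x →
      ‖∫ y in Set.Ioi x,
          Complex.exp (2 * Complex.I * (k : ℂ) * ((y : ℂ) - (x : ℂ))) * (V y : ℂ) * m y k‖ ≤
        C₀ * ∫ y in Set.Ioi x, |V y|) := by
  have hmk : Measurable fun y : ℝ => m y k :=
    hmeas.comp (measurable_id.prodMk measurable_const)
  have hh_meas : Measurable fun y : ℝ => (V y : ℂ) * m y k :=
    (Complex.measurable_ofReal.comp hVmeas).mul hmk
  have hbd' : ∀ y : ℝ, -1 ≤ y → ‖(V y : ℂ) * m y k‖ ≤ C₀ * |V y| := by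
    intro y hy
    rw [norm_mul, Complex.norm_real, Real.norm_eq_abs, mul_comm]
    exact mul_le_mul_of_nonneg_right (hbd y hy) (abs_nonneg _)
  have hCV : Integrable (fun y : ℝ => C₀ * |V y|) := hV.abs.const_mul C₀
  -- the bound part
  have hbound : ∀ x : ℝ, -1 ≤ x →
      ‖∫ y in Set.Ioi x,
          Complex.exp (2 * Complex.I * (k : ℂ) * ((y : ℂ) - (x : ℂ))) * (V y : ℂ) * m y k‖ ≤
        C₀ * ∫ y in Set.Ioi x, |V y| := by
    intro x hx
    have heq : C₀ * ∫ y in Set.Ioi x, |V y| = ∫ y in Set.Ioi x, C₀ * |V y| :=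
      (integral_const_mul _ _).symm
    rw [heq]
    refine norm_integral_le_of_norm_le hCV.restrict ?_
    refine (ae_restrict_iff' measurableSet_Ioi).2 (Filter.Eventually.of_forall fun y hy => ?_)
    have hy' : (-1:ℝ) ≤ y := le_of_lt (lt_of_le_of_lt hx hy)
    have hcast : ((y : ℂ) - (x : ℂ)) = (((y - x : ℝ)) : ℂ) := by push_cast; ring
    rw [mul_assoc, norm_mul, hcast, norm_exp_2Ik, one_mul]
    exact hbd' y hy'
  refine ⟨?_, hbound⟩
  intro x₀ hx₀
  set μ := volume.restrict (Set.Ioi (-1:ℝ)) with hμ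
  set F : ℝ → ℝ → ℂ := fun x y => Dker k (max (y - x) 0) * (V y : ℂ) * m y k with hF
  set F' : ℝ → ℂ := fun y => (Set.Ioi x₀).indicator
      (fun y => -(Complex.exp (2 * Complex.I * (k : ℂ) * ((y : ℂ) - (x₀ : ℂ))) *
        ((V y : ℂ) * m y k))) y with hF'
  -- Claim A: for x > -1, ∫ F x dμ = ∫_{Ioi x} Dker k (y-x) V m
  have claimA : ∀ x : ℝ, -1 ≤ x →
      ∫ y, F x y ∂μ = ∫ y in Set.Ioi x, Dker k (y - x) * (V y : ℂ) * m y k := by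
    intro x hx
    have hpt : ∀ y : ℝ, F x y =
        (Set.Ioi x).indicator (fun y => Dker k (y - x) * (V y : ℂ) * m y k) y := by
      intro y
      by_cases hy : x < y
      · rw [Set.indicator_of_mem (show y ∈ Set.Ioi x from hy)]
        show Dker k (max (y - x) 0) * (V y : ℂ) * m y k = _
        rw [max_eq_left (by linarith)]
      · rw [Set.indicator_of_notMem (show y ∉ Set.Ioi x by simpa using hy)]
        show Dker k (max (y - x) 0) * (V y : ℂ) * m y k = 0
        push_neg at hy
        rw [max_eq_right (by linarith), Dker_zero, zero_mul, zero_mul]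
    calc ∫ y, F x y ∂μ
        = ∫ y, (Set.Ioi x).indicator (fun y => Dker k (y - x) * (V y : ℂ) * m y k) y ∂μ := by
          exact integral_congr_ae (Filter.Eventually.of_forall hpt)
      _ = ∫ y in Set.Ioi x, Dker k (y - x) * (V y : ℂ) * m y k ∂μ :=
          integral_indicator measurableSet_Ioi
      _ = ∫ y in Set.Ioi x, Dker k (y - x) * (V y : ℂ) * m y k := by
          rw [hμ, Measure.restrict_restrict measurableSet_Ioi, Set.Ioi_inter_Ioi,
            sup_eq_left.2 (by linarith : (-1:ℝ) ≤ x)]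
  set ε : ℝ := (x₀ + 1) / 2 with hε_def
  have hε : 0 < ε := by simp only [hε_def]; linarith
  have hball : ∀ x ∈ Metric.ball x₀ ε, -1 < x := by
    intro x hx
    rw [Metric.mem_ball, Real.dist_eq] at hx
    have := abs_lt.1 hx
    simp only [hε_def] at this
    linarith [this.1]
  have hF_meas : ∀ᶠ x in nhds x₀, AEStronglyMeasurable (F x) μ := by
    refine Filter.Eventually.of_forall fun x => ?_
    exact ((((continuous_Dker k).comp
      ((continuous_id.sub continuous_const).max continuous_const)).measurable.mul
      (Complex.measurable_ofReal.comp hVmeas)).mul hmk).aestronglyMeasurable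
  have hF_int : Integrable (F x₀) μ := by
    refine ((hCV.const_mul (1 / |k|)).restrict).mono'
      (((((continuous_Dker k).comp
        ((continuous_id.sub continuous_const).max continuous_const)).measurable.mul
        (Complex.measurable_ofReal.comp hVmeas)).mul hmk).aestronglyMeasurable) ?_
    refine (ae_restrict_iff' measurableSet_Ioi).2 (Filter.Eventually.of_forall fun y hy => ?_)
    have hy' : (-1:ℝ) ≤ y := le_of_lt hy
    show ‖Dker k (max (y - x₀) 0) * (V y : ℂ) * m y k‖ ≤ _
    rw [mul_assoc, norm_mul]
    exact mul_le_mul (Dker_norm_le k hk _) (hbd' y hy') (norm_nonneg _) (by positivity)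
  have hF'_meas : AEStronglyMeasurable F' μ := by
    refine (Measurable.indicator ?_ measurableSet_Ioi).aestronglyMeasurable
    exact ((Complex.measurable_exp.comp (by fun_prop)).mul hh_meas).neg
  have h_lip : ∀ᵐ y ∂μ, LipschitzOnWith (Real.nnabs (C₀ * |V y|))
      (fun x => F x y) (Metric.ball x₀ ε) := by
    refine (ae_restrict_iff' measurableSet_Ioi).2 (Filter.Eventually.of_forall fun y hy => ?_)
    have hy' : (-1:ℝ) ≤ y := le_of_lt hy
    refine LipschitzOnWith.of_dist_le_mul fun x hx x' hx' => ?_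
    rw [dist_eq_norm]
    have hsub : F x y - F x' y =
        (Dker k (max (y - x) 0) - Dker k (max (y - x') 0)) * ((V y : ℂ) * m y k) := by
      show Dker k (max (y - x) 0) * (V y : ℂ) * m y k -
        Dker k (max (y - x') 0) * (V y : ℂ) * m y k = _
      ring
    rw [hsub, norm_mul]
    have h1 : ‖Dker k (max (y - x) 0) - Dker k (max (y - x') 0)‖ ≤ dist x x' := by
      refine (Dker_lip k hk _ _).trans ?_
      refine (abs_max_sub_max_le_abs _ _ _).trans ?_
      rw [Real.dist_eq]
      rw [show y - x - (y - x') = -(x - x') by ring, abs_neg]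
    have h2 : ‖(V y : ℂ) * m y k‖ ≤ (Real.nnabs (C₀ * |V y|) : ℝ) := by
      rw [Real.coe_nnabs, abs_of_nonneg (by positivity)]
      exact hbd' y hy'
    calc ‖Dker k (max (y - x) 0) - Dker k (max (y - x') 0)‖ * ‖(V y : ℂ) * m y k‖
        ≤ dist x x' * (Real.nnabs (C₀ * |V y|) : ℝ) :=
          mul_le_mul h1 h2 (norm_nonneg _) dist_nonneg
      _ = (Real.nnabs (C₀ * |V y|) : ℝ) * dist x x' := mul_comm _ _
  have bound_integrable : Integrable (fun y : ℝ => C₀ * |V y|) μ := hCV.restrict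
  have hae : ∀ᵐ y ∂μ, y ≠ x₀ := by
    refine ae_iff.2 ?_
    have hset : {y : ℝ | ¬ y ≠ x₀} = {x₀} := by ext y; simp
    rw [hset, hμ, Measure.restrict_apply (measurableSet_singleton x₀)]
    exact measure_mono_null Set.inter_subset_left (measure_singleton x₀)
  have h_diff : ∀ᵐ y ∂μ, HasDerivAt (fun x => F x y) (F' y) x₀ := by
    refine hae.mono fun y hy => ?_
    rcases lt_or_gt_of_ne hy with hlt | hgt
    · -- y < x₀
      have hF'y : F' y = 0 :=
        Set.indicator_of_notMem (show y ∉ Set.Ioi x₀ by simpa using hlt.not_gt) _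
      rw [hF'y]
      refine (hasDerivAt_const x₀ (0:ℂ)).congr_of_eventuallyEq ?_
      filter_upwards [Ioi_mem_nhds hlt] with x hx
      show F x y = 0
      show Dker k (max (y - x) 0) * (V y : ℂ) * m y k = 0
      rw [max_eq_right (by simp at hx; linarith), Dker_zero, zero_mul, zero_mul]
    · -- y > x₀
      have hF'y : F' y = -(Complex.exp (2 * Complex.I * (k : ℂ) * ((y : ℂ) - (x₀ : ℂ))) *
          ((V y : ℂ) * m y k)) :=
        Set.indicator_of_mem (show y ∈ Set.Ioi x₀ from hgt) _
      rw [hF'y]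
      have h1 : HasDerivAt (fun x : ℝ => y - x) (-1) x₀ := (hasDerivAt_id x₀).const_sub y
      have h2 := (Dker_hasDerivAt k hk (y - x₀)).scomp x₀ h1
      have h3 := h2.mul_const ((V y : ℂ) * m y k)
      have h4 : HasDerivAt (fun x : ℝ => Dker k (y - x) * ((V y : ℂ) * m y k))
          (-(Complex.exp (2 * Complex.I * (k : ℂ) * ((y : ℂ) - (x₀ : ℂ))) *
            ((V y : ℂ) * m y k))) x₀ := by
        simpa [Function.comp_def, Complex.ofReal_sub, neg_smul, one_smul, neg_mul] using h3
      refine h4.congr_of_eventuallyEq ?_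
      filter_upwards [Iio_mem_nhds hgt] with x hx
      show Dker k (max (y - x) 0) * (V y : ℂ) * m y k = _
      rw [max_eq_left (by simp at hx; linarith), mul_assoc]
  obtain ⟨-, hder⟩ := hasDerivAt_integral_of_dominated_loc_of_lip (Metric.ball_mem_nhds x₀ hε) hF_meas hF_int
    hF'_meas h_lip bound_integrable h_diff
  have hval : ∫ y, F' y ∂μ =
      -∫ y in Set.Ioi x₀,
        Complex.exp (2 * Complex.I * (k : ℂ) * ((y : ℂ) - (x₀ : ℂ))) * (V y : ℂ) * m y k := by
    rw [hF']
    rw [integral_indicator measurableSet_Ioi, hμ,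
      Measure.restrict_restrict measurableSet_Ioi, Set.Ioi_inter_Ioi,
      sup_eq_left.2 (by linarith : (-1:ℝ) ≤ x₀), integral_neg]
    congr 1
    refine integral_congr_ae (Filter.Eventually.of_forall fun y => ?_)
    simp only
    ring
  have hfinal : HasDerivAt (fun x : ℝ => 1 + ∫ y, F x y ∂μ)
      (-∫ y in Set.Ioi x₀,
        Complex.exp (2 * Complex.I * (k : ℂ) * ((y : ℂ) - (x₀ : ℂ))) * (V y : ℂ) * m y k) x₀ := by
    rw [← hval]
    exact hder.const_add 1
  refine hfinal.congr_of_eventuallyEq ?_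
  filter_upwards [Ioi_mem_nhds hx₀] with x hx
  have hx' : (-1:ℝ) ≤ x := le_of_lt (by simpa using hx)
  rw [hvolt x hx', claimA x hx']
end
end

section
/- Let γ ≥ 1 and let V : ℝ → ℝ be measurable with Q := ∫_ℝ ⟨y⟩^γ |V(y)| dy < ∞. Suppose h : [−1,∞) × ℝ → ℂ is measurable and satisfies |h(y,k)| ≤ ⟨k⟩^{-1} ∫_y^∞ ⟨z⟩ |V(z)| dz for all y ≥ −1 and all k. Then there is a constant C depending only on γ such that for all x ≥ −1 and all k, ∫_x^∞ |V(y)| |h(y,k)| dy ≤ C Q² ⟨x⟩^{1−2γ} ⟨k⟩^{-1}. -/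
open MeasureTheory

noncomputable section

private lemma one_le_s (t : ℝ) : 1 ≤ Real.sqrt (1 + t ^ 2) := by
  nlinarith [Real.sq_sqrt (show (0:ℝ) ≤ 1 + t ^ 2 by positivity),
    Real.sqrt_nonneg (1 + t ^ 2)]

private lemma s_pos (t : ℝ) : 0 < Real.sqrt (1 + t ^ 2) :=
  lt_of_lt_of_le one_pos (one_le_s t)

private lemma s_le (y z : ℝ) (hy : -1 ≤ y) (hyz : y ≤ z) :
    Real.sqrt (1 + y ^ 2) ≤ Real.sqrt 2 * Real.sqrt (1 + z ^ 2) := by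
  rcases le_or_gt y 1 with h1 | h1
  · have : Real.sqrt (1 + y ^ 2) ≤ Real.sqrt 2 := Real.sqrt_le_sqrt (by nlinarith)
    calc Real.sqrt (1 + y ^ 2) ≤ Real.sqrt 2 := this
      _ = Real.sqrt 2 * 1 := (mul_one _).symm
      _ ≤ Real.sqrt 2 * Real.sqrt (1 + z ^ 2) := by
          exact mul_le_mul_of_nonneg_left (one_le_s z) (Real.sqrt_nonneg 2)
  · have : Real.sqrt (1 + y ^ 2) ≤ Real.sqrt (1 + z ^ 2) :=
      Real.sqrt_le_sqrt (by nlinarith)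
    calc Real.sqrt (1 + y ^ 2) ≤ Real.sqrt (1 + z ^ 2) := this
      _ = 1 * Real.sqrt (1 + z ^ 2) := (one_mul _).symm
      _ ≤ Real.sqrt 2 * Real.sqrt (1 + z ^ 2) := by
          apply mul_le_mul_of_nonneg_right _ (Real.sqrt_nonneg _)
          rw [show (1:ℝ) = Real.sqrt 1 by simp]
          exact Real.sqrt_le_sqrt (by norm_num)

private lemma rpow_key (y z c : ℝ) (hy : -1 ≤ y) (hyz : y ≤ z) (hc : c ≤ 0) :
    Real.sqrt (1 + z ^ 2) ^ c ≤ Real.sqrt 2 ^ (-c) * Real.sqrt (1 + y ^ 2) ^ c := by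
  have h2 : (0:ℝ) < Real.sqrt 2 := by positivity
  have hdiv : Real.sqrt (1 + y ^ 2) / Real.sqrt 2 ≤ Real.sqrt (1 + z ^ 2) := by
    rw [div_le_iff₀ h2, mul_comm]
    exact s_le y z hy hyz
  have hpos : (0:ℝ) < Real.sqrt (1 + y ^ 2) / Real.sqrt 2 := div_pos (s_pos y) h2
  have := Real.rpow_le_rpow_of_nonpos hpos hdiv hc
  calc Real.sqrt (1 + z ^ 2) ^ c
      ≤ (Real.sqrt (1 + y ^ 2) / Real.sqrt 2) ^ c := this
    _ = Real.sqrt (1 + y ^ 2) ^ c / Real.sqrt 2 ^ c := by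
        rw [Real.div_rpow (Real.sqrt_nonneg _) (Real.sqrt_nonneg _)]
    _ = Real.sqrt 2 ^ (-c) * Real.sqrt (1 + y ^ 2) ^ c := by
        rw [Real.rpow_neg (le_of_lt h2)]
        rw [div_eq_mul_inv, mul_comm]

/-- The 'double potential' localization estimate (equation (double-V-trick)). -/
theorem double_potential_estimate (γ : ℝ) (hγ : 1 ≤ γ) :
    ∃ C : ℝ, 0 < C ∧
      ∀ (V : ℝ → ℝ) (h : ℝ → ℝ → ℂ),
        Measurable V →
        Integrable (fun y => Real.sqrt (1 + y ^ 2) ^ γ * |V y|) →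
        Measurable (Function.uncurry h) →
        (∀ y k : ℝ, -1 ≤ y →
          ‖h y k‖ ≤ (Real.sqrt (1 + k ^ 2))⁻¹ *
            ∫ z in Set.Ioi y, Real.sqrt (1 + z ^ 2) * |V z|) →
        ∀ x k : ℝ, -1 ≤ x →
          (∫ y in Set.Ioi x, |V y| * ‖h y k‖) ≤
            C * (∫ y, Real.sqrt (1 + y ^ 2) ^ γ * |V y|) ^ 2 *
              Real.sqrt (1 + x ^ 2) ^ (1 - 2 * γ) * (Real.sqrt (1 + k ^ 2))⁻¹ := by
  refine ⟨(2:ℝ) ^ (2 * γ), by positivity, ?_⟩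
  intro V h hV hInt hh hbound x k hx
  set s : ℝ → ℝ := fun t => Real.sqrt (1 + t ^ 2) with hs
  set Q : ℝ := ∫ y, s y ^ γ * |V y| with hQ
  have hQnonneg : 0 ≤ Q := integral_nonneg (fun y => by positivity)
  have hQset : ∀ t : ℝ, (∫ y in Set.Ioi t, s y ^ γ * |V y|) ≤ Q := by
    intro t
    exact setIntegral_le_integral hInt (Filter.Eventually.of_forall fun y => by positivity)
  -- Step 1: bound the inner integral
  have hI : ∀ y : ℝ, -1 ≤ y →
      (∫ z in Set.Ioi y, s z * |V z|) ≤ Real.sqrt 2 ^ (γ - 1) * s y ^ (1 - γ) * Q := by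
    intro y hy
    have hdom : (∫ z in Set.Ioi y, s z * |V z|)
        ≤ ∫ z in Set.Ioi y, Real.sqrt 2 ^ (γ - 1) * s y ^ (1 - γ) * (s z ^ γ * |V z|) := by
      apply integral_mono_of_nonneg
      · exact Filter.Eventually.of_forall fun z => by positivity
      · exact (hInt.restrict).const_mul _
      · filter_upwards [ae_restrict_mem measurableSet_Ioi] with z hz
        have hz' : y ≤ z := le_of_lt hz
        have key : s z ^ (1 - γ) ≤ Real.sqrt 2 ^ (γ - 1) * s y ^ (1 - γ) := by
          have := rpow_key y z (1 - γ) hy hz' (by linarith)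
          simpa [neg_sub] using this
        have hsz : s z = s z ^ (1 - γ) * s z ^ γ := by
          rw [← Real.rpow_add (s_pos z)]
          simp
          rfl
        calc s z * |V z| = s z ^ (1 - γ) * s z ^ γ * |V z| := by rw [← hsz]
          _ ≤ Real.sqrt 2 ^ (γ - 1) * s y ^ (1 - γ) * s z ^ γ * |V z| := by
              have : (0:ℝ) ≤ s z ^ γ * |V z| := by positivity
              nlinarith [Real.rpow_nonneg (Real.sqrt_nonneg (1 + z^2)) γ, abs_nonneg (V z),
                mul_le_mul_of_nonneg_right key (this)]
          _ = Real.sqrt 2 ^ (γ - 1) * s y ^ (1 - γ) * (s z ^ γ * |V z|) := by ring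
    rw [integral_const_mul] at hdom
    calc (∫ z in Set.Ioi y, s z * |V z|)
        ≤ Real.sqrt 2 ^ (γ - 1) * s y ^ (1 - γ) * ∫ z in Set.Ioi y, s z ^ γ * |V z| := hdom
      _ ≤ Real.sqrt 2 ^ (γ - 1) * s y ^ (1 - γ) * Q := by
          apply mul_le_mul_of_nonneg_left (hQset y) (by positivity)
  -- Step 2: pointwise bound for |V y| * ‖h y k‖ on Ioi x
  set κ : ℝ := (Real.sqrt (1 + k ^ 2))⁻¹ with hκ
  have hκnonneg : 0 ≤ κ := inv_nonneg.mpr (Real.sqrt_nonneg _)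
  set A : ℝ := κ * Real.sqrt 2 ^ (3 * γ - 2) * s x ^ (1 - 2 * γ) * Q with hA
  have hAnonneg : 0 ≤ A := by
    apply mul_nonneg
    apply mul_nonneg
    apply mul_nonneg hκnonneg (by positivity)
    · exact Real.rpow_nonneg (Real.sqrt_nonneg _) _
    · exact hQnonneg
  have hpt : ∀ y ∈ Set.Ioi x, |V y| * ‖h y k‖ ≤ A * (s y ^ γ * |V y|) := by
    intro y hy
    have hy1 : -1 ≤ y := le_trans hx (le_of_lt hy)
    have h1 : ‖h y k‖ ≤ κ * (Real.sqrt 2 ^ (γ - 1) * s y ^ (1 - γ) * Q) := by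
      calc ‖h y k‖ ≤ κ * ∫ z in Set.Ioi y, s z * |V z| := hbound y k hy1
        _ ≤ κ * (Real.sqrt 2 ^ (γ - 1) * s y ^ (1 - γ) * Q) :=
            mul_le_mul_of_nonneg_left (hI y hy1) hκnonneg
    have h2 : s y ^ (1 - γ) ≤ Real.sqrt 2 ^ (2 * γ - 1) * s x ^ (1 - 2 * γ) * s y ^ γ := by
      have hkey := rpow_key x y (1 - 2 * γ) hx (le_of_lt hy) (by linarith)
      have hsy : s y ^ (1 - γ) = s y ^ (1 - 2 * γ) * s y ^ γ := by
        rw [← Real.rpow_add (s_pos y)]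
        ring_nf
        rfl
      rw [hsy]
      have : Real.sqrt 2 ^ (-(1 - 2 * γ)) = Real.sqrt 2 ^ (2 * γ - 1) := by ring_nf
      rw [this] at hkey
      exact mul_le_mul_of_nonneg_right hkey (Real.rpow_nonneg (Real.sqrt_nonneg _) _)
    have h3 : ‖h y k‖ ≤ A * s y ^ γ := by
      have step : Real.sqrt 2 ^ (γ - 1) * s y ^ (1 - γ) * Q
          ≤ Real.sqrt 2 ^ (γ - 1) * (Real.sqrt 2 ^ (2 * γ - 1) * s x ^ (1 - 2 * γ) * s y ^ γ) * Q := by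
        apply mul_le_mul_of_nonneg_right _ hQnonneg
        exact mul_le_mul_of_nonneg_left h2 (by positivity)
      have hmerge : Real.sqrt 2 ^ (γ - 1) * Real.sqrt 2 ^ (2 * γ - 1)
          = Real.sqrt 2 ^ (3 * γ - 2) := by
        rw [← Real.rpow_add (by positivity : (0:ℝ) < Real.sqrt 2)]
        ring_nf
      calc ‖h y k‖ ≤ κ * (Real.sqrt 2 ^ (γ - 1) * s y ^ (1 - γ) * Q) := h1
        _ ≤ κ * (Real.sqrt 2 ^ (γ - 1) * (Real.sqrt 2 ^ (2 * γ - 1) * s x ^ (1 - 2 * γ) * s y ^ γ) * Q) :=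
            mul_le_mul_of_nonneg_left step hκnonneg
        _ = A * s y ^ γ := by rw [hA, ← hmerge]; ring
    calc |V y| * ‖h y k‖ ≤ |V y| * (A * s y ^ γ) :=
        mul_le_mul_of_nonneg_left h3 (abs_nonneg _)
      _ = A * (s y ^ γ * |V y|) := by ring
  -- Step 3: integrate
  have hmain : (∫ y in Set.Ioi x, |V y| * ‖h y k‖) ≤ A * ∫ y in Set.Ioi x, s y ^ γ * |V y| := by
    rw [← integral_const_mul]
    apply integral_mono_of_nonneg
    · exact Filter.Eventually.of_forall fun y => by positivity
    · exact (hInt.restrict).const_mul _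
    · filter_upwards [ae_restrict_mem measurableSet_Ioi] with y hy
      exact hpt y hy
  have hfinal : A * (∫ y in Set.Ioi x, s y ^ γ * |V y|) ≤ A * Q :=
    mul_le_mul_of_nonneg_left (hQset x) hAnonneg
  have hC : Real.sqrt 2 ^ (3 * γ - 2) ≤ (2:ℝ) ^ (2 * γ) := by
    have h2 : Real.sqrt 2 = (2:ℝ) ^ ((1:ℝ)/2) := Real.sqrt_eq_rpow 2
    rw [h2, ← Real.rpow_mul (by norm_num : (0:ℝ) ≤ 2)]
    apply Real.rpow_le_rpow_of_exponent_le (by norm_num)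
    linarith
  calc (∫ y in Set.Ioi x, |V y| * ‖h y k‖)
      ≤ A * Q := le_trans hmain hfinal
    _ = Real.sqrt 2 ^ (3 * γ - 2) * (Q * Q) * s x ^ (1 - 2 * γ) * κ := by rw [hA]; ring
    _ ≤ (2:ℝ) ^ (2 * γ) * (Q * Q) * s x ^ (1 - 2 * γ) * κ := by
        apply mul_le_mul_of_nonneg_right _ hκnonneg
        apply mul_le_mul_of_nonneg_right _ (Real.rpow_nonneg (Real.sqrt_nonneg _) _)
        exact mul_le_mul_of_nonneg_right hC (mul_nonneg hQnonneg hQnonneg)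
    _ = (2:ℝ) ^ (2 * γ) * Q ^ 2 * s x ^ (1 - 2 * γ) * κ := by ring
end
end

section
/- Let V : ℝ → ℝ be measurable with Q := ∫_ℝ ⟨x⟩² |V(x)| dx < ∞, and let C₀ > 0. Suppose m : ℝ × {k : |k| ≥ 1} → ℂ is continuously differentiable in k with |m(x,k)| ≤ C₀ ⟨x⟩ and |∂_k m(x,k)| ≤ C₀ ⟨x⟩² ⟨k⟩^{-1} for all x ∈ ℝ and |k| ≥ 1. Suppose T : {|k| ≥ 1} → ℂ∖{0} is differentiable with |T(k)| ≤ 1 and 1/T(k) = 1 − (2ik)^{-1} ∫_ℝ V(x) m(x,k) dx for |k| ≥ 1, and R : {|k| ≥ 1} → ℂ is differentiable with R(k) = T(k) · (2ik)^{-1} ∫_ℝ e^{−2ikx} V(x) m(x,k) dx for |k| ≥ 1. Then there is a constant C depending only on C₀ and Q such that |T′(k)| ≤ C k^{-2} and |R′(k)| ≤ C |k|^{-1} for all |k| ≥ 1. -/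
open MeasureTheory Filter Set Topology

noncomputable section

/-- Norm of `1/(2 I κ)`. -/
lemma trdb_norm_inv2Ik (a : ℝ) : ‖(1:ℂ)/(2*Complex.I*(a:ℂ))‖ = 1/(2*|a|) := by
  simp [map_mul, Complex.norm_I, Complex.norm_real, Complex.norm_two]

/-- Norm of difference of `1/(2Ia) - 1/(2Ib)`. -/
lemma trdb_norm_diff2Ik (a b : ℝ) (ha : a ≠ 0) (hb : b ≠ 0) :
    ‖(1:ℂ)/(2*Complex.I*(a:ℂ)) - 1/(2*Complex.I*(b:ℂ))‖ = |b - a| / (2 * |a| * |b|) := by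
  have ha' : (a:ℂ) ≠ 0 := Complex.ofReal_ne_zero.mpr ha
  have hb' : (b:ℂ) ≠ 0 := Complex.ofReal_ne_zero.mpr hb
  have : (1:ℂ)/(2*Complex.I*a) - 1/(2*Complex.I*b) = ((b - a : ℝ):ℂ)/(2*Complex.I*a*b) := by
    push_cast; field_simp
  rw [this, norm_div]
  simp [map_mul, Complex.norm_I, Complex.norm_real, Complex.norm_two,
    ← Complex.ofReal_sub]

lemma trdb_norm_slope (f : ℝ → ℂ) (k κ : ℝ) :
    ‖slope f k κ‖ = ‖f κ - f k‖ / |κ - k| := by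
  rw [slope_def_module, norm_smul, norm_inv, Real.norm_eq_abs, div_eq_inv_mul]

lemma trdb_norm_exp (z : ℝ) : ‖Complex.exp (Complex.I * (z:ℂ))‖ = 1 := by
  rw [Complex.norm_exp]; simp

lemma trdb_exp_deriv (x t : ℝ) :
    HasDerivAt (fun t : ℝ => Complex.exp (-(2*Complex.I*(t:ℂ)*(x:ℂ))))
      ((-(2*Complex.I*(x:ℂ))) * Complex.exp (-(2*Complex.I*(t:ℂ)*(x:ℂ)))) t := by
  have h : HasDerivAt (fun w : ℂ => Complex.exp ((-(2*Complex.I*(x:ℂ))) * w))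
      ((-(2*Complex.I*(x:ℂ))) * Complex.exp ((-(2*Complex.I*(x:ℂ))) * (t:ℂ))) (t:ℂ) := by
    simpa [mul_comm] using
      ((hasDerivAt_id ((t:ℝ):ℂ)).const_mul (-(2*Complex.I*(x:ℂ)))).cexp
  have h2 := h.comp_ofReal
  convert h2 using 2 <;> ring_nf

lemma trdb_arith0 (cq a b : ℝ) (hcq : 0 ≤ cq) (hb : 0 < b) (hab : b/2 ≤ a) :
    1/(2*a) * cq ≤ cq/b := by
  have ha : 0 < a := by linarith
  rw [div_mul_eq_mul_div, one_mul, div_le_div_iff₀ (by positivity) hb]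
  nlinarith

lemma trdb_arith1 (cq A a b : ℝ) (hcq : 0 ≤ cq) (hA : 0 ≤ A) (hb : 0 < b) (hab : b/2 ≤ a) :
    (1/(2*a)) * (2*cq/b * A) + (A / (2 * b * a)) * cq ≤ (3*cq/(b*b)) * A := by
  have ha : 0 < a := by linarith
  have h1 : (1/(2*a)) * (2*cq/b*A) + (A/(2*b*a))*cq = (3*cq*A) * (1/(2*a*b)) := by
    field_simp; ring
  have h2 : (3*cq/(b*b))*A = (3*cq*A) * (1/(b*b)) := by ring
  rw [h1, h2]
  refine mul_le_mul_of_nonneg_left ?_ (by positivity)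
  rw [div_le_div_iff₀ (by positivity) (by positivity)]
  nlinarith

lemma trdb_arith2 (cq A a b : ℝ) (hcq : 0 ≤ cq) (hA : 0 ≤ A) (hb : 1 ≤ b) (hab : b/2 ≤ a) :
    (1/(2*a)) * (3*cq * A) + (A / (2 * a * b)) * cq ≤ (4*cq/b) * A := by
  have hb0 : 0 < b := by linarith
  have ha : 0 < a := by linarith
  have h1 : (1/(2*a)) * (3*cq*A) + (A/(2*a*b))*cq = (cq*A) * ((3*b+1)/(2*a*b)) := by
    field_simp
  have h2 : (4*cq/b)*A = (cq*A) * (4/b) := by ring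
  rw [h1, h2]
  refine mul_le_mul_of_nonneg_left ?_ (by positivity)
  rw [div_le_div_iff₀ (by positivity) hb0]
  nlinarith

lemma trdb_arith3 (cq A b : ℝ) (hcq : 0 ≤ cq) (hA : 0 ≤ A) (hb : 1 ≤ b) :
    (3*cq/(b*b)) * A * (cq/b) + 1 * ((4*cq/b) * A) ≤ (3*cq^2 + 4*cq)/b * A := by
  have hb0 : 0 < b := by linarith
  have h1 : (3*cq/(b*b)) * A * (cq/b) + 1 * ((4*cq/b) * A)
      = (cq*A) * ((3*cq + 4*b*b)/(b*b*b)) := by field_simp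
  have h2 : (3*cq^2 + 4*cq)/b * A = (cq*A) * ((3*cq + 4)/b) := by
    field_simp
  rw [h1, h2]
  refine mul_le_mul_of_nonneg_left ?_ (by positivity)
  rw [div_le_div_iff₀ (by positivity) hb0]
  nlinarith [mul_nonneg hcq (by nlinarith : (0:ℝ) ≤ b*b*b - b)]

set_option maxHeartbeats 2000000 in
/-- High-frequency derivative bounds for the transmission and reflection
coefficients (Lemma 2.4). -/
theorem transmission_reflection_deriv_bounds (C₀ Q : ℝ) (hC₀ : 0 < C₀) (hQ : 0 ≤ Q) :
    ∃ C : ℝ, 0 < C ∧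
      ∀ (V : ℝ → ℝ) (m m' : ℝ → ℝ → ℂ) (T R : ℝ → ℂ),
        Measurable V →
        Integrable (fun x => Real.sqrt (1 + x ^ 2) ^ 2 * |V x|) →
        (∫ x, Real.sqrt (1 + x ^ 2) ^ 2 * |V x|) = Q →
        (∀ x k : ℝ, 1 ≤ |k| → HasDerivAt (fun κ => m x κ) (m' x k) k) →
        (∀ x k : ℝ, 1 ≤ |k| → ‖m x k‖ ≤ C₀ * Real.sqrt (1 + x ^ 2)) →
        (∀ x k : ℝ, 1 ≤ |k| →
          ‖m' x k‖ ≤ C₀ * Real.sqrt (1 + x ^ 2) ^ 2 / Real.sqrt (1 + k ^ 2)) →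
        (∀ k : ℝ, 1 ≤ |k| → T k ≠ 0) →
        (∀ k : ℝ, 1 ≤ |k| → DifferentiableAt ℝ T k) →
        (∀ k : ℝ, 1 ≤ |k| → ‖T k‖ ≤ 1) →
        (∀ k : ℝ, 1 ≤ |k| →
          1 / T k = 1 - (1 / (2 * Complex.I * (k : ℂ))) * ∫ x : ℝ, (V x : ℂ) * m x k) →
        (∀ k : ℝ, 1 ≤ |k| → DifferentiableAt ℝ R k) →
        (∀ k : ℝ, 1 ≤ |k| →
          R k = T k * ((1 / (2 * Complex.I * (k : ℂ))) *
            ∫ x : ℝ, Complex.exp (-(2 * Complex.I * (k : ℂ) * (x : ℂ))) * (V x : ℂ) * m x k)) →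
        ∀ k : ℝ, 1 ≤ |k| →
          ‖deriv T k‖ ≤ C / k ^ 2 ∧ ‖deriv R k‖ ≤ C / |k| := by
  classical
  refine ⟨3*C₀^2*Q^2 + 7*C₀*Q + 1, by positivity, ?_⟩
  intro V m m' T R hVmeas hVint hQint hm hmb hm'b hTne hTdiff hTle hTid hRdiff hRid k hk
  -- basic facts about the weight
  have hw1 : ∀ x : ℝ, 1 ≤ Real.sqrt (1 + x ^ 2) := by
    intro x
    have h := Real.sqrt_le_sqrt (show (1:ℝ) ≤ 1 + x ^ 2 by nlinarith [sq_nonneg x])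
    simpa using h
  have hwabs : ∀ x : ℝ, |x| ≤ Real.sqrt (1 + x ^ 2) := by
    intro x
    calc |x| = Real.sqrt (x ^ 2) := (Real.sqrt_sq_eq_abs x).symm
    _ ≤ _ := by apply Real.sqrt_le_sqrt; linarith
  have hwpos : ∀ x : ℝ, 0 < Real.sqrt (1 + x ^ 2) := fun x => lt_of_lt_of_le one_pos (hw1 x)
  have hk0 : k ≠ 0 := by intro h; rw [h] at hk; simp at hk; linarith
  have hkpos : (0:ℝ) < |k| := lt_of_lt_of_le one_pos hk
  have hkC : (k:ℂ) ≠ 0 := Complex.ofReal_ne_zero.mpr hk0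
  have hk2 : (0:ℝ) < k ^ 2 := by positivity
  have hk2abs : k ^ 2 = |k| * |k| := by rw [abs_mul_abs_self]; ring
  have hCQ : 0 ≤ C₀ * Q := by positivity
  -- the integrals
  set Ifun : ℝ → ℂ := fun κ => ∫ x : ℝ, (V x : ℂ) * m x κ with hIfun_def
  set Jfun : ℝ → ℂ := fun κ =>
    ∫ x : ℝ, Complex.exp (-(2 * Complex.I * (κ : ℂ) * (x : ℂ))) * (V x : ℂ) * m x κ
    with hJfun_def
  have hTid' : ∀ κ : ℝ, 1 ≤ |κ| →
      1 / T κ = 1 - (1 / (2 * Complex.I * (κ : ℂ))) * Ifun κ := by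
    intro κ hκ; simp only [hIfun_def]; exact hTid κ hκ
  have hRid' : ∀ κ : ℝ, 1 ≤ |κ| →
      R κ = T κ * ((1 / (2 * Complex.I * (κ : ℂ))) * Jfun κ) := by
    intro κ hκ; simp only [hJfun_def]; exact hRid κ hκ
  set M : Set ℝ := {κ | AEStronglyMeasurable (fun x => (V x : ℂ) * m x κ) volume} with hM_def
  -- pointwise norm bounds
  have hnormVm : ∀ κ : ℝ, 1 ≤ |κ| → ∀ x : ℝ,
      ‖(V x:ℂ) * m x κ‖ ≤ C₀ * (Real.sqrt (1 + x ^ 2) ^ 2 * |V x|) := by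
    intro κ hκ x
    rw [norm_mul, Complex.norm_real, Real.norm_eq_abs]
    calc |V x| * ‖m x κ‖ ≤ |V x| * (C₀ * Real.sqrt (1 + x ^ 2)) :=
          mul_le_mul_of_nonneg_left (hmb x κ hκ) (abs_nonneg _)
    _ ≤ C₀ * (Real.sqrt (1 + x ^ 2) ^ 2 * |V x|) := by
          nlinarith [hw1 x, abs_nonneg (V x), hwpos x,
            mul_nonneg (mul_nonneg hC₀.le (hwpos x).le) (abs_nonneg (V x))]
  have hVintC : Integrable (fun x => C₀ * (Real.sqrt (1 + x ^ 2) ^ 2 * |V x|)) :=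
    hVint.const_mul C₀
  have hIint : ∀ κ : ℝ, 1 ≤ |κ| → κ ∈ M → Integrable (fun x => (V x:ℂ) * m x κ) := by
    intro κ hκ hκM
    exact hVintC.mono' hκM (Filter.Eventually.of_forall (hnormVm κ hκ))
  have hIjunk : ∀ κ : ℝ, κ ∉ M → Ifun κ = 0 := by
    intro κ hκM
    exact integral_undef (fun hint => hκM hint.aestronglyMeasurable)
  have hintCQ : (∫ x : ℝ, C₀ * (Real.sqrt (1 + x ^ 2) ^ 2 * |V x|)) = C₀ * Q := by
    rw [integral_const_mul, hQint]
  have hInorm : ∀ κ : ℝ, 1 ≤ |κ| → ‖Ifun κ‖ ≤ C₀ * Q := by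
    intro κ hκ
    by_cases hκM : κ ∈ M
    · calc ‖Ifun κ‖ ≤ ∫ x : ℝ, C₀ * (Real.sqrt (1 + x ^ 2) ^ 2 * |V x|) :=
            norm_integral_le_of_norm_le hVintC (Filter.Eventually.of_forall (hnormVm κ hκ))
      _ = C₀ * Q := hintCQ
    · rw [hIjunk κ hκM]; simpa using hCQ
  -- J-integrand facts
  have hexpnorm : ∀ κ x : ℝ, ‖Complex.exp (-(2 * Complex.I * (κ : ℂ) * (x : ℂ)))‖ = 1 := by
    intro κ x
    rw [show -(2 * Complex.I * (κ : ℂ) * (x : ℂ)) = Complex.I * ((-(2*κ*x) : ℝ) : ℂ) by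
      push_cast; ring]
    exact trdb_norm_exp _
  have hnormJm : ∀ κ : ℝ, 1 ≤ |κ| → ∀ x : ℝ,
      ‖Complex.exp (-(2 * Complex.I * (κ : ℂ) * (x : ℂ))) * (V x:ℂ) * m x κ‖
        ≤ C₀ * (Real.sqrt (1 + x ^ 2) ^ 2 * |V x|) := by
    intro κ hκ x
    rw [norm_mul, norm_mul, hexpnorm κ x, one_mul, ← norm_mul]
    exact hnormVm κ hκ x
  have hJmeas : ∀ κ : ℝ, κ ∈ M → AEStronglyMeasurable
      (fun x : ℝ => Complex.exp (-(2 * Complex.I * (κ : ℂ) * (x : ℂ))) * (V x:ℂ) * m x κ)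
      volume := by
    intro κ hκM
    have hc : Continuous (fun x : ℝ => Complex.exp (-(2 * Complex.I * (κ : ℂ) * (x : ℂ)))) := by
      fun_prop
    have := (hc.aestronglyMeasurable).mul hκM
    simpa [mul_assoc, Pi.mul_def] using this
  have hJint : ∀ κ : ℝ, 1 ≤ |κ| → κ ∈ M → Integrable
      (fun x : ℝ => Complex.exp (-(2 * Complex.I * (κ : ℂ) * (x : ℂ))) * (V x:ℂ) * m x κ) := by
    intro κ hκ hκM
    exact hVintC.mono' (hJmeas κ hκM) (Filter.Eventually.of_forall (hnormJm κ hκ))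
  have hJjunk : ∀ κ : ℝ, κ ∉ M → Jfun κ = 0 := by
    intro κ hκM
    apply integral_undef
    intro hint
    apply hκM
    have h1 : Continuous (fun x : ℝ => Complex.exp (2 * Complex.I * (κ : ℂ) * (x : ℂ))) := by
      fun_prop
    have h2 := (h1.aestronglyMeasurable).mul hint.aestronglyMeasurable
    have h3 : (fun x : ℝ => Complex.exp (2 * Complex.I * (κ : ℂ) * (x : ℂ)) *
        (Complex.exp (-(2 * Complex.I * (κ : ℂ) * (x : ℂ))) * (V x:ℂ) * m x κ))
        = fun x : ℝ => (V x:ℂ) * m x κ := by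
      funext x
      rw [show Complex.exp (2*Complex.I*(κ:ℂ)*(x:ℂ)) *
          (Complex.exp (-(2*Complex.I*(κ:ℂ)*(x:ℂ))) * (V x:ℂ) * m x κ)
          = (Complex.exp (2*Complex.I*(κ:ℂ)*(x:ℂ)) *
             Complex.exp (-(2*Complex.I*(κ:ℂ)*(x:ℂ)))) * ((V x:ℂ) * m x κ) by ring,
        ← Complex.exp_add]
      simp
    have h2' : AEStronglyMeasurable (fun x : ℝ => Complex.exp (2*Complex.I*(κ:ℂ)*(x:ℂ)) *
        (Complex.exp (-(2*Complex.I*(κ:ℂ)*(x:ℂ))) * (V x:ℂ) * m x κ)) volume := h2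
    rw [h3] at h2'
    exact h2'
  have hJnorm : ∀ κ : ℝ, 1 ≤ |κ| → ‖Jfun κ‖ ≤ C₀ * Q := by
    intro κ hκ
    by_cases hκM : κ ∈ M
    · calc ‖Jfun κ‖ ≤ ∫ x : ℝ, C₀ * (Real.sqrt (1 + x ^ 2) ^ 2 * |V x|) :=
            norm_integral_le_of_norm_le hVintC (Filter.Eventually.of_forall (hnormJm κ hκ))
      _ = C₀ * Q := hintCQ
    · rw [hJjunk κ hκM]; simpa using hCQ
  -- core Lipschitz estimates
  have hIlip : ∀ k₁ k₂ : ℝ, (∀ t ∈ Set.uIcc k₁ k₂, 1 ≤ |t| ∧ |k|/2 ≤ |t|) →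
      k₁ ∈ M → k₂ ∈ M → ‖Ifun k₁ - Ifun k₂‖ ≤ 2*C₀*Q/|k| * |k₁ - k₂| := by
    intro k₁ k₂ huI h1M h2M
    have h1 : 1 ≤ |k₁| := (huI k₁ Set.left_mem_uIcc).1
    have h2 : 1 ≤ |k₂| := (huI k₂ Set.right_mem_uIcc).1
    have heq : Ifun k₁ - Ifun k₂ = ∫ x : ℝ, (V x:ℂ) * (m x k₁ - m x k₂) := by
      simp only [hIfun_def]
      rw [← integral_sub (hIint k₁ h1 h1M) (hIint k₂ h2 h2M)]
      congr 1; funext x; ring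
    rw [heq]
    have hpt : ∀ x : ℝ, ‖(V x:ℂ) * (m x k₁ - m x k₂)‖
        ≤ (2*C₀/|k| * |k₁ - k₂|) * (Real.sqrt (1 + x ^ 2) ^ 2 * |V x|) := by
      intro x
      have hmvt : ‖m x k₁ - m x k₂‖ ≤ (2*C₀*Real.sqrt (1 + x ^ 2) ^ 2/|k|) * ‖k₁ - k₂‖ := by
        refine Convex.norm_image_sub_le_of_norm_hasDerivWithin_le
          (f' := fun t => m' x t) (s := Set.uIcc k₁ k₂) ?_ ?_ (convex_uIcc _ _)
          Set.right_mem_uIcc Set.left_mem_uIcc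
        · intro t ht; exact (hm x t (huI t ht).1).hasDerivWithinAt
        · intro t ht
          obtain ⟨h1t, h2t⟩ := huI t ht
          have hsq : |k|/2 ≤ Real.sqrt (1 + t ^ 2) := le_trans h2t (hwabs t)
          calc ‖m' x t‖ ≤ C₀ * Real.sqrt (1 + x ^ 2) ^ 2 / Real.sqrt (1 + t ^ 2) :=
                hm'b x t h1t
          _ ≤ 2*C₀*Real.sqrt (1 + x ^ 2) ^ 2/|k| := by
                rw [div_le_div_iff₀ (hwpos t) hkpos]
                nlinarith [mul_nonneg (mul_nonneg hC₀.le
                  (sq_nonneg (Real.sqrt (1 + x ^ 2))))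
                  (by linarith : (0:ℝ) ≤ Real.sqrt (1 + t ^ 2) - |k|/2)]
      rw [norm_mul, Complex.norm_real, Real.norm_eq_abs]
      calc |V x| * ‖m x k₁ - m x k₂‖
          ≤ |V x| * ((2*C₀*Real.sqrt (1 + x ^ 2) ^ 2/|k|) * ‖k₁ - k₂‖) :=
            mul_le_mul_of_nonneg_left hmvt (abs_nonneg _)
      _ = (2*C₀/|k| * |k₁ - k₂|) * (Real.sqrt (1 + x ^ 2) ^ 2 * |V x|) := by
            rw [Real.norm_eq_abs]; ring
    calc ‖∫ x : ℝ, (V x:ℂ) * (m x k₁ - m x k₂)‖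
        ≤ ∫ x : ℝ, (2*C₀/|k| * |k₁ - k₂|) * (Real.sqrt (1 + x ^ 2) ^ 2 * |V x|) :=
          norm_integral_le_of_norm_le (hVint.const_mul _) (Filter.Eventually.of_forall hpt)
    _ = 2*C₀*Q/|k| * |k₁ - k₂| := by rw [integral_const_mul, hQint]; ring
  have hJlip : ∀ k₁ k₂ : ℝ, (∀ t ∈ Set.uIcc k₁ k₂, 1 ≤ |t| ∧ |k|/2 ≤ |t|) →
      k₁ ∈ M → k₂ ∈ M → ‖Jfun k₁ - Jfun k₂‖ ≤ 3*C₀*Q * |k₁ - k₂| := by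
    intro k₁ k₂ huI h1M h2M
    have h1 : 1 ≤ |k₁| := (huI k₁ Set.left_mem_uIcc).1
    have h2 : 1 ≤ |k₂| := (huI k₂ Set.right_mem_uIcc).1
    have heq : Jfun k₁ - Jfun k₂ = ∫ x : ℝ, (V x:ℂ) *
        (Complex.exp (-(2 * Complex.I * (k₁ : ℂ) * (x : ℂ))) * m x k₁
          - Complex.exp (-(2 * Complex.I * (k₂ : ℂ) * (x : ℂ))) * m x k₂) := by
      simp only [hJfun_def]
      rw [← integral_sub (hJint k₁ h1 h1M) (hJint k₂ h2 h2M)]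
      congr 1; funext x; ring
    rw [heq]
    have hpt : ∀ x : ℝ, ‖(V x:ℂ) *
        (Complex.exp (-(2 * Complex.I * (k₁ : ℂ) * (x : ℂ))) * m x k₁
          - Complex.exp (-(2 * Complex.I * (k₂ : ℂ) * (x : ℂ))) * m x k₂)‖
        ≤ (3*C₀ * |k₁ - k₂|) * (Real.sqrt (1 + x ^ 2) ^ 2 * |V x|) := by
      intro x
      have hmvt : ‖Complex.exp (-(2 * Complex.I * (k₁ : ℂ) * (x : ℂ))) * m x k₁
          - Complex.exp (-(2 * Complex.I * (k₂ : ℂ) * (x : ℂ))) * m x k₂‖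
          ≤ (3*C₀*Real.sqrt (1 + x ^ 2) ^ 2) * ‖k₁ - k₂‖ := by
        refine Convex.norm_image_sub_le_of_norm_hasDerivWithin_le
          (f := fun t : ℝ => Complex.exp (-(2 * Complex.I * (t : ℂ) * (x : ℂ))) * m x t)
          (f' := fun t : ℝ => ((-(2*Complex.I*(x:ℂ))) *
              Complex.exp (-(2 * Complex.I * (t : ℂ) * (x : ℂ)))) * m x t
            + Complex.exp (-(2 * Complex.I * (t : ℂ) * (x : ℂ))) * m' x t)
          (s := Set.uIcc k₁ k₂) ?_ ?_ (convex_uIcc _ _)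
          Set.right_mem_uIcc Set.left_mem_uIcc
        · intro t ht
          exact ((trdb_exp_deriv x t).mul (hm x t (huI t ht).1)).hasDerivWithinAt
        · intro t ht
          obtain ⟨h1t, h2t⟩ := huI t ht
          have e1 : ‖((-(2*Complex.I*(x:ℂ))) *
              Complex.exp (-(2 * Complex.I * (t : ℂ) * (x : ℂ)))) * m x t‖
              ≤ 2 * |x| * (C₀ * Real.sqrt (1 + x ^ 2)) := by
            rw [norm_mul, norm_mul, hexpnorm t x, mul_one]
            have hn : ‖-(2*Complex.I*(x:ℂ))‖ = 2 * |x| := by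
              simp [map_mul, Complex.norm_I, Complex.norm_real,
                Complex.norm_two]
            rw [hn]
            exact mul_le_mul_of_nonneg_left (hmb x t h1t) (by positivity)
          have e2 : ‖Complex.exp (-(2 * Complex.I * (t : ℂ) * (x : ℂ))) * m' x t‖
              ≤ C₀ * Real.sqrt (1 + x ^ 2) ^ 2 := by
            rw [norm_mul, hexpnorm t x, one_mul]
            calc ‖m' x t‖ ≤ C₀ * Real.sqrt (1 + x ^ 2) ^ 2 / Real.sqrt (1 + t ^ 2) :=
                  hm'b x t h1t
            _ ≤ C₀ * Real.sqrt (1 + x ^ 2) ^ 2 := div_le_self (by positivity) (hw1 t)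
          calc ‖_ + _‖ ≤ 2 * |x| * (C₀ * Real.sqrt (1 + x ^ 2))
                + C₀ * Real.sqrt (1 + x ^ 2) ^ 2 := norm_add_le_of_le e1 e2
          _ ≤ 3*C₀*Real.sqrt (1 + x ^ 2) ^ 2 := by
              nlinarith [mul_le_mul_of_nonneg_right (hwabs x)
                (by positivity : (0:ℝ) ≤ C₀ * Real.sqrt (1 + x ^ 2)), hwpos x, hw1 x,
                sq_nonneg (Real.sqrt (1 + x ^ 2))]
      rw [norm_mul, Complex.norm_real, Real.norm_eq_abs]
      calc |V x| * ‖_ - _‖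
          ≤ |V x| * ((3*C₀*Real.sqrt (1 + x ^ 2) ^ 2) * ‖k₁ - k₂‖) :=
            mul_le_mul_of_nonneg_left hmvt (abs_nonneg _)
      _ = (3*C₀ * |k₁ - k₂|) * (Real.sqrt (1 + x ^ 2) ^ 2 * |V x|) := by
            rw [Real.norm_eq_abs]; ring
    calc ‖∫ x : ℝ, (V x:ℂ) * _‖
        ≤ ∫ x : ℝ, (3*C₀ * |k₁ - k₂|) * (Real.sqrt (1 + x ^ 2) ^ 2 * |V x|) :=
          norm_integral_le_of_norm_le (hVint.const_mul _) (Filter.Eventually.of_forall hpt)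
    _ = 3*C₀*Q * |k₁ - k₂| := by rw [integral_const_mul, hQint]; ring
  -- the one-sided set and filter
  obtain ⟨s, hs1, hs2, hs3, hs4⟩ : ∃ s : Set ℝ, k ∈ s ∧ (∀ t ∈ s, 1 ≤ |t|) ∧
      (∀ a b : ℝ, a ∈ s → b ∈ s → Set.uIcc a b ⊆ s) ∧ (𝓝[s \ {k}] k).NeBot := by
    rcases le_abs'.mp hk with h | h
    · refine ⟨Set.Iic (-1), by simpa using h, ?_, ?_, ?_⟩
      · intro t ht
        simp only [Set.mem_Iic] at ht
        rw [abs_of_neg (by linarith : t < 0)]; linarith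
      · intro a b ha hb
        exact Set.OrdConnected.uIcc_subset Set.ordConnected_Iic ha hb
      · have hsub : Set.Iio k ⊆ Set.Iic (-1) \ {k} := by
          intro t ht
          simp only [Set.mem_Iio] at ht
          constructor
          · simp only [Set.mem_Iic]; linarith
          · simp only [Set.mem_singleton_iff]; intro hh; rw [hh] at ht; linarith
        exact Filter.NeBot.mono (nhdsLT_neBot k) (nhdsWithin_mono k hsub)
    · refine ⟨Set.Ici 1, by simpa using h, ?_, ?_, ?_⟩
      · intro t ht
        simp only [Set.mem_Ici] at ht
        rw [abs_of_pos (by linarith : (0:ℝ) < t)]; exact ht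
      · intro a b ha hb
        exact Set.OrdConnected.uIcc_subset Set.ordConnected_Ici ha hb
      · have hsub : Set.Ioi k ⊆ Set.Ici 1 \ {k} := by
          intro t ht
          simp only [Set.mem_Ioi] at ht
          constructor
          · simp only [Set.mem_Ici]; linarith
          · simp only [Set.mem_singleton_iff]; intro hh; rw [hh] at ht; linarith
        exact Filter.NeBot.mono (nhdsGT_neBot k) (nhdsWithin_mono k hsub)
  set l : Filter ℝ := 𝓝[s \ {k}] k with hl_def
  haveI hlne : l.NeBot := hs4
  have hl_ne : l ≤ 𝓝[≠] k := nhdsWithin_mono k (fun t ht => ht.2)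
  have hl_nhds : l ≤ 𝓝 k := nhdsWithin_le_nhds
  have hl_mem : ∀ᶠ κ in l, κ ∈ s ∧ κ ≠ k := by
    filter_upwards [self_mem_nhdsWithin] with κ hκ
    exact ⟨hκ.1, hκ.2⟩
  have hl_close : ∀ᶠ κ in l, |κ - k| ≤ |k|/2 := by
    have h := Metric.closedBall_mem_nhds k (show (0:ℝ) < |k|/2 by positivity)
    have h2 : ∀ᶠ κ in 𝓝 k, κ ∈ Metric.closedBall k (|k|/2) := h
    filter_upwards [hl_nhds h2] with κ hκ
    simpa [Metric.mem_closedBall, Real.dist_eq] using hκ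
  -- uIcc containment facts
  have habs : ∀ a b t : ℝ, t ∈ Set.uIcc a b → |t - k| ≤ max |a - k| |b - k| := by
    intro a b t ht
    rcases le_total a b with h | h
    · rw [Set.uIcc_of_le h] at ht
      obtain ⟨h5, h6⟩ := ht
      rw [abs_le]
      constructor
      · have g1 := neg_abs_le (a - k); have g2 := le_max_left |a - k| |b - k|; linarith
      · have g1 := le_abs_self (b - k); have g2 := le_max_right |a - k| |b - k|; linarith
    · rw [Set.uIcc_of_ge h] at ht
      obtain ⟨h5, h6⟩ := ht
      rw [abs_le]
      constructor
      · have g1 := neg_abs_le (b - k); have g2 := le_max_right |a - k| |b - k|; linarith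
      · have g1 := le_abs_self (a - k); have g2 := le_max_left |a - k| |b - k|; linarith
  have huIcc2 : ∀ k₁ k₂ : ℝ, k₁ ∈ s → k₂ ∈ s → |k₁ - k| ≤ |k|/2 → |k₂ - k| ≤ |k|/2 →
      ∀ t ∈ Set.uIcc k₁ k₂, 1 ≤ |t| ∧ |k|/2 ≤ |t| := by
    intro k₁ k₂ h1 h2 h3 h4 t ht
    refine ⟨hs2 t (hs3 k₁ k₂ h1 h2 ht), ?_⟩
    have h5 : |t - k| ≤ |k|/2 := le_trans (habs k₁ k₂ t ht) (max_le h3 h4)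
    have h6 : |k| - |t| ≤ |k - t| := abs_sub_abs_le_abs_sub k t
    rw [abs_sub_comm] at h6
    linarith
  have habs_lb : ∀ κ : ℝ, |κ - k| ≤ |k|/2 → |k|/2 ≤ |κ| := by
    intro κ hκ
    have h6 : |k| - |κ| ≤ |k - κ| := abs_sub_abs_le_abs_sub k κ
    rw [abs_sub_comm] at h6
    linarith
  have hkk : |k - k| ≤ |k|/2 := by rw [sub_self, abs_zero]; positivity
  -- continuity facts
  have hTk : T k ≠ 0 := hTne k hk
  have hTcont : ContinuousAt T k := (hTdiff k hk).continuousAt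
  have hIten : Tendsto Ifun l (𝓝 (Ifun k)) := by
    have hGI : ∀ κ : ℝ, 1 ≤ |κ| → Ifun κ = 2*Complex.I*(κ:ℂ)*(1 - (T κ)⁻¹) := by
      intro κ hκ
      have hκ0 : κ ≠ 0 := by intro h; rw [h] at hκ; simp at hκ; linarith
      have hκ' : (κ:ℂ) ≠ 0 := Complex.ofReal_ne_zero.mpr hκ0
      have h2 : (1 / (2 * Complex.I * (κ : ℂ))) * Ifun κ = 1 - 1 / T κ := by
        rw [hTid' κ hκ]; ring
      rw [← one_div (T κ), ← h2]
      have hI : Complex.I ≠ 0 := Complex.I_ne_zero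
      field_simp
    have hc : ContinuousAt (fun κ : ℝ => 2*Complex.I*(κ:ℂ)*(1 - (T κ)⁻¹)) k :=
      (continuousAt_const.mul (Complex.continuous_ofReal.continuousAt)).mul
        (continuousAt_const.sub (hTcont.inv₀ hTk))
    rw [hGI k hk]
    refine Tendsto.congr' ?_ (hc.tendsto.mono_left hl_nhds)
    filter_upwards [hl_mem] with κ hκ
    exact (hGI κ (hs2 κ hκ.1)).symm
  have hJten : Tendsto Jfun l (𝓝 (Jfun k)) := by
    have hHJ : ∀ κ : ℝ, 1 ≤ |κ| → Jfun κ = 2*Complex.I*(κ:ℂ)*(R κ / T κ) := by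
      intro κ hκ
      have hκ0 : κ ≠ 0 := by intro h; rw [h] at hκ; simp at hκ; linarith
      have hκ' : (κ:ℂ) ≠ 0 := Complex.ofReal_ne_zero.mpr hκ0
      have hI : Complex.I ≠ 0 := Complex.I_ne_zero
      have hTκ : T κ ≠ 0 := hTne κ hκ
      rw [hRid' κ hκ]
      field_simp
    have hc : ContinuousAt (fun κ : ℝ => 2*Complex.I*(κ:ℂ)*(R κ / T κ)) k :=
      (continuousAt_const.mul (Complex.continuous_ofReal.continuousAt)).mul
        ((hRdiff k hk).continuousAt.div hTcont hTk)
    rw [hHJ k hk]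
    refine Tendsto.congr' ?_ (hc.tendsto.mono_left hl_nhds)
    filter_upwards [hl_mem] with κ hκ
    exact (hHJ κ (hs2 κ hκ.1)).symm
  -- derivative setup
  have hTd : HasDerivAt T (deriv T k) k := (hTdiff k hk).hasDerivAt
  have hinvd : HasDerivAt (fun κ => (T κ)⁻¹) (-(deriv T k) / T k ^ 2) k := by
    have h1 := HasDerivAt.comp (𝕜 := ℝ) (𝕜' := ℂ) k (hasDerivAt_inv hTk) hTd
    refine h1.congr_deriv ?_
    rw [div_eq_mul_inv]
    ring
  have hRd : HasDerivAt R (deriv R k) k := (hRdiff k hk).hasDerivAt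
  have hslopeinv : Tendsto (slope (fun κ => (T κ)⁻¹) k) l (𝓝 (-(deriv T k) / T k ^ 2)) :=
    (hasDerivAt_iff_tendsto_slope.mp hinvd).mono_left hl_ne
  have hslopeR : Tendsto (slope R k) l (𝓝 (deriv R k)) :=
    (hasDerivAt_iff_tendsto_slope.mp hRd).mono_left hl_ne
  have hderivTle : ‖deriv T k‖ ≤ ‖-(deriv T k) / T k ^ 2‖ := by
    rw [norm_div, norm_neg, le_div_iff₀ (norm_pos_iff.mpr (pow_ne_zero 2 hTk))]
    have h2 : ‖T k ^ 2‖ ≤ 1 := by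
      rw [norm_pow]; exact pow_le_one₀ (norm_nonneg _) (hTle k hk)
    nlinarith [norm_nonneg (deriv T k), norm_nonneg (T k ^ 2)]
  by_cases hA : ∀ᶠ κ in l, κ ∈ M
  · -- eventually-measurable case
    have hIlipk : ∀ κ : ℝ, κ ∈ s → κ ∈ M → |κ - k| ≤ |k|/2 →
        ‖Ifun κ - Ifun k‖ ≤ 2*C₀*Q/|k| * |κ - k| := by
      intro κ hκs hκM hκc
      by_cases hkM : k ∈ M
      · exact hIlip κ k (huIcc2 κ k hκs hs1 hκc hkk) hκM hkM
      · have hIk0 : Ifun k = 0 := hIjunk k hkM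
        rw [hIk0, sub_zero]
        have hev2 : ∀ᶠ κ' in l, ‖Ifun κ‖ ≤ 2*C₀*Q/|k| * |κ - κ'| + ‖Ifun κ'‖ := by
          filter_upwards [hA, hl_mem, hl_close] with κ' h1 h2 h3
          have hlip := hIlip κ κ' (huIcc2 κ κ' hκs h2.1 hκc h3) hκM h1
          have htri : ‖Ifun κ‖ ≤ ‖Ifun κ - Ifun κ'‖ + ‖Ifun κ'‖ := by
            have := norm_add_le (Ifun κ - Ifun κ') (Ifun κ')
            simpa using this
          linarith
        have htend : Tendsto (fun κ' => 2*C₀*Q/|k| * |κ - κ'| + ‖Ifun κ'‖) l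
            (𝓝 (2*C₀*Q/|k| * |κ - k| + ‖Ifun k‖)) := by
          refine Tendsto.add (Tendsto.const_mul _ ?_) hIten.norm
          exact ((continuous_const.sub continuous_id).abs.continuousAt.tendsto).mono_left hl_nhds
        have hfin := ge_of_tendsto htend hev2
        rw [hIk0] at hfin
        simpa using hfin
    have hJlipk : ∀ κ : ℝ, κ ∈ s → κ ∈ M → |κ - k| ≤ |k|/2 →
        ‖Jfun κ - Jfun k‖ ≤ 3*C₀*Q * |κ - k| := by
      intro κ hκs hκM hκc
      by_cases hkM : k ∈ M
      · exact hJlip κ k (huIcc2 κ k hκs hs1 hκc hkk) hκM hkM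
      · have hJk0 : Jfun k = 0 := hJjunk k hkM
        rw [hJk0, sub_zero]
        have hev2 : ∀ᶠ κ' in l, ‖Jfun κ‖ ≤ 3*C₀*Q * |κ - κ'| + ‖Jfun κ'‖ := by
          filter_upwards [hA, hl_mem, hl_close] with κ' h1 h2 h3
          have hlip := hJlip κ κ' (huIcc2 κ κ' hκs h2.1 hκc h3) hκM h1
          have htri : ‖Jfun κ‖ ≤ ‖Jfun κ - Jfun κ'‖ + ‖Jfun κ'‖ := by
            have := norm_add_le (Jfun κ - Jfun κ') (Jfun κ')
            simpa using this
          linarith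
        have htend : Tendsto (fun κ' => 3*C₀*Q * |κ - κ'| + ‖Jfun κ'‖) l
            (𝓝 (3*C₀*Q * |κ - k| + ‖Jfun k‖)) := by
          refine Tendsto.add (Tendsto.const_mul _ ?_) hJten.norm
          exact ((continuous_const.sub continuous_id).abs.continuousAt.tendsto).mono_left hl_nhds
        have hfin := ge_of_tendsto htend hev2
        rw [hJk0] at hfin
        simpa using hfin
    -- difference bound for 1/T
    have hinvdiff : ∀ κ : ℝ, κ ∈ s → κ ∈ M → |κ - k| ≤ |k|/2 →
        ‖(T κ)⁻¹ - (T k)⁻¹‖ ≤ (3*C₀*Q/k^2) * |κ - k| := by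
      intro κ hκs hκM hκc
      have hκ1 : 1 ≤ |κ| := hs2 κ hκs
      have hκ0 : κ ≠ 0 := by intro h; rw [h] at hκ1; simp at hκ1; linarith
      have hκabs : |k|/2 ≤ |κ| := habs_lb κ hκc
      have hκpos : (0:ℝ) < |κ| := by linarith
      have hd : (T κ)⁻¹ - (T k)⁻¹
          = (1/(2*Complex.I*(k:ℂ))) * Ifun k - (1/(2*Complex.I*(κ:ℂ))) * Ifun κ := by
        rw [← one_div (T κ), ← one_div (T k), hTid' κ hκ1, hTid' k hk]; ring
      rw [hd]
      have heq2 : (1/(2*Complex.I*(k:ℂ))) * Ifun k - (1/(2*Complex.I*(κ:ℂ))) * Ifun κ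
          = (1/(2*Complex.I*(κ:ℂ))) * (Ifun k - Ifun κ)
            + ((1/(2*Complex.I*(k:ℂ))) - (1/(2*Complex.I*(κ:ℂ)))) * Ifun k := by ring
      rw [heq2]
      have hterm1 : ‖(1/(2*Complex.I*(κ:ℂ))) * (Ifun k - Ifun κ)‖
          ≤ (1/(2*|κ|)) * (2*C₀*Q/|k| * |κ - k|) := by
        rw [norm_mul, trdb_norm_inv2Ik]
        refine mul_le_mul_of_nonneg_left ?_ (by positivity)
        rw [norm_sub_rev]
        exact hIlipk κ hκs hκM hκc
      have hterm2 : ‖((1/(2*Complex.I*(k:ℂ))) - (1/(2*Complex.I*(κ:ℂ)))) * Ifun k‖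
          ≤ (|κ - k| / (2 * |k| * |κ|)) * (C₀ * Q) := by
        rw [norm_mul, trdb_norm_diff2Ik k κ hk0 hκ0]
        exact mul_le_mul (le_refl _) (hInorm k hk) (norm_nonneg _) (by positivity)
      calc ‖_ + _‖ ≤ (1/(2*|κ|)) * (2*C₀*Q/|k| * |κ - k|)
            + (|κ - k| / (2 * |k| * |κ|)) * (C₀ * Q) := norm_add_le_of_le hterm1 hterm2
      _ = (1/(2*|κ|)) * (2*(C₀*Q)/|k| * |κ - k|)
            + (|κ - k| / (2 * |k| * |κ|)) * (C₀*Q) := by ring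
      _ ≤ (3*(C₀*Q)/(|k| * |k|)) * |κ - k| :=
          trdb_arith1 (C₀*Q) |κ - k| |κ| |k| hCQ (abs_nonneg _) hkpos hκabs
      _ = (3*C₀*Q/k^2) * |κ - k| := by rw [hk2abs]; ring
    constructor
    · -- transmission bound
      have hslopeTbound : ∀ᶠ κ in l, ‖slope (fun κ => (T κ)⁻¹) k κ‖ ≤ 3*C₀*Q/k^2 := by
        filter_upwards [hA, hl_mem, hl_close] with κ hκM hκmem hκc
        obtain ⟨hκs, hκne⟩ := hκmem
        rw [trdb_norm_slope, div_le_iff₀ (abs_pos.mpr (sub_ne_zero.mpr hκne))]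
        exact hinvdiff κ hκs hκM hκc
      have hdInorm : ‖-(deriv T k) / T k ^ 2‖ ≤ 3*C₀*Q/k^2 :=
        le_of_tendsto hslopeinv.norm hslopeTbound
      refine le_trans (le_trans hderivTle hdInorm) ?_
      have hCC : 3*C₀*Q ≤ 3*C₀^2*Q^2 + 7*C₀*Q + 1 := by nlinarith [sq_nonneg (C₀*Q), hCQ]
      exact div_le_div_of_nonneg_right hCC hk2.le |>.trans (le_refl _)
    · -- reflection bound
      have hslopeRbound : ∀ᶠ κ in l,
          ‖slope R k κ‖ ≤ (3*C₀^2*Q^2 + 4*C₀*Q)/|k| := by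
        filter_upwards [hA, hl_mem, hl_close] with κ hκM hκmem hκc
        obtain ⟨hκs, hκne⟩ := hκmem
        have hκ1 : 1 ≤ |κ| := hs2 κ hκs
        have hκ0 : κ ≠ 0 := by intro h; rw [h] at hκ1; simp at hκ1; linarith
        have hκabs : |k|/2 ≤ |κ| := habs_lb κ hκc
        have hκpos : (0:ℝ) < |κ| := by linarith
        have hTκ : T κ ≠ 0 := hTne κ hκ1
        rw [trdb_norm_slope, div_le_iff₀ (abs_pos.mpr (sub_ne_zero.mpr hκne))]
        have hsplit : R κ - R k
            = (T κ - T k) * ((1/(2*Complex.I*(κ:ℂ))) * Jfun κ)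
              + T k * ((1/(2*Complex.I*(κ:ℂ))) * Jfun κ - (1/(2*Complex.I*(k:ℂ))) * Jfun k) := by
          rw [hRid' κ hκ1, hRid' k hk]; ring
        rw [hsplit]
        have hTdiffb : ‖T κ - T k‖ ≤ (3*C₀*Q/k^2) * |κ - k| := by
          have hfact : T κ - T k = T κ * T k * ((T k)⁻¹ - (T κ)⁻¹) := by
            field_simp
          rw [hfact, norm_mul, norm_mul, norm_sub_rev]
          calc ‖T κ‖ * ‖T k‖ * ‖(T κ)⁻¹ - (T k)⁻¹‖ ≤ 1 * 1 * ((3*C₀*Q/k^2) * |κ - k|) := by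
                refine mul_le_mul (mul_le_mul (hTle κ hκ1) (hTle k hk)
                  (norm_nonneg _) zero_le_one) (hinvdiff κ hκs hκM hκc) (norm_nonneg _)
                  (by norm_num)
          _ = (3*C₀*Q/k^2) * |κ - k| := by ring
        have hvκ : ‖(1/(2*Complex.I*(κ:ℂ))) * Jfun κ‖ ≤ C₀*Q/|k| := by
          rw [norm_mul, trdb_norm_inv2Ik]
          calc (1/(2*|κ|)) * ‖Jfun κ‖ ≤ (1/(2*|κ|)) * (C₀*Q) :=
                mul_le_mul_of_nonneg_left (hJnorm κ hκ1) (by positivity)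
          _ = 1/(2*|κ|) * (C₀*Q) := by ring
          _ ≤ C₀*Q/|k| := by
              have h := trdb_arith0 (C₀*Q) |κ| |k| hCQ hkpos hκabs
              calc 1/(2*|κ|) * (C₀*Q) ≤ (C₀*Q)/|k| := h
              _ = C₀*Q/|k| := by ring
        have hvdiff : ‖(1/(2*Complex.I*(κ:ℂ))) * Jfun κ - (1/(2*Complex.I*(k:ℂ))) * Jfun k‖
            ≤ (4*C₀*Q/|k|) * |κ - k| := by
          have heq2 : (1/(2*Complex.I*(κ:ℂ))) * Jfun κ - (1/(2*Complex.I*(k:ℂ))) * Jfun k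
              = (1/(2*Complex.I*(κ:ℂ))) * (Jfun κ - Jfun k)
                + ((1/(2*Complex.I*(κ:ℂ))) - (1/(2*Complex.I*(k:ℂ)))) * Jfun k := by ring
          rw [heq2]
          have ht1 : ‖(1/(2*Complex.I*(κ:ℂ))) * (Jfun κ - Jfun k)‖
              ≤ (1/(2*|κ|)) * (3*C₀*Q * |κ - k|) := by
            rw [norm_mul, trdb_norm_inv2Ik]
            exact mul_le_mul_of_nonneg_left (hJlipk κ hκs hκM hκc) (by positivity)
          have ht2 : ‖((1/(2*Complex.I*(κ:ℂ))) - (1/(2*Complex.I*(k:ℂ)))) * Jfun k‖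
              ≤ (|κ - k| / (2 * |κ| * |k|)) * (C₀ * Q) := by
            rw [norm_mul, trdb_norm_diff2Ik κ k hκ0 hk0, abs_sub_comm]
            exact mul_le_mul (le_refl _) (hJnorm k hk) (norm_nonneg _) (by positivity)
          calc ‖_ + _‖ ≤ (1/(2*|κ|)) * (3*C₀*Q * |κ - k|)
                + (|κ - k| / (2 * |κ| * |k|)) * (C₀ * Q) := norm_add_le_of_le ht1 ht2
          _ = (1/(2*|κ|)) * (3*(C₀*Q) * |κ - k|)
                + (|κ - k| / (2 * |κ| * |k|)) * (C₀*Q) := by ring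
          _ ≤ (4*(C₀*Q)/|k|) * |κ - k| :=
              trdb_arith2 (C₀*Q) |κ - k| |κ| |k| hCQ (abs_nonneg _) hk hκabs
          _ = (4*C₀*Q/|k|) * |κ - k| := by ring
        calc ‖_ + _‖
            ≤ (3*C₀*Q/k^2) * |κ - k| * (C₀*Q/|k|) + 1 * ((4*C₀*Q/|k|) * |κ - k|) := by
              refine norm_add_le_of_le ?_ ?_
              · rw [norm_mul]
                exact mul_le_mul hTdiffb hvκ (norm_nonneg _) (by positivity)
              · rw [norm_mul]
                exact mul_le_mul (hTle k hk) hvdiff (norm_nonneg _) zero_le_one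
        _ = (3*(C₀*Q)/(|k| * |k|)) * |κ - k| * ((C₀*Q)/|k|)
              + 1 * ((4*(C₀*Q)/|k|) * |κ - k|) := by rw [hk2abs]; ring
        _ ≤ (3*(C₀*Q)^2 + 4*(C₀*Q))/|k| * |κ - k| :=
            trdb_arith3 (C₀*Q) |κ - k| |k| hCQ (abs_nonneg _) hk
        _ = (3*C₀^2*Q^2 + 4*C₀*Q)/|k| * |κ - k| := by ring
      have hdRnorm : ‖deriv R k‖ ≤ (3*C₀^2*Q^2 + 4*C₀*Q)/|k| :=
        le_of_tendsto hslopeR.norm hslopeRbound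
      refine le_trans hdRnorm ?_
      have hCC : 3*C₀^2*Q^2 + 4*C₀*Q ≤ 3*C₀^2*Q^2 + 7*C₀*Q + 1 := by nlinarith [hCQ]
      exact div_le_div_of_nonneg_right hCC hkpos.le |>.trans (le_refl _)
  · -- frequently non-measurable case: everything vanishes
    have hfreq : ∃ᶠ κ in l, κ ∉ M := Filter.not_eventually.mp hA
    set l' : Filter ℝ := l ⊓ 𝓟 {κ | κ ∉ M} with hl'_def
    haveI hl'ne : l'.NeBot := Filter.frequently_iff_neBot.mp hfreq
    have hl'l : l' ≤ l := inf_le_left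
    have hev' : ∀ᶠ κ in l', κ ∉ M :=
      eventually_inf_principal.mpr (Filter.Eventually.of_forall fun x hx => hx)
    have hevs : ∀ᶠ κ in l', κ ∈ s ∧ κ ≠ k := hl'l hl_mem
    have hinv1 : ∀ᶠ κ in l', (T κ)⁻¹ = 1 := by
      filter_upwards [hev', hevs] with κ h1 h2
      rw [← one_div, hTid' κ (hs2 κ h2.1), hIjunk κ h1, mul_zero, sub_zero]
    have hR0 : ∀ᶠ κ in l', R κ = 0 := by
      filter_upwards [hev', hevs] with κ h1 h2
      rw [hRid' κ (hs2 κ h2.1), hJjunk κ h1, mul_zero, mul_zero]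
    have hTk1 : (T k)⁻¹ = 1 := by
      have ht1 : Tendsto (fun κ => (T κ)⁻¹) l' (𝓝 ((T k)⁻¹)) :=
        ((hTcont.inv₀ hTk).tendsto).mono_left (le_trans hl'l hl_nhds)
      have ht2 : Tendsto (fun κ => (T κ)⁻¹) l' (𝓝 1) :=
        (tendsto_congr' hinv1).mpr tendsto_const_nhds
      exact tendsto_nhds_unique ht1 ht2
    have hRk0 : R k = 0 := by
      have ht1 : Tendsto R l' (𝓝 (R k)) :=
        ((hRdiff k hk).continuousAt.tendsto).mono_left (le_trans hl'l hl_nhds)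
      have ht2 : Tendsto R l' (𝓝 0) := (tendsto_congr' hR0).mpr tendsto_const_nhds
      exact tendsto_nhds_unique ht1 ht2
    have hslopeinv0 : ∀ᶠ κ in l', slope (fun κ => (T κ)⁻¹) k κ = 0 := by
      filter_upwards [hinv1] with κ h1
      rw [slope_def_module, h1, hTk1]
      simp
    have hdI0 : -(deriv T k)/T k^2 = 0 :=
      tendsto_nhds_unique (hslopeinv.mono_left hl'l)
        ((tendsto_congr' hslopeinv0).mpr tendsto_const_nhds)
    have hdT0 : deriv T k = 0 := by
      rw [div_eq_zero_iff] at hdI0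
      rcases hdI0 with h | h
      · exact neg_eq_zero.mp h
      · exact absurd h (pow_ne_zero 2 hTk)
    have hslopeR0 : ∀ᶠ κ in l', slope R k κ = 0 := by
      filter_upwards [hR0] with κ h1
      rw [slope_def_module, h1, hRk0]
      simp
    have hdR0 : deriv R k = 0 :=
      tendsto_nhds_unique (hslopeR.mono_left hl'l)
        ((tendsto_congr' hslopeR0).mpr tendsto_const_nhds)
    constructor
    · rw [hdT0, norm_zero]; positivity
    · rw [hdR0, norm_zero]; positivity
end
end

section
/- Let χ : ℝ → [0,1] be Lipschitz with Lipschitz constant L, with χ(z) = 1 for |z| ≤ 1 and χ(z) = 0 for |z| ≥ 2. Let t ≥ 1 and let f : ℝ → ℂ be absolutely continuous with f, f′ ∈ L²(ℝ) and f(0) = 0. Then the function k ↦ (1 − χ(t^{1/2} k)) f(k) is absolutely continuous and ‖ d/dk [ (1 − χ(t^{1/2} k)) f(k) ] ‖_{L²(ℝ)} ≤ C ‖f′‖_{L²(ℝ)}, where C depends only on L and is independent of t and f. -/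
open MeasureTheory

noncomputable section

open Set ENNReal
open scoped Interval

/-- A Lipschitz function on ℝ has an a.e.-bounded measurable density. -/
lemma lipschitz_density (K : NNReal) (χ : ℝ → ℝ) (hχ : LipschitzWith K χ) :
    ∃ g : ℝ → ℝ, Measurable g ∧ (∀ s, |g s| ≤ K) ∧
      ∀ p q : ℝ, χ q = χ p + ∫ s in p..q, g s := by
  set k : ℝ := (K : ℝ) with hk
  have hk0 : 0 ≤ k := K.2
  have hdist : ∀ a b : ℝ, a ≤ b → |χ b - χ a| ≤ k * (b - a) := by
    intro a b hab
    have h := hχ.dist_le_mul b a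
    rw [Real.dist_eq, Real.dist_eq] at h
    rwa [abs_of_nonneg (sub_nonneg.2 hab)] at h
  have hmono : ∀ a b : ℝ, a ≤ b → χ a + k * a ≤ χ b + k * b := by
    intro a b hab
    have h1 := abs_le.1 (hdist a b hab)
    linarith [h1.1]
  have hmono' : ∀ a b : ℝ, a ≤ b → k * a - χ a ≤ k * b - χ b := by
    intro a b hab
    have h1 := abs_le.1 (hdist a b hab)
    linarith [h1.2]
  set F : StieltjesFunction ℝ :=
    { toFun := fun x => χ x + k * x
      mono' := fun a b hab => hmono a b hab
      right_continuous' := fun x =>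
        ((hχ.continuous.add (continuous_const.mul continuous_id)).continuousAt).continuousWithinAt }
    with hF
  set G : StieltjesFunction ℝ :=
    { toFun := fun x => k * x - χ x
      mono' := fun a b hab => hmono' a b hab
      right_continuous' := fun x =>
        (((continuous_const.mul continuous_id).sub hχ.continuous).continuousAt).continuousWithinAt }
    with hG
  set K2 : NNReal := 2 * K with hK2
  have hsum : F + G = K2 • StieltjesFunction.id := by
    apply StieltjesFunction.ext
    intro x
    show (χ x + k * x) + (k * x - χ x) = K2 • (x : ℝ)
    rw [NNReal.smul_def, smul_eq_mul, hK2]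
    push_cast
    ring
  set μ := F.measure with hμ
  have hle : μ ≤ (K2 : ℝ≥0∞) • (volume : Measure ℝ) := by
    intro s
    calc μ s ≤ μ s + G.measure s := le_add_of_nonneg_right (by simp)
      _ = (F.measure + G.measure) s := rfl
      _ = (K2 • StieltjesFunction.id).measure s := by
          rw [← StieltjesFunction.measure_add, hsum]
      _ = (K2 • StieltjesFunction.id.measure) s := by
          rw [StieltjesFunction.measure_smul]
      _ = ((K2 : ℝ≥0∞) • (volume : Measure ℝ)) s := by
          rw [← Real.volume_eq_stieltjes_id]; rfl
  have hac : μ ≪ (volume : Measure ℝ) := Measure.absolutelyContinuous_of_le_smul hle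
  set ρ : ℝ → ℝ≥0∞ := μ.rnDeriv volume with hρdef
  have hρ_meas : Measurable ρ := Measure.measurable_rnDeriv _ _
  have hρ_le : ∀ᵐ s ∂(volume : Measure ℝ), ρ s ≤ (K2 : ℝ≥0∞) := by
    refine ae_le_of_forall_setLIntegral_le_of_sigmaFinite hρ_meas ?_
    intro s hs _
    rw [Measure.setLIntegral_rnDeriv hac s]
    calc μ s ≤ ((K2 : ℝ≥0∞) • (volume : Measure ℝ)) s := hle s
      _ = ∫⁻ _ in s, (K2 : ℝ≥0∞) ∂volume := by rw [setLIntegral_const]; rfl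
  -- FTC over Ioc
  have hwd : (volume : Measure ℝ).withDensity ρ = μ := Measure.withDensity_rnDeriv_eq μ _ hac
  have hFTC : ∀ p q : ℝ, p ≤ q →
      F q - F p = ∫ s in Ioc p q, (ρ s).toReal := by
    intro p q hpq
    have h1 : μ (Ioc p q) = ENNReal.ofReal (F q - F p) := F.measure_Ioc p q
    have h2 : μ (Ioc p q) = ∫⁻ s in Ioc p q, ρ s ∂volume := by
      rw [← hwd, withDensity_apply _ measurableSet_Ioc]
    have hfin : ∀ᵐ s ∂(volume.restrict (Ioc p q)), ρ s < ⊤ := by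
      filter_upwards [ae_restrict_of_ae hρ_le] with s hs
      exact lt_of_le_of_lt hs (by simp)
    have h3 : ∫ s in Ioc p q, (ρ s).toReal = (∫⁻ s in Ioc p q, ρ s ∂volume).toReal :=
      integral_toReal (hρ_meas.aemeasurable.restrict) hfin
    rw [h3, ← h2, h1, ENNReal.toReal_ofReal]
    have := hmono p q hpq
    have hq : F q = χ q + k * q := rfl
    have hp : F p = χ p + k * p := rfl
    rw [hq, hp]
    linarith
  -- integrability of toReal ∘ ρ on Ioc
  have hint : ∀ p q : ℝ, IntegrableOn (fun s => (ρ s).toReal) (Ioc p q) volume := by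
    intro p q
    refine integrable_toReal_of_lintegral_ne_top hρ_meas.aemeasurable.restrict ?_
    have h2 : ∫⁻ s in Ioc p q, ρ s ∂volume = μ (Ioc p q) := by
      rw [← hwd, withDensity_apply _ measurableSet_Ioc]
    rw [h2, F.measure_Ioc]
    exact ENNReal.ofReal_ne_top
  set g0 : ℝ → ℝ := fun s => (ρ s).toReal - k with hg0def
  have hg0_meas : Measurable g0 := (hρ_meas.ennreal_toReal).sub measurable_const
  have hg0_ae : ∀ᵐ s ∂(volume : Measure ℝ), |g0 s| ≤ k := by
    filter_upwards [hρ_le] with s hs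
    have h0 : 0 ≤ (ρ s).toReal := ENNReal.toReal_nonneg
    have h1 : (ρ s).toReal ≤ 2 * k := by
      have := ENNReal.toReal_mono (by simp) hs
      simpa [hK2] using this
    rw [hg0def, abs_le]; constructor <;> simp only <;> linarith
  set A : Set ℝ := {s | |g0 s| ≤ k} with hA
  have hAmeas : MeasurableSet A := measurableSet_le hg0_meas.abs measurable_const
  have hg_ae : g0 =ᵐ[(volume : Measure ℝ)] A.indicator g0 := by
    filter_upwards [hg0_ae] with s hs
    rw [Set.indicator_of_mem (by exact hs : s ∈ A)]
  refine ⟨A.indicator g0, hg0_meas.indicator hAmeas, ?_, ?_⟩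
  · intro s
    by_cases h : s ∈ A
    · rw [Set.indicator_of_mem h]; exact h
    · rw [Set.indicator_of_notMem h]; simpa using hk0
  · have hcongr : ∀ p q : ℝ, ∫ s in p..q, A.indicator g0 s = ∫ s in p..q, g0 s := by
      intro p q
      refine intervalIntegral.integral_congr_ae ?_
      filter_upwards [hg_ae] with s hs
      intro _
      exact hs.symm
    have key : ∀ p q : ℝ, p ≤ q → χ q = χ p + ∫ s in p..q, g0 s := by
      intro p q hpq
      rw [intervalIntegral.integral_of_le hpq]
      rw [integral_sub (hint p q) (integrableOn_const (by simp))]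
      rw [← hFTC p q hpq]
      rw [setIntegral_const]
      simp only [Real.volume_Ioc, smul_eq_mul]
      rw [Real.volume_real_Ioc_of_le hpq]
      show χ q = χ p + ((χ q + k * q - (χ p + k * p)) - (q - p) * k)
      ring
    intro p q
    rw [hcongr p q]
    rcases le_total p q with h | h
    · exact key p q h
    · have h2 := key q p h
      rw [intervalIntegral.integral_symm]
      linarith [h2]

/-- Integration by parts for indefinite integrals, via Fubini. -/
lemma parts_aux (p q : ℝ) (hpq : p ≤ q) (a b : ℝ → ℂ)
    (ha : IntegrableOn a (Ioc p q) volume) (hb : IntegrableOn b (Ioc p q) volume) :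
    ∫ s in Ioc p q, ((∫ u in Ioc p s, a u) * b s + a s * (∫ u in Ioc p s, b u))
      = (∫ u in Ioc p q, a u) * (∫ u in Ioc p q, b u) := by
  set ν : Measure ℝ := volume.restrict (Ioc p q) with hν
  have hSF : SFinite ν := inferInstance
  -- the lower-triangle set
  set D : Set (ℝ × ℝ) := {z : ℝ × ℝ | z.2 ≤ z.1} with hD
  have hDmeas : MeasurableSet D := measurableSet_le measurable_snd measurable_fst
  -- rewriting inner integrals
  have key : ∀ (α β : ℝ → ℂ), IntegrableOn α (Ioc p q) volume → IntegrableOn β (Ioc p q) volume →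
      (∫ s in Ioc p q, (∫ u in Ioc p s, α u) * β s
        = ∫ z, D.indicator (fun z : ℝ × ℝ => α z.2 * β z.1) z ∂(ν.prod ν))
      ∧ Integrable (fun s => (∫ u in Ioc p s, α u) * β s) ν := by
    intro α β hα hβ
    have hint : Integrable (Function.uncurry fun s u =>
        D.indicator (fun z : ℝ × ℝ => α z.2 * β z.1) (s, u)) (ν.prod ν) := by
      have h1 : Integrable (fun z : ℝ × ℝ => β z.1 * α z.2) (ν.prod ν) :=
        Integrable.mul_prod hβ hα
      have h2 : Integrable (fun z : ℝ × ℝ => α z.2 * β z.1) (ν.prod ν) := by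
        simpa [mul_comm] using h1
      exact h2.indicator hDmeas
    have h3 : ∀ s, s ∈ Ioc p q →
        (∫ u in Ioc p s, α u) * β s
          = ∫ u, D.indicator (fun z : ℝ × ℝ => α z.2 * β z.1) (s, u) ∂ν := by
      intro s hs
      have h4 : ∀ u : ℝ, D.indicator (fun z : ℝ × ℝ => α z.2 * β z.1) (s, u)
          = (Iic s).indicator α u * β s := by
        intro u
        by_cases h : u ≤ s
        · rw [indicator_of_mem (by exact h : (s,u) ∈ D), indicator_of_mem (by exact h)]
        · rw [indicator_of_notMem (by exact h : ¬ (s,u) ∈ D), indicator_of_notMem (by exact h),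
            zero_mul]
      simp_rw [h4]
      rw [integral_mul_const, hν, setIntegral_indicator measurableSet_Iic]
      congr 2
      rw [Ioc_inter_Iic, min_eq_right hs.2]
    have h3' : (fun s => (∫ u in Ioc p s, α u) * β s)
        =ᵐ[ν] (fun s => ∫ u, D.indicator (fun z : ℝ × ℝ => α z.2 * β z.1) (s, u) ∂ν) := by
      rw [hν]
      exact (ae_restrict_iff' measurableSet_Ioc).2 (Filter.Eventually.of_forall h3)
    constructor
    · calc ∫ s, (∫ u in Ioc p s, α u) * β s ∂ν
          = ∫ s, ∫ u, D.indicator (fun z : ℝ × ℝ => α z.2 * β z.1) (s, u) ∂ν ∂ν :=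
            integral_congr_ae h3'
        _ = ∫ z, D.indicator (fun z : ℝ × ℝ => α z.2 * β z.1) z ∂(ν.prod ν) := by
            have := integral_integral (μ := ν) (ν := ν) hint
            simpa using this
    · exact (hint.integral_prod_left).congr h3'.symm
  obtain ⟨T1, I1⟩ := key a b ha hb
  obtain ⟨T2, I2⟩ := key b a hb ha
  -- swap coordinates on T2
  have T2' : ∫ s in Ioc p q, (∫ u in Ioc p s, b u) * a s
      = ∫ z, (Prod.swap ⁻¹' D).indicator (fun z : ℝ × ℝ => a z.2 * b z.1) z ∂(ν.prod ν) := by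
    rw [T2, ← integral_prod_swap (μ := ν) (ν := ν)
      (f := (Prod.swap ⁻¹' D).indicator (fun z : ℝ × ℝ => a z.2 * b z.1))]
    congr 1
    funext z
    simp only [indicator, Prod.swap, mem_preimage, mem_setOf_eq]
    by_cases h : z.1 ≤ z.2 <;> simp [hD, h, mul_comm]
  -- diagonal is null
  have hdiag : ∀ᵐ z ∂(ν.prod ν), z.1 ≠ z.2 := by
    have hsing : ∀ s : ℝ, ν {u : ℝ | s = u} = 0 := by
      intro s
      have hsub : {u : ℝ | s = u} ⊆ {s} := by intro u hu; simp at hu ⊢; exact hu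
      refine measure_mono_null hsub ?_
      rw [hν, Measure.restrict_apply (measurableSet_singleton s)]
      exact measure_mono_null inter_subset_left Real.volume_singleton
    have hnull : (ν.prod ν) {z : ℝ × ℝ | z.1 = z.2} = 0 := by
      rw [Measure.prod_apply (measurableSet_eq_fun measurable_fst measurable_snd)]
      simp only [preimage_setOf_eq]
      simp [hsing]
    rw [ae_iff]
    simpa using hnull
  -- combine
  have hh : Integrable (fun z : ℝ × ℝ => a z.2 * b z.1) (ν.prod ν) := by
    simpa [mul_comm] using Integrable.mul_prod hb ha
  have hcomb : ∫ z, D.indicator (fun z : ℝ × ℝ => a z.2 * b z.1) z ∂(ν.prod ν)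
      + ∫ z, (Prod.swap ⁻¹' D).indicator (fun z : ℝ × ℝ => a z.2 * b z.1) z ∂(ν.prod ν)
      = ∫ z, a z.2 * b z.1 ∂(ν.prod ν) := by
    rw [← integral_add (hh.indicator hDmeas)
      (hh.indicator (hDmeas.preimage measurable_swap))]
    refine integral_congr_ae ?_
    filter_upwards [hdiag] with z hz
    rcases le_or_gt z.2 z.1 with h | h
    · have h1 : z ∈ D := h
      have h2 : z ∉ Prod.swap ⁻¹' D := by
        simp only [mem_preimage, hD, mem_setOf_eq, Prod.snd_swap, Prod.fst_swap]
        intro hle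
        exact hz (le_antisymm hle h)
      simp [indicator_of_mem h1, indicator_of_notMem h2]
    · have h1 : z ∉ D := by exact not_le.2 h
      have h2 : z ∈ Prod.swap ⁻¹' D := by
        simp only [mem_preimage, hD, mem_setOf_eq, Prod.snd_swap, Prod.fst_swap]
        exact h.le
      simp [indicator_of_mem h2, indicator_of_notMem h1]
  have hprod : ∫ z, a z.2 * b z.1 ∂(ν.prod ν) = (∫ u, a u ∂ν) * (∫ u, b u ∂ν) := by
    have := integral_prod_mul (μ := ν) (ν := ν) b a
    calc ∫ z, a z.2 * b z.1 ∂(ν.prod ν) = ∫ z, b z.1 * a z.2 ∂(ν.prod ν) := by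
          simp_rw [mul_comm]
      _ = (∫ u, b u ∂ν) * (∫ u, a u ∂ν) := this
      _ = (∫ u, a u ∂ν) * (∫ u, b u ∂ν) := mul_comm _ _
  have I2' : Integrable (fun s => a s * (∫ u in Ioc p s, b u)) ν := by
    refine I2.congr (Filter.Eventually.of_forall fun s => ?_)
    exact mul_comm _ _
  calc ∫ s in Ioc p q, ((∫ u in Ioc p s, a u) * b s + a s * (∫ u in Ioc p s, b u))
      = ∫ s, ((∫ u in Ioc p s, a u) * b s) ∂ν + ∫ s, (a s * (∫ u in Ioc p s, b u)) ∂ν := by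
        rw [hν] at I1 I2' ⊢
        exact integral_add I1 I2'
    _ = ∫ z, D.indicator (fun z : ℝ × ℝ => a z.2 * b z.1) z ∂(ν.prod ν)
        + ∫ z, (Prod.swap ⁻¹' D).indicator (fun z : ℝ × ℝ => a z.2 * b z.1) z ∂(ν.prod ν) := by
        rw [T1, ← T2']
        congr 1
        exact integral_congr_ae (Filter.Eventually.of_forall fun s => mul_comm _ _)
    _ = (∫ u, a u ∂ν) * (∫ u, b u ∂ν) := by rw [hcomb, hprod]

/-- High-frequency cutoff stability estimate (used in the proof of Lemma 2.11). -/
theorem cutoff_stability (L : NNReal) :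
    ∃ C : ℝ, 0 < C ∧
      ∀ (χ : ℝ → ℝ), LipschitzWith L χ →
        (∀ z, χ z ∈ Set.Icc (0:ℝ) 1) →
        (∀ z, |z| ≤ 1 → χ z = 1) →
        (∀ z, 2 ≤ |z| → χ z = 0) →
      ∀ (t : ℝ), 1 ≤ t →
      ∀ (f f' : ℝ → ℂ),
        (∀ p q : ℝ, f q = f p + ∫ s in p..q, f' s) →
        MemLp f 2 volume → MemLp f' 2 volume → f 0 = 0 →
        ∃ F' : ℝ → ℂ,
          (∀ p q : ℝ,
            ((1 - χ (Real.sqrt t * q) : ℝ) : ℂ) * f q =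
              ((1 - χ (Real.sqrt t * p) : ℝ) : ℂ) * f p + ∫ s in p..q, F' s) ∧
          eLpNorm F' 2 volume ≤ ENNReal.ofReal C * eLpNorm f' 2 volume := by
  refine ⟨1 + 3 * L, by positivity, ?_⟩
  intro χ hLip hrange hone hzero t ht f f' hf hMemf hMemf' hf0
  set c : ℝ := Real.sqrt t with hcdef
  have hc1 : 1 ≤ c := by
    have := Real.sqrt_le_sqrt ht
    simpa [hcdef] using this
  have hc0 : 0 < c := lt_of_lt_of_le one_pos hc1
  set φ : ℝ → ℝ := fun s => χ (c * s) with hφdef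
  have hφLip : LipschitzWith (L * Real.toNNReal c) φ := by
    have h1 : LipschitzWith (Real.toNNReal c) (fun s : ℝ => c * s) := by
      refine LipschitzWith.of_dist_le_mul fun x y => ?_
      rw [Real.dist_eq, Real.dist_eq, ← mul_sub, abs_mul, abs_of_nonneg hc0.le,
        Real.coe_toNNReal c hc0.le]
    exact hLip.comp h1
  set k : ℝ := (L : ℝ) * c with hkdef
  have hkeq : ((L * Real.toNNReal c : NNReal) : ℝ) = k := by
    simp [hkdef, Real.coe_toNNReal c hc0.le]
  have hk0 : 0 ≤ k := by positivity
  obtain ⟨g, hg_meas, hg_bdd, hgFTC⟩ := lipschitz_density _ φ hφLip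
  rw [hkeq] at hg_bdd
  -- constancy of φ
  have hφ1 : ∀ s : ℝ, |s| ≤ 1/c → φ s = 1 := by
    intro s hs
    apply hone
    rw [abs_mul, abs_of_nonneg hc0.le]
    calc c * |s| ≤ c * (1/c) := by nlinarith [abs_nonneg s]
      _ = 1 := by field_simp
  have hφ0 : ∀ s : ℝ, 2/c ≤ |s| → φ s = 0 := by
    intro s hs
    apply hzero
    rw [abs_mul, abs_of_nonneg hc0.le]
    calc (2:ℝ) = c * (2/c) := by field_simp
      _ ≤ c * |s| := by nlinarith
  -- the cutoff support set
  set E : Set ℝ := Icc (-(2/c)) (-(1/c)) ∪ Icc (1/c) (2/c) with hEdef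
  have hEmeas : MeasurableSet E := (measurableSet_Icc).union measurableSet_Icc
  set w : ℝ → ℝ := E.indicator g with hwdef
  have hw_meas : Measurable w := hg_meas.indicator hEmeas
  have hw_bdd : ∀ s, |w s| ≤ k := by
    intro s
    rw [hwdef]
    by_cases h : s ∈ E
    · rw [indicator_of_mem h]; exact hg_bdd s
    · rw [indicator_of_notMem h]; simpa using hk0
  -- FTC for w
  -- interval integrability of bounded measurable functions
  have hbint : ∀ (h : ℝ → ℝ), Measurable h → (∀ s, |h s| ≤ k) →
      ∀ u v : ℝ, IntervalIntegrable h volume u v := by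
    intro h hm hb u v
    rw [intervalIntegrable_iff]
    haveI : IsFiniteMeasure (volume.restrict (Ι u v)) := by
      constructor
      rw [Measure.restrict_apply_univ, Set.uIoc, Real.volume_Ioc]
      exact ENNReal.ofReal_lt_top
    refine Integrable.mono' (integrable_const k) hm.aestronglyMeasurable ?_
    exact ae_of_all _ fun s => by simpa using hb s
  have hg_int := hbint g hg_meas hg_bdd
  have hw_int := hbint w hw_meas hw_bdd
  have hd_int : ∀ u v : ℝ, IntervalIntegrable (fun s => g s - w s) volume u v :=
    fun u v => (hg_int u v).sub (hw_int u v)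
  have hwFTC : ∀ p q : ℝ, φ q = φ p + ∫ s in p..q, w s := by
    -- it suffices to show the difference integrates to zero
    have hdzero : ∀ u v : ℝ, u ≤ v →
        (Icc u v ⊆ Iic (-(2/c)) ∨ Icc u v ⊆ Icc (-(1/c)) (1/c) ∨ Icc u v ⊆ Ici (2/c)) ∨
        (Icc u v ⊆ Icc (-(2/c)) (-(1/c)) ∨ Icc u v ⊆ Icc (1/c) (2/c)) →
        ∫ s in u..v, (g s - w s) = 0 := by
      intro u v huv hcase
      have hmem : u ∈ Icc u v := ⟨le_refl u, huv⟩
      have hmemv : v ∈ Icc u v := ⟨huv, le_refl v⟩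
      rcases hcase with hreg | hE
      · -- φ is constant on the region, and E ∩ region is finite
        have hgint : ∫ s in u..v, g s = 0 := by
          have h1 := hgFTC u v
          have hφuv : φ v = φ u := by
            rcases hreg with h | h | h
            · have h2 : ∀ x ∈ Icc u v, φ x = 0 := by
                intro x hx
                have := h hx
                simp only [mem_Iic] at this
                apply hφ0
                rw [abs_of_nonpos (by nlinarith [div_pos two_pos hc0] : x ≤ 0)]
                linarith
              rw [h2 u hmem, h2 v hmemv]
            · have h2 : ∀ x ∈ Icc u v, φ x = 1 := by
                intro x hx
                have := h hx
                simp only [mem_Icc] at this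
                exact hφ1 x (abs_le.2 ⟨this.1, this.2⟩)
              rw [h2 u hmem, h2 v hmemv]
            · have h2 : ∀ x ∈ Icc u v, φ x = 0 := by
                intro x hx
                have := h hx
                simp only [mem_Ici] at this
                apply hφ0
                rw [abs_of_nonneg (by nlinarith [div_pos two_pos hc0] : 0 ≤ x)]
                exact this
              rw [h2 u hmem, h2 v hmemv]
          rw [hφuv] at h1
          linarith [h1]
        have hwint : ∫ s in u..v, w s = 0 := by
          rw [intervalIntegral.integral_of_le huv, hwdef,
            setIntegral_indicator hEmeas]
          have hnull : volume (Ioc u v ∩ E) = 0 := by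
            have hsub : Ioc u v ∩ E ⊆ {-(2/c), -(1/c)} ∪ {1/c, 2/c} := by
              intro x ⟨hx1, hx2⟩
              have hx3 : x ∈ Icc u v := ⟨hx1.1.le, hx1.2⟩
              have h1c : 0 < 1/c := by positivity
              have h2c : (1:ℝ)/c ≤ 2/c := by
                rw [div_le_div_iff₀ hc0 hc0]; nlinarith
              rcases hreg with h | h | h
              · have hxle := h hx3
                simp only [mem_Iic] at hxle
                rcases hx2 with hx2 | hx2 <;> simp only [mem_Icc] at hx2
                · have : x = -(2/c) := le_antisymm hxle hx2.1
                  simp [this]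
                · exfalso; nlinarith [hx2.1]
              · have hxle := h hx3
                simp only [mem_Icc] at hxle
                rcases hx2 with hx2 | hx2 <;> simp only [mem_Icc] at hx2
                · have : x = -(1/c) := le_antisymm hx2.2 hxle.1
                  simp [this]
                · have : x = 1/c := le_antisymm hxle.2 hx2.1
                  simp [this]
              · have hxle := h hx3
                simp only [mem_Ici] at hxle
                rcases hx2 with hx2 | hx2 <;> simp only [mem_Icc] at hx2
                · exfalso; nlinarith [hx2.2]
                · have : x = 2/c := le_antisymm hx2.2 hxle
                  simp [this]
            refine measure_mono_null hsub ?_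
            have : ({-(2/c), -(1/c)} ∪ {1/c, 2/c} : Set ℝ).Finite := by
              apply Set.Finite.union <;> exact (Set.finite_singleton _).insert _
            exact this.measure_zero _
          have hres : volume.restrict (Ioc u v ∩ E) = 0 := Measure.restrict_eq_zero.2 hnull
          rw [hres]
          exact integral_zero_measure _
        rw [intervalIntegral.integral_sub (hg_int u v) (hw_int u v), hgint, hwint, sub_zero]
      · -- inside E : integrand vanishes pointwise
        have hEsub : Icc u v ⊆ E := by
          rcases hE with h | h
          · exact h.trans subset_union_left
          · exact h.trans subset_union_right
        rw [intervalIntegral.integral_of_le huv]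
        rw [setIntegral_congr_fun measurableSet_Ioc
          (g := fun _ => (0:ℝ)) (fun x hx => by
            have : x ∈ E := hEsub ⟨hx.1.le, hx.2⟩
            simp [hwdef, indicator_of_mem this])]
        simp
    -- chain the five pieces
    have hdtotal : ∀ p q : ℝ, p ≤ q → ∫ s in p..q, (g s - w s) = 0 := by
      intro p q hpq
      set y1 : ℝ := -(2/c) with hy1
      set y2 : ℝ := -(1/c) with hy2
      set y3 : ℝ := 1/c with hy3
      set y4 : ℝ := 2/c with hy4
      have h2c : (1:ℝ)/c ≤ 2/c := by rw [div_le_div_iff₀ hc0 hc0]; nlinarith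
      have h1c : 0 < 1/c := by positivity
      have hy12 : y1 ≤ y2 := by rw [hy1, hy2]; linarith
      have hy23 : y2 ≤ y3 := by rw [hy2, hy3]; linarith
      have hy34 : y3 ≤ y4 := by rw [hy3, hy4]; linarith
      set e1 : ℝ := max p (min q y1) with he1
      set e2 : ℝ := max p (min q y2) with he2
      set e3 : ℝ := max p (min q y3) with he3
      set e4 : ℝ := max p (min q y4) with he4
      have hmono_e : ∀ y z : ℝ, y ≤ z → max p (min q y) ≤ max p (min q z) :=
        fun y z h => max_le_max (le_refl p) (min_le_min (le_refl q) h)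
      have he12 : e1 ≤ e2 := hmono_e _ _ hy12
      have he23 : e2 ≤ e3 := hmono_e _ _ hy23
      have he34 : e3 ≤ e4 := hmono_e _ _ hy34
      have hpe1 : p ≤ e1 := le_max_left _ _
      have he4q : e4 ≤ q := max_le hpq (min_le_left _ _)
      -- piece 1
      have z1 : ∫ s in p..e1, (g s - w s) = 0 := by
        rcases le_or_gt p y1 with h | h
        · refine hdzero p e1 hpe1 (Or.inl (Or.inl fun x hx => ?_))
          exact hx.2.trans (max_le h (min_le_right q y1))
        · have : e1 = p := max_eq_left ((min_le_right q y1).trans h.le)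
          rw [this, intervalIntegral.integral_same]
      -- generic middle piece
      have hmid : ∀ ya yb : ℝ, ya ≤ yb →
          (Icc ya yb ⊆ Iic (-(2/c)) ∨ Icc ya yb ⊆ Icc (-(1/c)) (1/c) ∨ Icc ya yb ⊆ Ici (2/c)) ∨
          (Icc ya yb ⊆ Icc (-(2/c)) (-(1/c)) ∨ Icc ya yb ⊆ Icc (1/c) (2/c)) →
          ∫ s in (max p (min q ya))..(max p (min q yb)), (g s - w s) = 0 := by
        intro ya yb hab hcase
        by_cases hq : q ≤ ya
        · have h1 : max p (min q ya) = q := by rw [min_eq_left hq, max_eq_right hpq]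
          have h2 : max p (min q yb) = q := by
            rw [min_eq_left (hq.trans hab), max_eq_right hpq]
          rw [h1, h2, intervalIntegral.integral_same]
        · push_neg at hq
          by_cases hp : yb ≤ p
          · have h1 : max p (min q ya) = p := max_eq_left ((min_le_right q ya).trans (hab.trans hp))
            have h2 : max p (min q yb) = p := max_eq_left ((min_le_right q yb).trans hp)
            rw [h1, h2, intervalIntegral.integral_same]
          · push_neg at hp
            have hlow : ya ≤ max p (min q ya) := by
              rw [min_eq_right hq.le]
              exact le_max_right _ _
            have hhigh : max p (min q yb) ≤ yb := max_le hp.le (min_le_right _ _)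
            have hcase' : ∀ x, x ∈ Icc (max p (min q ya)) (max p (min q yb)) → x ∈ Icc ya yb :=
              fun x hx => ⟨hlow.trans hx.1, hx.2.trans hhigh⟩
            refine hdzero _ _ (hmono_e _ _ hab) ?_
            rcases hcase with (h | h | h) | (h | h)
            · exact Or.inl (Or.inl fun x hx => h (hcase' x hx))
            · exact Or.inl (Or.inr (Or.inl fun x hx => h (hcase' x hx)))
            · exact Or.inl (Or.inr (Or.inr fun x hx => h (hcase' x hx)))
            · exact Or.inr (Or.inl fun x hx => h (hcase' x hx))
            · exact Or.inr (Or.inr fun x hx => h (hcase' x hx))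
      have z2 : ∫ s in e1..e2, (g s - w s) = 0 :=
        hmid y1 y2 hy12 (Or.inr (Or.inl (by rw [hy1, hy2])))
      have z3 : ∫ s in e2..e3, (g s - w s) = 0 :=
        hmid y2 y3 hy23 (Or.inl (Or.inr (Or.inl (by rw [hy2, hy3]))))
      have z4 : ∫ s in e3..e4, (g s - w s) = 0 :=
        hmid y3 y4 hy34 (Or.inr (Or.inr (by rw [hy3, hy4])))
      -- piece 5
      have z5 : ∫ s in e4..q, (g s - w s) = 0 := by
        rcases le_or_gt q y4 with h | h
        · have h1 : e4 = q := by rw [he4, min_eq_left h, max_eq_right hpq]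
          rw [h1, intervalIntegral.integral_same]
        · refine hdzero e4 q he4q (Or.inl (Or.inr (Or.inr fun x hx => ?_)))
          have : y4 ≤ e4 := (le_min h.le le_rfl).trans (le_max_right _ _)
          exact this.trans hx.1
      have s1 := intervalIntegral.integral_add_adjacent_intervals (hd_int p e1) (hd_int e1 q)
      have s2 := intervalIntegral.integral_add_adjacent_intervals (hd_int e1 e2) (hd_int e2 q)
      have s3 := intervalIntegral.integral_add_adjacent_intervals (hd_int e2 e3) (hd_int e3 q)
      have s4 := intervalIntegral.integral_add_adjacent_intervals (hd_int e3 e4) (hd_int e4 q)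
      linarith [s1, s2, s3, s4, z1, z2, z3, z4, z5]
    have hall : ∀ p q : ℝ, ∫ s in p..q, (g s - w s) = 0 := by
      intro p q
      rcases le_total p q with h | h
      · exact hdtotal p q h
      · rw [intervalIntegral.integral_symm, hdtotal q p h, neg_zero]
    intro p q
    have h1 := hgFTC p q
    have h2 := intervalIntegral.integral_sub (hg_int p q) (hw_int p q)
    have h3 := hall p q
    have h4 : ∫ s in p..q, w s = ∫ s in p..q, g s := by
      have := h2.symm.trans h3
      linarith [this]
    rw [h4]
    exact h1
  -- the candidate derivative
  set F' : ℝ → ℂ := fun s => ((1 - φ s : ℝ) : ℂ) * f' s - ((w s : ℝ) : ℂ) * f s with hF'def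
  -- integrability facts on Ioc
  have hfin : ∀ u v : ℝ, IsFiniteMeasure (volume.restrict (Ioc u v)) := by
    intro u v
    constructor
    rw [Measure.restrict_apply_univ, Real.volume_Ioc]
    exact ENNReal.ofReal_lt_top
  have hf'_int : ∀ u v : ℝ, IntegrableOn f' (Ioc u v) volume := by
    intro u v
    haveI := hfin u v
    exact (hMemf'.restrict (Ioc u v)).integrable one_le_two
  have hf_int : ∀ u v : ℝ, IntegrableOn f (Ioc u v) volume := by
    intro u v
    haveI := hfin u v
    exact (hMemf.restrict (Ioc u v)).integrable one_le_two
  have hwC_int : ∀ u v : ℝ, IntegrableOn (fun s => ((w s : ℝ) : ℂ)) (Ioc u v) volume := by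
    intro u v
    rcases le_total u v with h' | h'
    · have h := (intervalIntegrable_iff_integrableOn_Ioc_of_le h').1 (hw_int u v)
      exact h.ofReal
    · have : Ioc u v = ∅ := Ioc_eq_empty (not_lt.2 h')
      rw [this]
      exact integrableOn_empty
  have hFTC' : ∀ p q : ℝ,
      ((1 - φ q : ℝ) : ℂ) * f q = ((1 - φ p : ℝ) : ℂ) * f p + ∫ s in p..q, F' s := by
    have key : ∀ p q : ℝ, p ≤ q →
        ((1 - φ q : ℝ) : ℂ) * f q = ((1 - φ p : ℝ) : ℂ) * f p + ∫ s in p..q, F' s := by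
      intro p q hpq
      have hB : ∀ s : ℝ, p ≤ s → (∫ u in Ioc p s, f' u) = f s - f p := by
        intro s hs
        have h := hf p s
        rw [intervalIntegral.integral_of_le hs] at h
        rw [h]; ring
      have hA : ∀ s : ℝ, p ≤ s → (∫ u in Ioc p s, -((w u : ℝ) : ℂ)) = ((φ p - φ s : ℝ) : ℂ) := by
        intro s hs
        rw [integral_neg]
        have h1 : ∫ u in Ioc p s, ((w u : ℝ) : ℂ) = ((∫ u in Ioc p s, w u : ℝ) : ℂ) :=
          integral_ofReal
        have h2 : ∫ u in Ioc p s, w u = φ s - φ p := by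
          have h := hwFTC p s
          rw [intervalIntegral.integral_of_le hs] at h
          linarith
        rw [h1, h2]
        push_cast
        ring
      have haint : IntegrableOn (fun s => -((w s : ℝ) : ℂ)) (Ioc p q) volume :=
        (hwC_int p q).neg
      have P := parts_aux p q hpq (fun s => -((w s : ℝ) : ℂ)) f' haint (hf'_int p q)
      have P' : ∫ s in Ioc p q,
          (((φ p - φ s : ℝ) : ℂ) * f' s + (-((w s : ℝ) : ℂ)) * (f s - f p))
          = ((φ p - φ q : ℝ) : ℂ) * (f q - f p) := by
        rw [← hA q hpq, ← hB q hpq, ← P]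
        refine setIntegral_congr_fun measurableSet_Ioc fun s hs => ?_
        rw [hA s hs.1.le, hB s hs.1.le]
      -- integrabilities for splitting
      have hbd1 : IntegrableOn (fun s => ((φ p - φ s : ℝ) : ℂ) * f' s) (Ioc p q) volume := by
        refine Integrable.bdd_mul (c := 1) (hf'_int p q) ?_ (ae_of_all _ fun s => ?_)
        · exact ((Complex.continuous_ofReal.comp
            (continuous_const.sub hφLip.continuous)).aestronglyMeasurable).restrict
        · rw [Complex.norm_real, Real.norm_eq_abs]
          have h1 := (hrange (c * p)).1
          have h2 := (hrange (c * p)).2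
          have h3 := (hrange (c * s)).1
          have h4 := (hrange (c * s)).2
          rw [abs_le]
          constructor <;> simp only [hφdef] <;> nlinarith
      have hbd2 : IntegrableOn (fun s => (-((w s : ℝ) : ℂ)) * (f s - f p)) (Ioc p q) volume := by
        refine Integrable.bdd_mul (c := k) ((hf_int p q).sub (integrableOn_const (by rw [Real.volume_Ioc]; exact ENNReal.ofReal_ne_top))) ?_ (ae_of_all _ fun s => ?_)
        · exact (((Complex.continuous_ofReal.aestronglyMeasurable).comp_measurable
            hw_meas).restrict).neg
        · rw [norm_neg, Complex.norm_real]
          exact hw_bdd s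
      have hbd3 : IntegrableOn (fun s => ((1 - φ p : ℝ) : ℂ) * f' s) (Ioc p q) volume :=
        (hf'_int p q).const_mul _
      have hbd4 : IntegrableOn (fun s => ((w s : ℝ) : ℂ) * f p) (Ioc p q) volume :=
        (hwC_int p q).mul_const _
      have hbd12 : IntegrableOn (fun s =>
          ((φ p - φ s : ℝ) : ℂ) * f' s + (-((w s : ℝ) : ℂ)) * (f s - f p)) (Ioc p q) volume :=
        hbd1.add hbd2
      have hsplit : ∀ s : ℝ, F' s =
          ((((φ p - φ s : ℝ) : ℂ) * f' s + (-((w s : ℝ) : ℂ)) * (f s - f p))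
            + ((1 - φ p : ℝ) : ℂ) * f' s) - ((w s : ℝ) : ℂ) * f p := by
        intro s
        rw [hF'def]
        push_cast
        ring
      have hIF' : ∫ s in Ioc p q, F' s
          = ((φ p - φ q : ℝ) : ℂ) * (f q - f p)
            + ((1 - φ p : ℝ) : ℂ) * (f q - f p) - ((φ q - φ p : ℝ) : ℂ) * f p := by
        calc ∫ s in Ioc p q, F' s
            = ∫ s in Ioc p q,
              (((((φ p - φ s : ℝ) : ℂ) * f' s + (-((w s : ℝ) : ℂ)) * (f s - f p))
                + ((1 - φ p : ℝ) : ℂ) * f' s) - ((w s : ℝ) : ℂ) * f p) := by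
              exact integral_congr_ae (Filter.Eventually.of_forall fun s => hsplit s)
          _ = (∫ s in Ioc p q,
                ((((φ p - φ s : ℝ) : ℂ) * f' s + (-((w s : ℝ) : ℂ)) * (f s - f p))
                  + ((1 - φ p : ℝ) : ℂ) * f' s))
              - ∫ s in Ioc p q, ((w s : ℝ) : ℂ) * f p := integral_sub (hbd12.add hbd3) hbd4
          _ = ((∫ s in Ioc p q,
                (((φ p - φ s : ℝ) : ℂ) * f' s + (-((w s : ℝ) : ℂ)) * (f s - f p)))
              + ∫ s in Ioc p q, ((1 - φ p : ℝ) : ℂ) * f' s)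
              - ∫ s in Ioc p q, ((w s : ℝ) : ℂ) * f p := by
              rw [integral_add hbd12 hbd3]
          _ = ((φ p - φ q : ℝ) : ℂ) * (f q - f p)
              + ((1 - φ p : ℝ) : ℂ) * (f q - f p) - ((φ q - φ p : ℝ) : ℂ) * f p := by
              rw [P', integral_const_mul, integral_mul_const, hB q hpq]
              congr 2
              have h1 : ∫ u in Ioc p q, ((w u : ℝ) : ℂ) = ((∫ u in Ioc p q, w u : ℝ) : ℂ) :=
                integral_ofReal
              have h2 : ∫ u in Ioc p q, w u = φ q - φ p := by
                have h := hwFTC p q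
                rw [intervalIntegral.integral_of_le hpq] at h
                linarith
              rw [h1, h2]
      rw [intervalIntegral.integral_of_le hpq, hIF']
      push_cast
      ring
    intro p q
    rcases le_total p q with h | h
    · exact key p q h
    · have hk := key q p h
      rw [intervalIntegral.integral_symm]
      linear_combination -hk
  -- pointwise bound on f
  set N : ℝ := (eLpNorm f' 2 volume).toReal with hNdef
  have hN0 : 0 ≤ N := ENNReal.toReal_nonneg
  have hpt : ∀ s : ℝ, ‖f s‖ ≤ N * Real.sqrt |s| := by
    intro s
    have h0 : f s = ∫ u in (0:ℝ)..s, f' u := by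
      have h := hf 0 s
      rw [hf0] at h
      simpa using h
    rw [h0]
    have h1 : ‖∫ u in (0:ℝ)..s, f' u‖ ≤ ∫ u in Ι (0:ℝ) s, ‖f' u‖ :=
      intervalIntegral.norm_integral_le_integral_norm_uIoc
    refine h1.trans ?_
    have hIdef : Ι (0:ℝ) s = Ioc (min 0 s) (max 0 s) := rfl
    have hf'I : IntegrableOn f' (Ι (0:ℝ) s) volume := by
      rw [hIdef]; exact hf'_int _ _
    have hIvol : volume (Ι (0:ℝ) s) = ENNReal.ofReal |s| := by
      rw [hIdef, Real.volume_Ioc]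
      congr 1
      rcases le_total 0 s with h | h
      · rw [max_eq_right h, min_eq_left h, abs_of_nonneg h]; ring
      · rw [max_eq_left h, min_eq_right h, abs_of_nonpos h]; ring
    have h2 : ENNReal.ofReal (∫ u in Ι (0:ℝ) s, ‖f' u‖)
        = eLpNorm f' 1 (volume.restrict (Ι (0:ℝ) s)) := by
      rw [eLpNorm_one_eq_lintegral_enorm, ofReal_integral_norm_eq_lintegral_enorm hf'I]
    have h3 : eLpNorm f' 1 (volume.restrict (Ι (0:ℝ) s))
        ≤ eLpNorm f' 2 (volume.restrict (Ι (0:ℝ) s))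
          * (volume (Ι (0:ℝ) s)) ^ ((1:ℝ)/2) := by
      have h := eLpNorm_le_eLpNorm_mul_rpow_measure_univ (p := 1) (q := 2)
        (μ := volume.restrict (Ι (0:ℝ) s)) one_le_two hMemf'.1.restrict
      rw [Measure.restrict_apply_univ] at h
      convert h using 2
      norm_num
    have h4 : eLpNorm f' 2 (volume.restrict (Ι (0:ℝ) s)) ≤ eLpNorm f' 2 volume :=
      eLpNorm_mono_measure f' Measure.restrict_le_self
    have h5 : ENNReal.ofReal (∫ u in Ι (0:ℝ) s, ‖f' u‖)
        ≤ eLpNorm f' 2 volume * ENNReal.ofReal |s| ^ ((1:ℝ)/2) := by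
      rw [h2, ← hIvol]
      exact h3.trans (mul_le_mul_left h4 _)
    have hfin2 : eLpNorm f' 2 volume * ENNReal.ofReal |s| ^ ((1:ℝ)/2) ≠ ⊤ := by
      exact ENNReal.mul_ne_top hMemf'.2.ne (by
        refine (ENNReal.rpow_lt_top_of_nonneg (by norm_num) ENNReal.ofReal_ne_top).ne)
    have h6 := ENNReal.toReal_mono hfin2 h5
    rw [ENNReal.toReal_ofReal (integral_nonneg fun u => norm_nonneg _)] at h6
    refine h6.trans ?_
    rw [ENNReal.toReal_mul, ← ENNReal.toReal_rpow, ENNReal.toReal_ofReal (abs_nonneg s)]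
    rw [Real.sqrt_eq_rpow]
  -- final estimate
  have hest : eLpNorm F' 2 volume ≤ ENNReal.ofReal (1 + 3 * L) * eLpNorm f' 2 volume := by
    have hAESM1 : AEStronglyMeasurable (fun s => ((1 - φ s : ℝ) : ℂ) * f' s) volume :=
      ((Complex.continuous_ofReal.comp
        (continuous_const.sub hφLip.continuous)).aestronglyMeasurable).mul hMemf'.1
    have hAESM2 : AEStronglyMeasurable (fun s => ((w s : ℝ) : ℂ) * f s) volume :=
      ((Complex.continuous_ofReal.aestronglyMeasurable).comp_measurable hw_meas).mul hMemf.1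
    have h1 : eLpNorm F' 2 volume
        ≤ eLpNorm (fun s => ((1 - φ s : ℝ) : ℂ) * f' s) 2 volume
          + eLpNorm (fun s => ((w s : ℝ) : ℂ) * f s) 2 volume := by
      have h := eLpNorm_sub_le hAESM1 hAESM2 one_le_two
      exact h
    have h2 : eLpNorm (fun s => ((1 - φ s : ℝ) : ℂ) * f' s) 2 volume ≤ eLpNorm f' 2 volume := by
      apply eLpNorm_mono
      intro x
      rw [norm_mul, Complex.norm_real, Real.norm_eq_abs]
      have h3 := (hrange (c * x)).1
      have h4 := (hrange (c * x)).2
      calc |1 - φ x| * ‖f' x‖ ≤ 1 * ‖f' x‖ := by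
            apply mul_le_mul_of_nonneg_right _ (norm_nonneg _)
            rw [abs_le]
            constructor <;> simp only [hφdef] <;> nlinarith
        _ = ‖f' x‖ := one_mul _
    set M : ℝ := k * (N * Real.sqrt (2/c)) with hMdef
    have hM0 : 0 ≤ M := by
      have := Real.sqrt_nonneg (2/c)
      positivity
    have h5 : eLpNorm (fun s => ((w s : ℝ) : ℂ) * f s) 2 volume
        ≤ eLpNorm (E.indicator (fun _ => M)) 2 volume := by
      apply eLpNorm_mono
      intro x
      by_cases hx : x ∈ E
      · rw [indicator_of_mem hx, norm_mul, Complex.norm_real, Real.norm_eq_abs,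
          Real.norm_eq_abs, abs_of_nonneg hM0]
        have hxabs : |x| ≤ 2/c := by
          have h1c : 0 < 1/c := by positivity
          rcases hx with hx | hx <;> rcases hx with ⟨hxa, hxb⟩ <;> rw [abs_le] <;>
            constructor <;> linarith
        have hsq : Real.sqrt |x| ≤ Real.sqrt (2/c) := Real.sqrt_le_sqrt hxabs
        calc |w x| * ‖f x‖ ≤ k * ‖f x‖ :=
              mul_le_mul_of_nonneg_right (hw_bdd x) (norm_nonneg _)
          _ ≤ k * (N * Real.sqrt |x|) :=
              mul_le_mul_of_nonneg_left (hpt x) hk0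
          _ ≤ k * (N * Real.sqrt (2/c)) := by
              apply mul_le_mul_of_nonneg_left _ hk0
              exact mul_le_mul_of_nonneg_left hsq hN0
      · rw [indicator_of_notMem hx]
        have : w x = 0 := by rw [hwdef, indicator_of_notMem hx]
        rw [this]
        simp
    have h6 : eLpNorm (E.indicator (fun _ => M)) 2 volume
        ≤ ENNReal.ofReal M * ENNReal.ofReal (Real.sqrt (4/c)) := by
      rw [eLpNorm_indicator_const hEmeas two_ne_zero (by norm_num)]
      have hvolE : volume E ≤ ENNReal.ofReal (4/c) := by
        have hsub : E ⊆ Icc (-(2/c)) (2/c) := by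
          have h1c : 0 < 1/c := by positivity
          have h2c : (1:ℝ)/c ≤ 2/c := by rw [div_le_div_iff₀ hc0 hc0]; nlinarith
          rintro x (hx | hx) <;> rcases hx with ⟨hxa, hxb⟩ <;> constructor <;> linarith
        calc volume E ≤ volume (Icc (-(2/c)) (2/c)) := measure_mono hsub
          _ = ENNReal.ofReal (2/c - -(2/c)) := Real.volume_Icc
          _ = ENNReal.ofReal (4/c) := by congr 1; ring
      have hM' : ‖M‖ₑ = ENNReal.ofReal M := by
        rw [← Real.enorm_eq_ofReal hM0]
      rw [hM']
      apply mul_le_mul_right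
      have htoReal : (1:ℝ) / (2:ℝ≥0∞).toReal = (1:ℝ)/2 := by norm_num
      rw [htoReal]
      calc volume E ^ ((1:ℝ)/2) ≤ ENNReal.ofReal (4/c) ^ ((1:ℝ)/2) :=
            ENNReal.rpow_le_rpow hvolE (by norm_num)
        _ = ENNReal.ofReal ((4/c) ^ ((1:ℝ)/2)) :=
            ENNReal.ofReal_rpow_of_nonneg (by positivity) (by norm_num)
        _ = ENNReal.ofReal (Real.sqrt (4/c)) := by rw [← Real.sqrt_eq_rpow]
    have harith : M * Real.sqrt (4/c) ≤ 3 * L * N := by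
      have h8 : Real.sqrt (2/c) * Real.sqrt (4/c) = Real.sqrt (8/(c*c)) := by
        rw [← Real.sqrt_mul (by positivity)]
        congr 1
        field_simp
        ring
      have h9 : Real.sqrt (8/(c*c)) = Real.sqrt 8 / c := by
        rw [Real.sqrt_div (by norm_num : (0:ℝ) ≤ 8), Real.sqrt_mul_self hc0.le]
      have h10 : Real.sqrt 8 ≤ 3 := by
        rw [show (3:ℝ) = Real.sqrt 9 by
          rw [show (9:ℝ) = 3^2 by norm_num, Real.sqrt_sq (by norm_num)] ]
        exact Real.sqrt_le_sqrt (by norm_num)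
      calc M * Real.sqrt (4/c)
          = ((L:ℝ) * N) * (c * (Real.sqrt (2/c) * Real.sqrt (4/c))) := by
            rw [hMdef, hkdef]; ring
        _ = ((L:ℝ) * N) * (c * (Real.sqrt 8 / c)) := by rw [h8, h9]
        _ = ((L:ℝ) * N) * Real.sqrt 8 := by field_simp
        _ ≤ ((L:ℝ) * N) * 3 :=
            mul_le_mul_of_nonneg_left h10 (by positivity)
        _ = 3 * (L:ℝ) * N := by ring
    have h7 : ENNReal.ofReal M * ENNReal.ofReal (Real.sqrt (4/c))
        ≤ ENNReal.ofReal (3 * (L:ℝ)) * eLpNorm f' 2 volume := by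
      rw [← ENNReal.ofReal_mul hM0]
      have hNof : ENNReal.ofReal N = eLpNorm f' 2 volume := by
        rw [hNdef, ENNReal.ofReal_toReal hMemf'.2.ne]
      calc ENNReal.ofReal (M * Real.sqrt (4/c)) ≤ ENNReal.ofReal (3 * (L:ℝ) * N) :=
            ENNReal.ofReal_le_ofReal harith
        _ = ENNReal.ofReal (3 * (L:ℝ)) * ENNReal.ofReal N := by
            rw [← ENNReal.ofReal_mul (by positivity)]
        _ = ENNReal.ofReal (3 * (L:ℝ)) * eLpNorm f' 2 volume := by rw [hNof]
    calc eLpNorm F' 2 volume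
        ≤ eLpNorm f' 2 volume + ENNReal.ofReal (3 * (L:ℝ)) * eLpNorm f' 2 volume :=
          h1.trans (add_le_add h2 ((h5.trans h6).trans h7))
      _ = (1 + ENNReal.ofReal (3 * (L:ℝ))) * eLpNorm f' 2 volume := by
          rw [add_mul, one_mul]
      _ = ENNReal.ofReal (1 + 3 * (L:ℝ)) * eLpNorm f' 2 volume := by
          rw [ENNReal.ofReal_add (by norm_num) (by positivity), ENNReal.ofReal_one]
  refine ⟨F', ?_, hest⟩
  intro p q
  have := hFTC' p q
  simpa [hφdef] using this
end
end

section
/- Let γ ≥ 1 and let V : ℝ → ℝ be measurable with Q := ∫_ℝ ⟨x⟩^γ |V(x)| dx < ∞. Let χ : ℝ → ℝ be measurable with |χ| ≤ 1 and χ(z) = 0 for |z| ≥ 10. Let t ≥ 1 and v ∈ ℝ with |v| ≥ 100 t^{-1/2}. Then there is a constant C depending only on γ such that for every measurable u : ℝ → ℂ with sup_x ⟨x⟩^{-1}|u(x)| < ∞, |∫_ℝ V(x) u(x) e^{i x²/(4t)} χ((x − v t)/√t) dx| ≤ C Q (|v| t)^{1−γ} sup_x ⟨x⟩^{-1}|u(x)|.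 -/
open MeasureTheory

noncomputable section

/-- Bound on the pairing of V·u against a wave packet of velocity v (Lemma 5.2,
potential term). -/
theorem potential_wave_packet_pairing (γ : ℝ) (hγ : 1 ≤ γ) :
    ∃ C : ℝ, 0 < C ∧
      ∀ (V : ℝ → ℝ), Measurable V →
        Integrable (fun x => Real.sqrt (1 + x ^ 2) ^ γ * |V x|) →
      ∀ (χ : ℝ → ℝ), Measurable χ → (∀ z, |χ z| ≤ 1) → (∀ z, 10 ≤ |z| → χ z = 0) →
      ∀ (t : ℝ), 1 ≤ t →
      ∀ (v : ℝ), 100 * t ^ (-(1:ℝ)/2) ≤ |v| →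
      ∀ (u : ℝ → ℂ) (S : ℝ), 0 ≤ S → (∀ x, ‖u x‖ ≤ S * Real.sqrt (1 + x ^ 2)) →
        ‖∫ x : ℝ, (V x : ℂ) * u x * Complex.exp (Complex.I * (x : ℂ) ^ 2 / (4 * (t : ℂ))) *
            ((χ ((x - v * t) / Real.sqrt t) : ℝ) : ℂ)‖ ≤
          C * (∫ x, Real.sqrt (1 + x ^ 2) ^ γ * |V x|) * (|v| * t) ^ (1 - γ) * S := by
  refine ⟨(10/9 : ℝ) ^ (γ - 1), Real.rpow_pos_of_pos (by norm_num) _, ?_⟩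
  intro V hVm hVint χ hχm hχ1 hχ0 t ht v hv u S hS hu
  set C : ℝ := (10/9 : ℝ) ^ (γ - 1) with hC
  have ht0 : (0:ℝ) < t := lt_of_lt_of_le one_pos ht
  have hs0 : (0:ℝ) < Real.sqrt t := Real.sqrt_pos.mpr ht0
  have hss : Real.sqrt t * Real.sqrt t = t := Real.mul_self_sqrt ht0.le
  -- rewrite the rpow in hv
  have htr : t ^ (-(1:ℝ)/2) = (Real.sqrt t)⁻¹ := by
    rw [neg_div, Real.rpow_neg ht0.le, ← Real.sqrt_eq_rpow]
  have hv' : 100 * Real.sqrt t ≤ |v| * t := by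
    rw [htr] at hv
    have := mul_le_mul_of_nonneg_right hv hs0.le
    rw [mul_assoc, inv_mul_cancel₀ hs0.ne', mul_one] at this
    calc 100 * Real.sqrt t ≤ |v| * Real.sqrt t * Real.sqrt t := by nlinarith
      _ = |v| * t := by rw [mul_assoc, hss]
  have hvt0 : (0:ℝ) < |v| * t := by nlinarith [hs0]
  set D : ℝ := ((9/10 : ℝ) * (|v| * t)) ^ (1 - γ) with hD
  have hD0 : 0 < D := Real.rpow_pos_of_pos (by positivity) _
  -- pointwise bound
  have hbound : ∀ x : ℝ,
      ‖(V x : ℂ) * u x * Complex.exp (Complex.I * (x : ℂ) ^ 2 / (4 * (t : ℂ))) *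
        ((χ ((x - v * t) / Real.sqrt t) : ℝ) : ℂ)‖ ≤
      (Real.sqrt (1 + x ^ 2) ^ γ * |V x|) * (S * D) := by
    intro x
    have hgx0 : (0:ℝ) < Real.sqrt (1 + x ^ 2) := Real.sqrt_pos.mpr (by positivity)
    by_cases hz : χ ((x - v * t) / Real.sqrt t) = 0
    · rw [hz]
      simp only [Complex.ofReal_zero, mul_zero, norm_zero]
      positivity
    · -- support: |x - vt| < 10 √t, hence ⟨x⟩ ≥ (9/10)|v|t
      have hlt : |(x - v * t) / Real.sqrt t| < 10 := by
        by_contra h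
        exact hz (hχ0 _ (le_of_not_gt h))
      have hlt' : |x - v * t| < 10 * Real.sqrt t := by
        rw [abs_div, abs_of_pos hs0, div_lt_iff₀ hs0] at hlt
        linarith
      have hx1 : (9/10 : ℝ) * (|v| * t) ≤ |x| := by
        have h1 : |v * t| ≤ |x| + |v * t - x| := by
          calc |v * t| = |x + (v * t - x)| := by ring_nf
            _ ≤ |x| + |v * t - x| := abs_add_le _ _
        rw [abs_mul, abs_of_pos ht0] at h1
        rw [abs_sub_comm] at hlt'
        linarith
      have hx2 : (9/10 : ℝ) * (|v| * t) ≤ Real.sqrt (1 + x ^ 2) := by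
        refine le_trans hx1 ?_
        rw [← Real.sqrt_sq_eq_abs]
        exact Real.sqrt_le_sqrt (by nlinarith)
      -- the oscillatory factor has norm 1
      have hexp : ‖Complex.exp (Complex.I * (x : ℂ) ^ 2 / (4 * (t : ℂ)))‖ = 1 := by
        have : Complex.I * (x : ℂ) ^ 2 / (4 * (t : ℂ)) =
            ((x ^ 2 / (4 * t) : ℝ) : ℂ) * Complex.I := by push_cast; ring
        rw [this, Complex.norm_exp_ofReal_mul_I]
      have hχx : ‖((χ ((x - v * t) / Real.sqrt t) : ℝ) : ℂ)‖ ≤ 1 := by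
        rw [Complex.norm_real, Real.norm_eq_abs]; exact hχ1 _
      have hVux : ‖(V x : ℂ)‖ = |V x| := by
        rw [Complex.norm_real, Real.norm_eq_abs]
      have hrw : Real.sqrt (1 + x ^ 2) ≤ Real.sqrt (1 + x ^ 2) ^ γ * D := by
        have h1 : Real.sqrt (1 + x ^ 2) ^ (1 - γ) ≤ D :=
          Real.rpow_le_rpow_of_nonpos (by positivity) hx2 (by linarith)
        calc Real.sqrt (1 + x ^ 2) = Real.sqrt (1 + x ^ 2) ^ (γ + (1 - γ)) := by
              rw [show γ + (1 - γ) = 1 by ring, Real.rpow_one]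
          _ = Real.sqrt (1 + x ^ 2) ^ γ * Real.sqrt (1 + x ^ 2) ^ (1 - γ) :=
              Real.rpow_add hgx0 _ _
          _ ≤ Real.sqrt (1 + x ^ 2) ^ γ * D := by
              exact mul_le_mul_of_nonneg_left h1 (Real.rpow_nonneg hgx0.le _)
      calc ‖(V x : ℂ) * u x * Complex.exp (Complex.I * (x : ℂ) ^ 2 / (4 * (t : ℂ))) *
            ((χ ((x - v * t) / Real.sqrt t) : ℝ) : ℂ)‖
          = |V x| * ‖u x‖ * 1 * ‖((χ ((x - v * t) / Real.sqrt t) : ℝ) : ℂ)‖ := by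
            rw [norm_mul, norm_mul, norm_mul, hVux, hexp]
        _ ≤ |V x| * (S * Real.sqrt (1 + x ^ 2)) * 1 * 1 := by
            apply mul_le_mul (by apply mul_le_mul ?_ le_rfl zero_le_one ?_ <;>
              [skip; positivity] <;>
              exact mul_le_mul_of_nonneg_left (hu x) (abs_nonneg _)) hχx (norm_nonneg _)
              (by positivity)
        _ = |V x| * S * Real.sqrt (1 + x ^ 2) := by ring
        _ ≤ |V x| * S * (Real.sqrt (1 + x ^ 2) ^ γ * D) := by
            exact mul_le_mul_of_nonneg_left hrw (by positivity)
        _ = (Real.sqrt (1 + x ^ 2) ^ γ * |V x|) * (S * D) := by ring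
  have hgint : Integrable (fun x => (Real.sqrt (1 + x ^ 2) ^ γ * |V x|) * (S * D)) :=
    hVint.mul_const _
  have hmain := norm_integral_le_of_norm_le hgint (Filter.Eventually.of_forall hbound)
  rw [integral_mul_const] at hmain
  refine hmain.trans (le_of_eq ?_)
  have hDrw : D = C * (|v| * t) ^ (1 - γ) := by
    rw [hD, Real.mul_rpow (by norm_num) hvt0.le, hC]
    congr 1
    rw [show (9/10 : ℝ) = ((10/9 : ℝ))⁻¹ by norm_num,
      Real.inv_rpow (by norm_num), ← Real.rpow_neg (by norm_num)]
    congr 1; ring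
  rw [hDrw]; ring
end
end
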